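/- arXiv:2402.11962 — 8 statements merged into one kernel-verified Lean document; each statement's English description precedes it below -/
import Mathlib

section
/- In the algebra A_N = k⟨x,y⟩/(yx - xy - x^N) over a field k of characteristic zero, for all i, j ≥ 0 the reordering identity y^j x^i = ∑_{t=0}^{j} (i)_{N-1, j-t} · C(j,t) · x^{i+(j-t)(N-1)} y^t holds, where (i)_{N-1,s} is the Pochhammer (N-1)-symbol and C(j,t) is the binomial coefficient. -/
noncomputable section

/-- The relation `yx = xy + x^N` on the free algebra on two generators. -/
inductive AnRel (k : Type*) [Field k] (N : ℕ) :
    FreeAlgebra k (Fin 2) → FreeAlgebra k (Fin 2) → Prop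
  | comm : AnRel k N (FreeAlgebra.ι k 1 * FreeAlgebra.ι k 0)
      (FreeAlgebra.ι k 0 * FreeAlgebra.ι k 1 + FreeAlgebra.ι k 0 ^ N)

/-- The algebra `A_N = k⟨x,y⟩/(yx - xy - x^N)`. -/
abbrev AN (k : Type*) [Field k] (N : ℕ) := RingQuot (AnRel k N)

/-- The generator `x` of `A_N`. -/
def Ax (k : Type*) [Field k] (N : ℕ) : AN k N :=
  RingQuot.mkAlgHom k (AnRel k N) (FreeAlgebra.ι k 0)

/-- The generator `y` of `A_N`. -/
def Ay (k : Type*) [Field k] (N : ℕ) : AN k N :=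
  RingQuot.mkAlgHom k (AnRel k N) (FreeAlgebra.ι k 1)

/-- The Pochhammer `m`-symbol `(a)_{m,s} = a(a+m)⋯(a+(s-1)m)` for natural numbers. -/
def pochNat (a m s : ℕ) : ℕ := ∏ r ∈ Finset.range s, (a + r * m)

lemma pochNat_succ (a m s : ℕ) : pochNat a m (s + 1) = pochNat a m s * (a + s * m) :=
  Finset.prod_range_succ _ _

lemma Arel (k : Type*) [Field k] (N : ℕ) :
    Ay k N * Ax k N = Ax k N * Ay k N + Ax k N ^ N := by
  have h := RingQuot.mkAlgHom_rel k (AnRel.comm (k := k) (N := N))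
  simpa only [map_mul, map_add, map_pow, Ax, Ay] using h

lemma y_xpow (k : Type*) [Field k] (m i : ℕ) :
    Ay k (m + 1) * Ax k (m + 1) ^ i
      = Ax k (m + 1) ^ i * Ay k (m + 1) + i • Ax k (m + 1) ^ (i + m) := by
  induction i with
  | zero => simp
  | succ n ih =>
    rw [pow_succ, ← mul_assoc, ih, add_mul, smul_mul_assoc, mul_assoc, Arel, mul_add,
      ← mul_assoc, ← pow_succ, ← pow_add, ← pow_succ]
    have h1 : n + (m + 1) = n + 1 + m := by omega
    have h2 : n + m + 1 = n + 1 + m := by omega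
    rw [h1, h2, succ_nsmul]
    abel

lemma reorder_aux (k : Type*) [Field k] (m i j : ℕ) :
    Ay k (m + 1) ^ j * Ax k (m + 1) ^ i
      = ∑ t ∈ Finset.range (j + 1),
          (pochNat i m (j - t) * j.choose t) •
            (Ax k (m + 1) ^ (i + (j - t) * m) * Ay k (m + 1) ^ t) := by
  set X := Ax k (m + 1)
  set Y := Ay k (m + 1)
  induction j with
  | zero => simp [pochNat]
  | succ j ih =>
    have step : ∀ t : ℕ,
        Y * (X ^ (i + (j - t) * m) * Y ^ t)
          = X ^ (i + (j - t) * m) * Y ^ (t + 1)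
            + (i + (j - t) * m) • (X ^ (i + (j - t) * m + m) * Y ^ t) := by
      intro t
      rw [← mul_assoc, y_xpow, add_mul, smul_mul_assoc, mul_assoc, ← pow_succ']
    set B : ℕ → AN k (m + 1) := fun t =>
      (pochNat i m (j - t) * j.choose t * (i + (j - t) * m)) •
        (X ^ (i + (j - t) * m + m) * Y ^ t) with hBdef
    calc Y ^ (j + 1) * X ^ i = Y * (Y ^ j * X ^ i) := by
          rw [pow_succ', mul_assoc]
      _ = ∑ t ∈ Finset.range (j + 1),
            ((pochNat i m (j - t) * j.choose t) • (X ^ (i + (j - t) * m) * Y ^ (t + 1))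
              + B t) := by
          rw [ih, Finset.mul_sum]
          refine Finset.sum_congr rfl fun t _ => ?_
          rw [mul_smul_comm, step t, smul_add, smul_smul]
      _ = (∑ t ∈ Finset.range (j + 1),
            (pochNat i m (j - t) * j.choose t) • (X ^ (i + (j - t) * m) * Y ^ (t + 1)))
          + ∑ t ∈ Finset.range (j + 1), B t := by
          rw [Finset.sum_add_distrib]
      _ = ∑ t ∈ Finset.range (j + 1 + 1),
            (pochNat i m (j + 1 - t) * (j + 1).choose t) •
              (X ^ (i + (j + 1 - t) * m) * Y ^ t) := by
          rw [Finset.sum_range_succ' (fun t => (pochNat i m (j + 1 - t) * (j + 1).choose t) •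
              (X ^ (i + (j + 1 - t) * m) * Y ^ t))]
          have hB : (∑ t ∈ Finset.range (j + 1), B t)
              = (∑ t ∈ Finset.range (j + 1), B (t + 1)) + B 0 := by
            rw [Finset.sum_range_succ' B, Finset.sum_range_succ (fun t => B (t + 1))]
            have : B (j + 1) = 0 := by
              simp [hBdef, Nat.choose_succ_self]
            rw [this, add_zero]
          have hB0 : B 0
              = (pochNat i m (j + 1 - 0) * (j + 1).choose 0) •
                  (X ^ (i + (j + 1 - 0) * m) * Y ^ 0) := by
            simp [hBdef, pochNat_succ, Nat.succ_mul, ← add_assoc]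
          have key : ∀ t ∈ Finset.range (j + 1),
              (pochNat i m (j + 1 - (t + 1)) * (j + 1).choose (t + 1)) •
                  (X ^ (i + (j + 1 - (t + 1)) * m) * Y ^ (t + 1))
                = (pochNat i m (j - t) * j.choose t) • (X ^ (i + (j - t) * m) * Y ^ (t + 1))
                  + B (t + 1) := by
            intro t ht
            rcases lt_or_eq_of_le (Nat.lt_succ_iff.mp (Finset.mem_range.mp ht)) with h | h
            · have h1 : j + 1 - (t + 1) = j - t := by omega
              have h2 : j - (t + 1) + 1 = j - t := by omega
              have h3 : i + (j - (t + 1)) * m + m = i + (j - t) * m := by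
                rw [← h2, Nat.succ_mul]; omega
              rw [hBdef]
              simp only []
              rw [h1, h3, ← h2, pochNat_succ, Nat.choose_succ_succ', Nat.mul_add, add_smul, h2]
              ring_nf
            · subst h
              have hz : B (t + 1) = 0 := by simp [hBdef, Nat.choose_succ_self]
              rw [hz, add_zero]
              simp [Nat.choose_succ_self_right]
          rw [hB, hB0, ← add_assoc, ← Finset.sum_add_distrib]
          congr 1
          exact (Finset.sum_congr rfl key).symm

/-- Reordering identity in `A_N`:
`y^j x^i = ∑_{t=0}^{j} (i)_{N-1,j-t} C(j,t) x^{i+(j-t)(N-1)} y^t`. -/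
theorem yj_xi_reorder (k : Type*) [Field k] [CharZero k] (N : ℕ) (hN : 1 ≤ N) (i j : ℕ) :
    Ay k N ^ j * Ax k N ^ i
      = ∑ t ∈ Finset.range (j + 1),
          (pochNat i (N - 1) (j - t) * j.choose t) •
            (Ax k N ^ (i + (j - t) * (N - 1)) * Ay k N ^ t) := by
  obtain ⟨m, rfl⟩ : ∃ m, N = m + 1 := ⟨N - 1, by omega⟩
  simpa using reorder_aux k m i j
end
end

section
/- In the algebra A_N = k⟨x,y⟩/(yx - xy - x^N) with N ≥ 1, the centralizer of the element x equals the polynomial subalgebra k[x]. -/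
noncomputable section

namespace AnProof

open Polynomial

variable (k : Type*) [Field k] (N : ℕ)

/-- Multiplication by `X` on `k[X]`. -/
def Mx : Module.End k (Polynomial k) := Algebra.lmul k (Polynomial k) X

/-- The operator `X^N d/dX` on `k[X]`. -/
def Dx : Module.End k (Polynomial k) :=
  (Algebra.lmul k (Polynomial k) (X ^ N)) ∘ₗ
    (Polynomial.derivative : Polynomial k →ₗ[k] Polynomial k)

lemma Mx_pow (n : ℕ) : (Mx k) ^ n = Algebra.lmul k (Polynomial k) (X ^ n) := by
  rw [Mx, ← map_pow]

lemma lmul_app (a p : Polynomial k) : Algebra.lmul k (Polynomial k) a p = a * p := rfl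

lemma rel : Dx k N * Mx k = Mx k * Dx k N + (Mx k) ^ N := by
  rw [Mx_pow]
  refine LinearMap.ext fun p => ?_
  simp only [Module.End.mul_apply, LinearMap.add_apply, Dx, Mx, LinearMap.comp_apply,
    lmul_app, derivative_mul, derivative_X]
  ring

/-- The representation of `A_N` on `k[X]`. -/
def phi : AN k N →ₐ[k] Module.End k (Polynomial k) :=
  RingQuot.liftAlgHom k ⟨FreeAlgebra.lift k ![Mx k, Dx k N], by
    rintro a b ⟨⟩
    simp only [map_mul, map_add, map_pow, FreeAlgebra.lift_ι_apply]
    exact rel k N⟩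

lemma phi_x : phi k N (Ax k N) = Mx k := by
  simp [phi, Ax, RingQuot.liftAlgHom_mkAlgHom_apply]

lemma phi_y : phi k N (Ay k N) = Dx k N := by
  simp [phi, Ay, RingQuot.liftAlgHom_mkAlgHom_apply]

/-- `Pj j` evaluated at `m` is the coefficient of `Dx^j (X^m)`. -/
def Pj (j : ℕ) : Polynomial k := ∏ l ∈ Finset.range j, (X + C ((l * (N - 1) : ℕ) : k))

lemma Pj_monic (j : ℕ) : (Pj k N j).Monic :=
  monic_prod_of_monic _ _ fun _ _ => monic_X_add_C _

lemma Pj_natDegree (j : ℕ) : (Pj k N j).natDegree = j := by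
  rw [Pj, natDegree_prod]
  · simp only [natDegree_X_add_C]
    simp
  · exact fun l _ => (monic_X_add_C _).ne_zero

lemma Dx_pow_apply (hN : 1 ≤ N) (j m : ℕ) :
    ((Dx k N) ^ j) (X ^ m : Polynomial k)
      = (Pj k N j).eval ((m : k)) • X ^ (m + j * (N - 1)) := by
  induction j with
  | zero => simp [Pj]
  | succ j ih =>
    rw [pow_succ', Module.End.mul_apply, ih, map_smul]
    rcases Nat.eq_zero_or_pos (m + j * (N - 1)) with h0 | hpos
    · have hm : m = 0 := by omega
      subst hm
      rw [h0]
      have h1 : (Pj k N (j + 1)).eval ((0 : ℕ) : k) = 0 := by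
        rw [Pj, eval_prod]
        refine Finset.prod_eq_zero (Finset.mem_range.mpr (Nat.succ_pos j)) ?_
        simp
      rw [h1, zero_smul]
      simp [Dx, lmul_app]
    · set t := m + j * (N - 1) with ht
      have hD : (Dx k N) ((X : Polynomial k) ^ t) = ((t : ℕ) : k) • X ^ (t + (N - 1)) := by
        rw [Dx, LinearMap.comp_apply, derivative_X_pow, lmul_app, smul_eq_C_mul]
        rw [mul_left_comm]
        congr 1
        rw [← pow_add]
        congr 1
        omega
      rw [hD, smul_smul]
      have he : (Pj k N (j + 1)).eval ((m : k)) = (Pj k N j).eval ((m : k)) * ((t : ℕ) : k) := by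
        rw [Pj, Finset.prod_range_succ, eval_mul, ← Pj, eval_add, eval_X, eval_C, ht]
        push_cast
        ring
      rw [he]
      congr 2
      rw [ht, add_one_mul]
      omega

/-- The monomial basis elements `x^i y^j`. -/
def mono (ij : ℕ × ℕ) : AN k N := Ax k N ^ ij.1 * Ay k N ^ ij.2

lemma phi_mono_apply (hN : 1 ≤ N) (i j m : ℕ) :
    phi k N (mono k N (i, j)) (X ^ m)
      = (Pj k N j).eval ((m : k)) • X ^ (m + (i + j * (N - 1))) := by
  have h : phi k N (mono k N (i, j)) = (Mx k) ^ i * (Dx k N) ^ j := by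
    rw [mono, map_mul, map_pow, map_pow, phi_x, phi_y]
  rw [h, Module.End.mul_apply, Dx_pow_apply k N hN, map_smul, Mx_pow, lmul_app, ← pow_add]
  congr 2
  omega

lemma comm_yx : Ay k N * Ax k N = Ax k N * Ay k N + Ax k N ^ N := by
  have h := RingQuot.mkAlgHom_rel k (AnRel.comm (k := k) (N := N))
  simpa only [map_mul, map_add, map_pow, Ax, Ay] using h

lemma y_mul_x_pow (hN : 1 ≤ N) (i : ℕ) :
    Ay k N * Ax k N ^ i
      = Ax k N ^ i * Ay k N + (i : k) • (Ax k N ^ i * Ax k N ^ (N - 1)) := by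
  induction i with
  | zero => simp
  | succ i ih =>
    have hx : Ax k N ^ (N - 1) * Ax k N = Ax k N * Ax k N ^ (N - 1) := by
      rw [← pow_succ, ← pow_succ']
    rw [pow_succ, ← mul_assoc, ih, add_mul, mul_assoc, comm_yx, smul_mul_assoc,
      mul_assoc, hx, mul_add, Nat.cast_succ, add_smul, one_smul]
    have hxN : Ax k N ^ N = Ax k N * Ax k N ^ (N - 1) := by
      rw [← pow_succ']
      congr 1
      omega
    simp only [hxN, ← mul_assoc, ← pow_succ]
    abel

/-- The span of the monomials `x^i y^j`. -/
def S : Submodule k (AN k N) := Submodule.span k (Set.range (mono k N))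

lemma mono_mem (ij : ℕ × ℕ) : mono k N ij ∈ S k N :=
  Submodule.subset_span ⟨ij, rfl⟩

lemma x_mul_mem {s : AN k N} (hs : s ∈ S k N) : Ax k N * s ∈ S k N := by
  refine Submodule.span_induction ?_ ?_ ?_ ?_ hs
  · rintro _ ⟨⟨i, j⟩, rfl⟩
    have : Ax k N * mono k N (i, j) = mono k N (i + 1, j) := by
      rw [mono, mono, ← mul_assoc, ← pow_succ']
    rw [this]; exact mono_mem k N _
  · simp
  · intro a b _ _ ha hb
    rw [mul_add]; exact add_mem ha hb
  · intro c a _ ha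
    rw [mul_smul_comm]; exact Submodule.smul_mem _ _ ha

lemma y_mul_mem (hN : 1 ≤ N) {s : AN k N} (hs : s ∈ S k N) : Ay k N * s ∈ S k N := by
  refine Submodule.span_induction ?_ ?_ ?_ ?_ hs
  · rintro _ ⟨⟨i, j⟩, rfl⟩
    have h : Ay k N * mono k N (i, j)
        = mono k N (i, j + 1) + (i : k) • mono k N (i + (N - 1), j) := by
      rw [mono, mono, mono, ← mul_assoc, y_mul_x_pow k N hN, add_mul, smul_mul_assoc,
        mul_assoc, ← pow_succ']
      simp [pow_add, mul_assoc]
    rw [h]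
    exact add_mem (mono_mem k N _) (Submodule.smul_mem _ _ (mono_mem k N _))
  · simp
  · intro a b _ _ ha hb
    rw [mul_add]; exact add_mem ha hb
  · intro c a _ ha
    rw [mul_smul_comm]; exact Submodule.smul_mem _ _ ha

lemma x_pow_mul_mem (hN : 1 ≤ N) (n : ℕ) {s : AN k N} (hs : s ∈ S k N) :
    Ax k N ^ n * s ∈ S k N := by
  induction n with
  | zero => simpa using hs
  | succ n ih =>
    rw [pow_succ', mul_assoc]
    exact x_mul_mem k N (by simpa using ih)

lemma y_pow_mul_mem (hN : 1 ≤ N) (n : ℕ) {s : AN k N} (hs : s ∈ S k N) :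
    Ay k N ^ n * s ∈ S k N := by
  induction n with
  | zero => simpa using hs
  | succ n ih =>
    rw [pow_succ', mul_assoc]
    exact y_mul_mem k N hN (by simpa using ih)

lemma mul_mem_S (hN : 1 ≤ N) {a b : AN k N} (ha : a ∈ S k N) (hb : b ∈ S k N) :
    a * b ∈ S k N := by
  refine Submodule.span_induction ?_ ?_ ?_ ?_ ha
  · rintro _ ⟨⟨i, j⟩, rfl⟩
    rw [mono, mul_assoc]
    exact x_pow_mul_mem k N hN i (y_pow_mul_mem k N hN j hb)
  · simp
  · intro u v _ _ hu hv
    rw [add_mul]; exact add_mem hu hv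
  · intro c u _ hu
    rw [smul_mul_assoc]; exact Submodule.smul_mem _ _ hu

lemma mem_S (hN : 1 ≤ N) (u : AN k N) : u ∈ S k N := by
  obtain ⟨a, rfl⟩ := RingQuot.mkAlgHom_surjective k (AnRel k N) u
  induction a using FreeAlgebra.induction with
  | grade0 r =>
    rw [AlgHom.commutes]
    have : (algebraMap k (AN k N)) r = r • mono k N (0, 0) := by
      simp [mono, Algebra.smul_def]
    rw [this]
    exact Submodule.smul_mem _ _ (mono_mem k N _)
  | grade1 x =>
    fin_cases x
    · show RingQuot.mkAlgHom k (AnRel k N) (FreeAlgebra.ι k 0) ∈ S k N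
      have : RingQuot.mkAlgHom k (AnRel k N) (FreeAlgebra.ι k 0) = mono k N (1, 0) := by
        simp [mono, Ax]
      rw [this]; exact mono_mem k N _
    · show RingQuot.mkAlgHom k (AnRel k N) (FreeAlgebra.ι k 1) ∈ S k N
      have : RingQuot.mkAlgHom k (AnRel k N) (FreeAlgebra.ι k 1) = mono k N (0, 1) := by
        simp [mono, Ay]
      rw [this]; exact mono_mem k N _
  | mul a b ha hb =>
    rw [map_mul]; exact mul_mem_S k N hN ha hb
  | add a b ha hb =>
    rw [map_add]; exact add_mem ha hb

lemma phi_injective [CharZero k] (hN : 1 ≤ N) : Function.Injective (phi k N) := by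
  rw [injective_iff_map_eq_zero]
  intro u hu
  obtain ⟨c, hc⟩ := (Finsupp.mem_span_range_iff_exists_finsupp).mp (mem_S k N hN u)
  have hphi : ∀ m : ℕ,
      (∑ ij ∈ c.support, (c ij * (Pj k N ij.2).eval ((m : k))) •
        (X : Polynomial k) ^ (m + (ij.1 + ij.2 * (N - 1)))) = 0 := by
    intro m
    have h0 : (∑ ij ∈ c.support, phi k N (c ij • mono k N ij)) (X ^ m) = 0 := by
      rw [← map_sum,
        show (∑ ij ∈ c.support, c ij • mono k N ij) = c.sum fun i a => a • mono k N i from rfl,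
        hc, hu]
      rfl
    rw [LinearMap.sum_apply] at h0
    rw [← h0]
    refine Finset.sum_congr rfl fun ij _ => ?_
    obtain ⟨i, j⟩ := ij
    rw [map_smul, LinearMap.smul_apply, phi_mono_apply k N hN i j m, smul_smul]
  have key : ∀ d m : ℕ,
      (∑ ij ∈ c.support.filter (fun ij => ij.1 + ij.2 * (N - 1) = d),
        c ij * (Pj k N ij.2).eval ((m : k))) = 0 := by
    intro d m
    have h := congrArg (fun p => Polynomial.coeff p (m + d)) (hphi m)
    simp only [finset_sum_coeff, coeff_smul, coeff_X_pow, smul_eq_mul, coeff_zero] at h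
    rw [Finset.sum_filter]
    have hsum : (∑ ij ∈ c.support, if ij.1 + ij.2 * (N - 1) = d
          then c ij * (Pj k N ij.2).eval ((m : k)) else 0)
        = ∑ ij ∈ c.support, c ij * (Pj k N ij.2).eval ((m : k)) *
            (if m + d = m + (ij.1 + ij.2 * (N - 1)) then 1 else 0) := by
      refine Finset.sum_congr rfl fun ij _ => ?_
      by_cases hij : ij.1 + ij.2 * (N - 1) = d
      · have h2 : m + d = m + (ij.1 + ij.2 * (N - 1)) := by omega
        simp [hij, h2]
      · have h2 : ¬(m + d = m + (ij.1 + ij.2 * (N - 1))) := by omega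
        simp [hij, h2, Ne.symm hij]
    rw [hsum, h]
  have hc0 : c = 0 := by
    by_contra hne
    obtain ⟨e, he⟩ := Finsupp.support_nonempty_iff.mpr hne
    set d := e.1 + e.2 * (N - 1) with hd
    set F := c.support.filter (fun ij => ij.1 + ij.2 * (N - 1) = d) with hF
    have heF : e ∈ F := Finset.mem_filter.mpr ⟨he, rfl⟩
    have hFne : (F.image Prod.snd).Nonempty := ⟨e.2, Finset.mem_image_of_mem _ heF⟩
    obtain ⟨e1, he1F, he1J⟩ := Finset.mem_image.mp ((F.image Prod.snd).max'_mem hFne)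
    have hQ : (∑ ij ∈ F, c ij • Pj k N ij.2) = 0 := by
      apply Polynomial.eq_zero_of_infinite_isRoot
      refine Set.Infinite.mono ?_ (Set.infinite_range_of_injective
        (Nat.cast_injective : Function.Injective (Nat.cast : ℕ → k)))
      rintro _ ⟨m, rfl⟩
      simp only [Set.mem_setOf_eq, IsRoot, eval_finset_sum, eval_smul, smul_eq_mul]
      exact key d m
    have hcoeff := congrArg (fun p => Polynomial.coeff p e1.2) hQ
    simp only [finset_sum_coeff, coeff_smul, coeff_zero, smul_eq_mul] at hcoeff
    have hsingle : ∀ ij ∈ F, ij ≠ e1 → c ij * (Pj k N ij.2).coeff e1.2 = 0 := by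
      intro ij hijF hne1
      have hle : ij.2 ≤ e1.2 := he1J ▸ Finset.le_max' _ _ (Finset.mem_image_of_mem _ hijF)
      have hlt : ij.2 < e1.2 := by
        rcases lt_or_eq_of_le hle with h | h
        · exact h
        · exfalso
          apply hne1
          have h1 : ij.1 + ij.2 * (N - 1) = d := (Finset.mem_filter.mp hijF).2
          have h2 : e1.1 + e1.2 * (N - 1) = d := (Finset.mem_filter.mp he1F).2
          have hi : ij.1 = e1.1 := by
            rw [h] at h1
            omega
          exact Prod.ext hi h
      rw [Polynomial.coeff_eq_zero_of_natDegree_lt, mul_zero]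
      rw [Pj_natDegree]
      exact hlt
    rw [Finset.sum_eq_single e1 hsingle (fun h => absurd he1F h)] at hcoeff
    have hone : (Pj k N e1.2).coeff e1.2 = 1 := by
      have h := (Pj_monic k N e1.2).coeff_natDegree
      rwa [Pj_natDegree] at h
    rw [hone, mul_one] at hcoeff
    exact (Finsupp.mem_support_iff.mp (Finset.mem_filter.mp he1F).1) hcoeff
  rw [← hc, hc0]
  simp

end AnProof

/-- The centralizer of `x` in `A_N` is the polynomial subalgebra `k[x]`. -/
theorem centralizer_x_eq_polynomials (k : Type*) [Field k] [CharZero k] (N : ℕ) (hN : 1 ≤ N) :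
    {u : AN k N | u * Ax k N = Ax k N * u}
      = Set.range (fun p : Polynomial k => Polynomial.aeval (Ax k N) p) := by
  open AnProof Polynomial in
  ext u
  simp only [Set.mem_setOf_eq, Set.mem_range]
  constructor
  · intro hu
    have hθ : phi k N u * Mx k = Mx k * phi k N u := by
      have := congrArg (phi k N) hu
      rw [map_mul, map_mul, phi_x] at this
      exact this
    set θ := phi k N u with hθdef
    have hcomm : ∀ n : ℕ, θ ((X : Polynomial k) ^ n) = X ^ n * θ 1 := by
      intro n
      have h1 : (Mx k ^ n) (1 : Polynomial k) = X ^ n := by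
        rw [Mx_pow, lmul_app, mul_one]
      have h2 : θ * Mx k ^ n = Mx k ^ n * θ :=
        (Commute.pow_right hθ n)
      calc θ (X ^ n) = (θ * Mx k ^ n) 1 := by rw [Module.End.mul_apply, h1]
        _ = (Mx k ^ n * θ) 1 := by rw [h2]
        _ = X ^ n * θ 1 := by rw [Module.End.mul_apply, Mx_pow, lmul_app]
    have hall : ∀ q : Polynomial k, θ q = q * θ 1 := by
      intro q
      induction q using Polynomial.induction_on' with
      | add p q hp hq => rw [map_add, hp, hq, add_mul]
      | monomial n a =>
        rw [← smul_X_eq_monomial, map_smul, hcomm, smul_mul_assoc]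
    refine ⟨θ 1, ?_⟩
    apply phi_injective k N hN
    have h1 : phi k N ((aeval (Ax k N)) (θ 1)) = aeval (Mx k) (θ 1) := by
      rw [← Polynomial.aeval_algHom_apply, phi_x]
    rw [h1]
    have h2 : aeval (Mx k) (θ 1) = Algebra.lmul k (Polynomial k) (θ 1) := by
      rw [Mx, Polynomial.aeval_algHom_apply, aeval_X_left_apply]
    rw [h2]
    refine LinearMap.ext fun q => ?_
    rw [lmul_app, mul_comm, ← hall]
  · rintro ⟨p, rfl⟩
    have h : (aeval (Ax k N)) p * (aeval (Ax k N)) (X : Polynomial k)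
        = (aeval (Ax k N)) (X : Polynomial k) * (aeval (Ax k N)) p := by
      rw [← map_mul, ← map_mul, mul_comm]
    simpa using h
end
end

section
/- The center of the algebra A_N = k⟨x,y⟩/(yx - xy - x^N) with N ≥ 1 is exactly the scalars k. -/
noncomputable section

namespace ANwork

open Polynomial

variable (k : Type*) [Field k] (N : ℕ)

abbrev R := Polynomial (Polynomial k)

def Mx : Module.End k (R k) := LinearMap.mulLeft k Polynomial.X

def Ty : Module.End k (R k) :=
  LinearMap.mulLeft k (Polynomial.C Polynomial.X) +
    LinearMap.mulLeft k (Polynomial.X ^ N) ∘ₗ (Polynomial.derivative.restrictScalars k)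

variable {k N}

lemma Mx_apply (f : R k) : Mx k f = Polynomial.X * f := rfl

lemma Ty_apply (f : R k) :
    Ty k N f = Polynomial.C Polynomial.X * f + Polynomial.X ^ N * Polynomial.derivative f := rfl

lemma Ty_Mx : Ty k N * Mx k = Mx k * Ty k N + Mx k ^ N := by
  ext f
  simp only [Module.End.mul_apply, LinearMap.add_apply, Mx_apply, Ty_apply,
    LinearMap.pow_mulLeft, Mx, LinearMap.mulLeft_apply, derivative_mul, derivative_X]
  ring

end ANwork

noncomputable section Rep

namespace ANwork

open Polynomial

variable {k : Type*} [Field k] {N : ℕ}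

def rep (k : Type*) [Field k] (N : ℕ) : AN k N →ₐ[k] Module.End k (R k) :=
  RingQuot.liftAlgHom k
    ⟨FreeAlgebra.lift k (fun i => if i = 0 then Mx k else Ty k N), by
      rintro _ _ ⟨⟩
      simp only [map_mul, map_add, map_pow, FreeAlgebra.lift_ι_apply]
      norm_num
      exact Ty_Mx⟩

lemma rep_Ax : rep k N (Ax k N) = Mx k := by
  rw [Ax, rep, RingQuot.liftAlgHom_mkAlgHom_apply, FreeAlgebra.lift_ι_apply]
  norm_num

lemma rep_Ay : rep k N (Ay k N) = Ty k N := by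
  rw [Ay, rep, RingQuot.liftAlgHom_mkAlgHom_apply, FreeAlgebra.lift_ι_apply]
  norm_num

def e (k : Type*) [Field k] (N : ℕ) : AN k N →ₗ[k] R k :=
  LinearMap.applyₗ (1 : R k) ∘ₗ (rep k N).toLinearMap

lemma e_apply (z : AN k N) : e k N z = rep k N z 1 := rfl

lemma Mx_pow_apply (i : ℕ) (f : R k) : (Mx k ^ i) f = Polynomial.X ^ i * f := by
  rw [Mx, LinearMap.pow_mulLeft, LinearMap.mulLeft_apply]

lemma Ty_pow_one (j : ℕ) : (Ty k N ^ j) 1 = Polynomial.C (Polynomial.X ^ j) := by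
  induction j with
  | zero => simp
  | succ j ih =>
    rw [pow_succ', Module.End.mul_apply, ih, Ty_apply]
    simp [← map_pow, map_mul, pow_succ']

lemma e_xy (i j : ℕ) :
    e k N (Ax k N ^ i * Ay k N ^ j) = Polynomial.X ^ i * Polynomial.C (Polynomial.X ^ j) := by
  rw [e_apply, map_mul, map_pow, map_pow, rep_Ax, rep_Ay, Module.End.mul_apply,
    Ty_pow_one, Mx_pow_apply]

end ANwork

end Rep

noncomputable section Relations

namespace ANwork

variable {k : Type*} [Field k] {N : ℕ}

lemma comm1 : Ay k N * Ax k N = Ax k N * Ay k N + Ax k N ^ N := by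
  have h := RingQuot.mkAlgHom_rel k (AnRel.comm (k := k) (N := N))
  simpa only [map_mul, map_add, map_pow, Ax, Ay] using h

lemma commPow (hN : 1 ≤ N) (i : ℕ) :
    Ay k N * Ax k N ^ i = Ax k N ^ i * Ay k N + (i : k) • Ax k N ^ (N + i - 1) := by
  induction i with
  | zero => simp
  | succ i ih =>
    have hexp : N + i - 1 + 1 = N + i := by omega
    have hexp2 : N + (i + 1) - 1 = N + i := by omega
    calc Ay k N * Ax k N ^ (i + 1)
        = (Ay k N * Ax k N ^ i) * Ax k N := by rw [pow_succ, mul_assoc]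
      _ = Ax k N ^ i * (Ay k N * Ax k N) + (i : k) • (Ax k N ^ (N + i - 1) * Ax k N) := by
          rw [ih]; simp [add_mul, mul_assoc, smul_mul_assoc]
      _ = Ax k N ^ (i + 1) * Ay k N + Ax k N ^ (i + N) +
            (i : k) • Ax k N ^ (N + i) := by
          rw [comm1, ← pow_succ, hexp]
          simp only [mul_add, ← mul_assoc, ← pow_succ, ← pow_add]
      _ = Ax k N ^ (i + 1) * Ay k N + ((i : k) + 1) • Ax k N ^ (N + (i + 1) - 1) := by
          rw [hexp2, add_smul, one_smul, add_comm i N]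
          abel
      _ = Ax k N ^ (i + 1) * Ay k N + ((i + 1 : ℕ) : k) • Ax k N ^ (N + (i + 1) - 1) := by
          push_cast
          ring_nf

lemma adjoin_top : Algebra.adjoin k {Ax k N, Ay k N} = ⊤ := by
  rw [eq_top_iff]
  rintro z -
  obtain ⟨w, rfl⟩ := RingQuot.mkAlgHom_surjective k (AnRel k N) z
  induction w using FreeAlgebra.induction with
  | grade0 c => simpa using (Algebra.adjoin k {Ax k N, Ay k N}).algebraMap_mem c
  | grade1 i =>
    fin_cases i
    · exact Algebra.subset_adjoin (by left; rfl)
    · exact Algebra.subset_adjoin (by right; rfl)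
  | mul a b ha hb => rw [map_mul]; exact mul_mem ha hb
  | add a b ha hb => rw [map_add]; exact add_mem ha hb

def S (k : Type*) [Field k] (N : ℕ) : Submodule k (AN k N) :=
  Submodule.span k (Set.range fun p : ℕ × ℕ => Ax k N ^ p.1 * Ay k N ^ p.2)

lemma xy_mem_S (i j : ℕ) : Ax k N ^ i * Ay k N ^ j ∈ S k N :=
  Submodule.subset_span ⟨(i, j), rfl⟩

lemma S_mul_x {s : AN k N} (hs : s ∈ S k N) : Ax k N * s ∈ S k N := by
  induction hs using Submodule.span_induction with
  | mem s hs =>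
    obtain ⟨⟨i, j⟩, rfl⟩ := hs
    have : Ax k N * (Ax k N ^ i * Ay k N ^ j) = Ax k N ^ (i + 1) * Ay k N ^ j := by
      rw [pow_succ', mul_assoc]
    rw [this]; exact xy_mem_S _ _
  | zero => simp
  | add a b _ _ ha hb => rw [mul_add]; exact add_mem ha hb
  | smul c a _ ha => rw [mul_smul_comm]; exact Submodule.smul_mem _ _ ha

lemma S_mul_y (hN : 1 ≤ N) {s : AN k N} (hs : s ∈ S k N) : Ay k N * s ∈ S k N := by
  induction hs using Submodule.span_induction with
  | mem s hs =>
    obtain ⟨⟨i, j⟩, rfl⟩ := hs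
    have : Ay k N * (Ax k N ^ i * Ay k N ^ j) =
        Ax k N ^ i * Ay k N ^ (j + 1) + (i : k) • (Ax k N ^ (N + i - 1) * Ay k N ^ j) := by
      rw [← mul_assoc, commPow hN, add_mul, smul_mul_assoc, mul_assoc, ← pow_succ']
    rw [this]
    exact add_mem (xy_mem_S _ _) (Submodule.smul_mem _ _ (xy_mem_S _ _))
  | zero => simp
  | add a b _ _ ha hb => rw [mul_add]; exact add_mem ha hb
  | smul c a _ ha => rw [mul_smul_comm]; exact Submodule.smul_mem _ _ ha

lemma S_top (hN : 1 ≤ N) : S k N = ⊤ := by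
  rw [eq_top_iff]
  rintro z -
  have key : ∀ w : AN k N, ∀ s ∈ S k N, w * s ∈ S k N := by
    intro w
    have hw : w ∈ Algebra.adjoin k {Ax k N, Ay k N} := by rw [adjoin_top]; trivial
    induction hw using Algebra.adjoin_induction with
    | mem a ha =>
      rcases ha with h | h
      · subst h; exact fun s hs => S_mul_x hs
      · rw [Set.mem_singleton_iff] at h; subst h; exact fun s hs => S_mul_y hN hs
    | algebraMap c =>
      intro s hs
      rw [Algebra.algebraMap_eq_smul_one, smul_mul_assoc, one_mul]
      exact Submodule.smul_mem _ _ hs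
    | add a b hma hmb ha hb =>
      intro s hs
      rw [add_mul]; exact add_mem (ha s hs) (hb s hs)
    | mul a b hma hmb ha hb =>
      intro s hs
      rw [mul_assoc]; exact ha _ (hb s hs)
  have h1 : (1 : AN k N) ∈ S k N := by simpa using xy_mem_S (k := k) (N := N) 0 0
  simpa using key z 1 h1

end ANwork

end Relations

noncomputable section TyPow

namespace ANwork

open Polynomial

variable {k : Type*} [Field k] {N : ℕ}

lemma algebraMap_R (c : k) :
    algebraMap k (R k) c = Polynomial.C (Polynomial.C c) := by
  rw [Polynomial.algebraMap_apply, Polynomial.algebraMap_apply]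
  rfl

lemma Ty_CC_mul (c : k) (w : R k) :
    Ty k N (Polynomial.C (Polynomial.C c) * w) = Polynomial.C (Polynomial.C c) * Ty k N w := by
  rw [← algebraMap_R, ← Algebra.smul_def, map_smul, Algebra.smul_def]

lemma TyA (g : Polynomial k) :
    Ty k N (Polynomial.X * Polynomial.C g) =
      Polynomial.X * Polynomial.C (Polynomial.X * g) + Polynomial.X ^ N * Polynomial.C g := by
  rw [Ty_apply]
  simp only [derivative_mul, derivative_X, derivative_C, map_mul]
  ring

lemma TyB (hN : 1 ≤ N) (g : Polynomial k) :
    Ty k N (Polynomial.X ^ N * Polynomial.C g) =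
      Polynomial.X ^ N * Polynomial.C (Polynomial.X * g) +
        Polynomial.C (Polynomial.C (N : k)) * (Polynomial.X ^ (2 * N - 1) * Polynomial.C g) := by
  have h2 : N - 1 + N = 2 * N - 1 := by omega
  rw [Ty_apply]
  simp only [derivative_mul, derivative_C, derivative_X_pow, map_mul, mul_zero, add_zero]
  rw [show ((N : ℕ) : Polynomial k) = Polynomial.C ((N : ℕ) : k) by simp]
  rw [← h2, pow_add]
  ring

lemma TyC (hN : 1 ≤ N) (r : R k) :
    Ty k N (Polynomial.X ^ (2 * N - 1) * r) =
      Polynomial.X ^ (2 * N - 1) *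
        (Polynomial.C Polynomial.X * r +
          Polynomial.C (Polynomial.C ((2 * N - 1 : ℕ) : k)) * (Polynomial.X ^ (N - 1) * r) +
          Polynomial.X ^ N * Polynomial.derivative r) := by
  have h2 : N + (2 * N - 1 - 1) = (2 * N - 1) + (N - 1) := by omega
  rw [Ty_apply]
  simp only [derivative_mul, derivative_X_pow, map_mul]
  rw [show ((2 * N - 1 : ℕ) : Polynomial k) = Polynomial.C ((2 * N - 1 : ℕ) : k) by simp]
  rw [mul_add, ← mul_assoc (Polynomial.X ^ N), mul_left_comm (Polynomial.X ^ N),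
    ← pow_add, h2, pow_add]
  ring

lemma Ty_pow_X (hN : 1 ≤ N) (j : ℕ) :
    ∃ r : R k, (Ty k N ^ (j + 1)) Polynomial.X =
      Polynomial.X * Polynomial.C (Polynomial.X ^ (j + 1)) +
      Polynomial.C (Polynomial.C ((j + 1 : ℕ) : k)) *
        (Polynomial.X ^ N * Polynomial.C (Polynomial.X ^ j)) +
      Polynomial.X ^ (2 * N - 1) * r := by
  induction j with
  | zero =>
    refine ⟨0, ?_⟩
    have : Ty k N Polynomial.X = Ty k N (Polynomial.X * Polynomial.C 1) := by simp
    rw [pow_one, this, TyA]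
    simp
  | succ j ih =>
    obtain ⟨r, hr⟩ := ih
    refine ⟨Polynomial.C (Polynomial.C ((j + 1 : ℕ) : k)) *
        (Polynomial.C (Polynomial.C (N : k)) * Polynomial.C (Polynomial.X ^ j)) +
        (Polynomial.C Polynomial.X * r +
          Polynomial.C (Polynomial.C ((2 * N - 1 : ℕ) : k)) * (Polynomial.X ^ (N - 1) * r) +
          Polynomial.X ^ N * Polynomial.derivative r), ?_⟩
    rw [pow_succ', Module.End.mul_apply, hr, map_add, map_add, Ty_CC_mul, TyA, TyB hN, TyC hN]
    simp only [pow_succ, map_mul]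
    push_cast
    simp only [map_add, map_one, map_mul]
    ring

end ANwork

end TyPow

noncomputable section Coefs

namespace ANwork

open Polynomial

variable {k : Type*} [Field k] {N : ℕ}

def coefXY (k : Type*) [Field k] (i j : ℕ) : R k →ₗ[k] k :=
  (Polynomial.lcoeff k j) ∘ₗ ((Polynomial.lcoeff (Polynomial k) i).restrictScalars k)

lemma coefXY_apply (i j : ℕ) (f : R k) : coefXY k i j f = (f.coeff i).coeff j := rfl

lemma coefXY_xy (i j a b : ℕ) :
    coefXY k i j ((Polynomial.X : R k) ^ a * Polynomial.C (Polynomial.X ^ b)) =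
      if a = i ∧ b = j then 1 else 0 := by
  rw [coefXY_apply, mul_comm, Polynomial.C_mul_X_pow_eq_monomial, Polynomial.coeff_monomial]
  split_ifs with h1 h2 h3 <;>
    simp_all [Polynomial.coeff_X_pow] <;> omega

def coefN (k : Type*) [Field k] (N : ℕ) : R k →ₗ[k] Polynomial k :=
  (Polynomial.lcoeff (Polynomial k) N).restrictScalars k

lemma coefN_apply (f : R k) : coefN k N f = f.coeff N := rfl

lemma coeffN_TyX (hN2 : 2 ≤ N) (j : ℕ) :
    ((Ty k N ^ j) (Polynomial.X : R k)).coeff N =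
      Polynomial.C ((j : k)) * Polynomial.X ^ (j - 1) := by
  cases j with
  | zero =>
    simp only [pow_zero, Module.End.one_apply, Polynomial.coeff_X, Nat.cast_zero, map_zero,
      zero_mul]
    rw [if_neg (by omega)]
  | succ j =>
    obtain ⟨r, hr⟩ := Ty_pow_X (k := k) (N := N) (le_trans one_le_two hN2) j
    rw [hr]
    have e1 : ((Polynomial.X : R k) * Polynomial.C (Polynomial.X ^ (j + 1))).coeff N = 0 := by
      rw [mul_comm, Polynomial.coeff_C_mul, Polynomial.coeff_X, if_neg (by omega : ¬1 = N),
        mul_zero]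
    have e2 : (Polynomial.C (Polynomial.C ((j + 1 : ℕ) : k)) *
        ((Polynomial.X : R k) ^ N * Polynomial.C (Polynomial.X ^ j))).coeff N =
        Polynomial.C ((j + 1 : ℕ) : k) * Polynomial.X ^ j := by
      rw [show Polynomial.C (Polynomial.C ((j + 1 : ℕ) : k)) *
          ((Polynomial.X : R k) ^ N * Polynomial.C (Polynomial.X ^ j)) =
          Polynomial.C (Polynomial.C ((j + 1 : ℕ) : k) * Polynomial.X ^ j) *
            Polynomial.X ^ N by rw [map_mul]; ring]
      rw [Polynomial.C_mul_X_pow_eq_monomial, Polynomial.coeff_monomial]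
      simp
    have e3 : ((Polynomial.X : R k) ^ (2 * N - 1) * r).coeff N = 0 := by
      rw [mul_comm, Polynomial.coeff_mul_X_pow', if_neg (by omega : ¬(2 * N - 1 ≤ N))]
    rw [Polynomial.coeff_add, Polynomial.coeff_add, e1, e2, e3]
    simp

lemma Ty1_pow_X (j : ℕ) :
    (Ty k 1 ^ j) (Polynomial.X : R k) =
      Polynomial.X * Polynomial.C ((Polynomial.X + 1) ^ j) := by
  induction j with
  | zero => simp
  | succ j ih =>
    rw [pow_succ', Module.End.mul_apply, ih,
      show (Polynomial.X : R k) * Polynomial.C ((Polynomial.X + 1) ^ j) =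
        Polynomial.X * Polynomial.C ((Polynomial.X + 1) ^ j) from rfl, TyA]
    rw [pow_one, pow_succ']
    simp only [map_mul, map_add, map_one]
    ring

end ANwork

end Coefs

noncomputable section StepA

namespace ANwork

open Polynomial

variable {k : Type*} [Field k] [CharZero k] {N : ℕ}

lemma stepA (hN : 1 ≤ N) (c : (ℕ × ℕ) →₀ k) (z : AN k N)
    (hc : (c.sum fun p r => r • (Ax k N ^ p.1 * Ay k N ^ p.2)) = z)
    (hzy : Ay k N * z = z * Ay k N) :
    ∀ p : ℕ × ℕ, p.1 ≠ 0 → c p = 0 := by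
  have h1 : Ay k N * z =
      c.sum fun p r => (r • (Ax k N ^ p.1 * Ay k N ^ (p.2 + 1)) +
        ((p.1 : k) * r) • (Ax k N ^ (N + p.1 - 1) * Ay k N ^ p.2)) := by
    rw [← hc, Finsupp.mul_sum]
    apply Finsupp.sum_congr
    intro p _
    calc Ay k N * (c p • (Ax k N ^ p.1 * Ay k N ^ p.2))
        = c p • ((Ay k N * Ax k N ^ p.1) * Ay k N ^ p.2) := by
          rw [mul_smul_comm, mul_assoc]
      _ = c p • ((Ax k N ^ p.1 * Ay k N + (p.1 : k) • Ax k N ^ (N + p.1 - 1)) *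
            Ay k N ^ p.2) := by rw [commPow hN]
      _ = c p • (Ax k N ^ p.1 * Ay k N ^ (p.2 + 1)) +
            ((p.1 : k) * c p) • (Ax k N ^ (N + p.1 - 1) * Ay k N ^ p.2) := by
          rw [add_mul, smul_mul_assoc, mul_assoc, ← pow_succ', smul_add, smul_smul,
            mul_comm (c p)]
  have h2 : z * Ay k N = c.sum fun p r => r • (Ax k N ^ p.1 * Ay k N ^ (p.2 + 1)) := by
    rw [← hc, Finsupp.sum_mul]
    apply Finsupp.sum_congr
    intro p _
    rw [smul_mul_assoc, mul_assoc, ← pow_succ]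
  have h3 : (c.sum fun p r => ((p.1 : k) * r) • (Ax k N ^ (N + p.1 - 1) * Ay k N ^ p.2)) = 0 := by
    have heq : (c.sum fun p r => (r • (Ax k N ^ p.1 * Ay k N ^ (p.2 + 1)) +
        ((p.1 : k) * r) • (Ax k N ^ (N + p.1 - 1) * Ay k N ^ p.2))) =
        c.sum fun p r => r • (Ax k N ^ p.1 * Ay k N ^ (p.2 + 1)) := by
      rw [← h1, hzy, h2]
    calc (c.sum fun p r => ((p.1 : k) * r) • (Ax k N ^ (N + p.1 - 1) * Ay k N ^ p.2))
        = c.sum fun p r => ((r • (Ax k N ^ p.1 * Ay k N ^ (p.2 + 1)) +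
            ((p.1 : k) * r) • (Ax k N ^ (N + p.1 - 1) * Ay k N ^ p.2)) -
            r • (Ax k N ^ p.1 * Ay k N ^ (p.2 + 1))) := by
          apply Finsupp.sum_congr; intro p _; rw [add_sub_cancel_left]
      _ = 0 := by rw [Finsupp.sum_sub, heq, sub_self]
  have h4 : (c.sum fun p r => ((p.1 : k) * r) •
      ((Polynomial.X : R k) ^ (N + p.1 - 1) * Polynomial.C (Polynomial.X ^ p.2))) = 0 := by
    have h5 := congrArg (e k N) h3
    rw [map_finsuppSum, map_zero] at h5
    rw [← h5]
    apply Finsupp.sum_congr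
    intro p _
    rw [map_smul, e_xy]
  intro q hq
  have h5 := congrArg (coefXY k (N + q.1 - 1) q.2) h4
  rw [map_finsuppSum, map_zero] at h5
  have h6 : (c.sum fun p r => ((p.1 : k) * r) *
      (if N + p.1 - 1 = N + q.1 - 1 ∧ p.2 = q.2 then (1 : k) else 0)) = 0 := by
    refine Eq.trans (Finsupp.sum_congr fun p _ => ?_) h5
    rw [map_smul, coefXY_xy, smul_eq_mul]
  rw [Finsupp.sum, Finset.sum_eq_single q] at h6
  · rw [if_pos ⟨rfl, rfl⟩, mul_one] at h6
    rcases mul_eq_zero.1 h6 with h | h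
    · exact absurd (Nat.cast_eq_zero.1 h) hq
    · exact h
  · intro p _ hpq
    by_cases hp1 : p.1 = 0
    · simp [hp1]
    · rw [if_neg, mul_zero]
      rintro ⟨ha, hb⟩
      exact hpq (Prod.ext (by omega) hb)
  · intro hq'
    rw [Finsupp.notMem_support_iff.1 hq', mul_zero, zero_mul]

end ANwork

end StepA

noncomputable section StepB

namespace ANwork

open Polynomial

variable {k : Type*} [Field k] [CharZero k] {N : ℕ}

lemma repz_X (c : (ℕ × ℕ) →₀ k) (z : AN k N)
    (hc : (c.sum fun p r => r • (Ax k N ^ p.1 * Ay k N ^ p.2)) = z)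
    (hA : ∀ p : ℕ × ℕ, p.1 ≠ 0 → c p = 0)
    (hzx : Ax k N * z = z * Ax k N) :
    (c.sum fun p r => r • ((Ty k N ^ p.2) (Polynomial.X : R k))) =
      c.sum fun p r => r • ((Polynomial.X : R k) * Polynomial.C (Polynomial.X ^ p.2)) := by
  have supp1 : ∀ p ∈ c.support, p.1 = 0 := by
    intro p hp
    by_contra hp1
    exact Finsupp.mem_support_iff.1 hp (hA p hp1)
  have h := congrArg (rep k N) hzx
  rw [map_mul, map_mul, rep_Ax] at h
  have hX : (Polynomial.X : R k) * e k N z = rep k N z Polynomial.X := by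
    have h1 : (Mx k * rep k N z) 1 = (rep k N z * Mx k) 1 := by rw [h]
    rw [Module.End.mul_apply, Module.End.mul_apply, Mx_apply,
      show (Mx k) (1 : R k) = (Polynomial.X : R k) from by rw [Mx_apply, mul_one]] at h1
    rw [e_apply, ← h1]
  have hzrep : rep k N z = c.sum fun p r => r • (Mx k ^ p.1 * Ty k N ^ p.2) := by
    rw [← hc, map_finsuppSum]
    apply Finsupp.sum_congr
    intro p _
    rw [map_smul, map_mul, map_pow, map_pow, rep_Ax, rep_Ay]
  have hL : rep k N z Polynomial.X =
      c.sum fun p r => r • ((Ty k N ^ p.2) (Polynomial.X : R k)) := by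
    rw [hzrep, Finsupp.sum, LinearMap.sum_apply, Finsupp.sum]
    apply Finset.sum_congr rfl
    intro p hp
    rw [LinearMap.smul_apply, Module.End.mul_apply, supp1 p hp, pow_zero,
      Module.End.one_apply]
  have hR : (Polynomial.X : R k) * e k N z =
      c.sum fun p r => r • ((Polynomial.X : R k) * Polynomial.C (Polynomial.X ^ p.2)) := by
    have he : e k N z = c.sum fun p r =>
        r • ((Polynomial.X : R k) ^ p.1 * Polynomial.C (Polynomial.X ^ p.2)) := by
      rw [← hc, map_finsuppSum]
      apply Finsupp.sum_congr
      intro p _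
      rw [map_smul, e_xy]
    rw [he, Finsupp.mul_sum, Finsupp.sum, Finsupp.sum]
    apply Finset.sum_congr rfl
    intro p hp
    rw [mul_smul_comm, supp1 p hp, pow_zero, one_mul]
  rw [← hL, ← hX, hR]

end ANwork

end StepB

noncomputable section StepB2

namespace ANwork

open Polynomial

variable {k : Type*} [Field k] [CharZero k] {N : ℕ}

lemma coeffN_X_mul_C (hN2 : 2 ≤ N) (g : Polynomial k) :
    ((Polynomial.X : R k) * Polynomial.C g).coeff N = 0 := by
  rw [mul_comm, Polynomial.coeff_C_mul, Polynomial.coeff_X, if_neg (by omega : ¬1 = N), mul_zero]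

lemma stepB2 (hN2 : 2 ≤ N) (c : (ℕ × ℕ) →₀ k) (z : AN k N)
    (hc : (c.sum fun p r => r • (Ax k N ^ p.1 * Ay k N ^ p.2)) = z)
    (hA : ∀ p : ℕ × ℕ, p.1 ≠ 0 → c p = 0)
    (hzx : Ax k N * z = z * Ax k N) :
    ∀ j : ℕ, j ≠ 0 → c (0, j) = 0 := by
  have key := repz_X c z hc hA hzx
  have h1 := congrArg (coefN k N) key
  rw [map_finsuppSum, map_finsuppSum] at h1
  have h2 : (c.sum fun p r => r • (Polynomial.C ((p.2 : k)) * Polynomial.X ^ (p.2 - 1))) =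
      (0 : Polynomial k) := by
    calc (c.sum fun p r => r • (Polynomial.C ((p.2 : k)) * Polynomial.X ^ (p.2 - 1)))
        = c.sum fun p r => coefN k N (r • ((Ty k N ^ p.2) (Polynomial.X : R k))) := by
          apply Finsupp.sum_congr
          intro p _
          rw [map_smul, coefN_apply, coeffN_TyX hN2]
      _ = c.sum fun p r =>
            coefN k N (r • ((Polynomial.X : R k) * Polynomial.C (Polynomial.X ^ p.2))) := h1
      _ = 0 := by
          rw [Finsupp.sum]
          apply Finset.sum_eq_zero
          intro p _
          rw [map_smul, coefN_apply, coeffN_X_mul_C hN2, smul_zero]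
  intro j hj
  have h3 := congrArg (Polynomial.lcoeff k (j - 1)) h2
  rw [map_finsuppSum, map_zero, Finsupp.sum, Finset.sum_eq_single (0, j)] at h3
  · rw [map_smul, Polynomial.lcoeff_apply, Polynomial.coeff_C_mul, Polynomial.coeff_X_pow,
      if_pos rfl, mul_one, smul_eq_mul] at h3
    rcases mul_eq_zero.1 h3 with h | h
    · exact h
    · exact absurd (Nat.cast_eq_zero.1 h) hj
  · intro p hp hpq
    have hp1 : p.1 = 0 := by
      by_contra hh
      exact Finsupp.mem_support_iff.1 hp (hA p hh)
    rw [map_smul, Polynomial.lcoeff_apply, Polynomial.coeff_C_mul, Polynomial.coeff_X_pow]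
    by_cases hp2 : p.2 = 0
    · rw [hp2]; simp
    · rw [if_neg, mul_zero, smul_zero]
      intro hcon
      apply hpq
      have : p.2 = j := by omega
      rw [← hp1, ← this]
  · intro h
    rw [Finsupp.notMem_support_iff.1 h, zero_smul, map_zero]

end ANwork

end StepB2

noncomputable section StepB1

namespace ANwork

open Polynomial

variable {k : Type*} [Field k] [CharZero k]

lemma stepB1 (c : (ℕ × ℕ) →₀ k) (z : AN k 1)
    (hc : (c.sum fun p r => r • (Ax k 1 ^ p.1 * Ay k 1 ^ p.2)) = z)
    (hA : ∀ p : ℕ × ℕ, p.1 ≠ 0 → c p = 0)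
    (hzx : Ax k 1 * z = z * Ax k 1) :
    ∀ j : ℕ, j ≠ 0 → c (0, j) = 0 := by
  have key := repz_X c z hc hA hzx
  set L : Polynomial k →ₗ[k] R k :=
    (LinearMap.mulLeft k (Polynomial.X : R k)) ∘ₗ
      ((Polynomial.CAlgHom (R := k) (A := Polynomial k)).toLinearMap) with hL
  have hLapp : ∀ g : Polynomial k, L g = (Polynomial.X : R k) * Polynomial.C g := fun g => rfl
  set P : Polynomial k := c.sum fun p r => r • (Polynomial.X : Polynomial k) ^ p.2 with hP
  set Q : Polynomial k := c.sum fun p r => r • ((Polynomial.X : Polynomial k) + 1) ^ p.2 with hQ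
  have hPQ : Q = P := by
    have h1 : L Q = L P := by
      rw [hP, hQ, map_finsuppSum, map_finsuppSum]
      calc (c.sum fun p r => L (r • ((Polynomial.X : Polynomial k) + 1) ^ p.2))
          = c.sum fun p r => r • ((Ty k 1 ^ p.2) (Polynomial.X : R k)) := by
            apply Finsupp.sum_congr
            intro p _
            rw [map_smul, hLapp, Ty1_pow_X]
        _ = c.sum fun p r =>
              r • ((Polynomial.X : R k) * Polynomial.C (Polynomial.X ^ p.2)) := key
        _ = c.sum fun p r => L (r • (Polynomial.X : Polynomial k) ^ p.2) := by
            apply Finsupp.sum_congr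
            intro p _
            rw [map_smul, hLapp]
    have h2 : (Polynomial.X : R k) * Polynomial.C Q = (Polynomial.X : R k) * Polynomial.C P := by
      rw [← hLapp, ← hLapp, h1]
    exact Polynomial.C_injective (mul_left_cancel₀ Polynomial.X_ne_zero h2)
  have heval : ∀ t : k, P.eval (t + 1) = P.eval t := by
    intro t
    have e1 : P.eval (t + 1) = Q.eval t := by
      rw [hP, hQ]
      rw [show (Finsupp.sum c fun p r => r • (Polynomial.X : Polynomial k) ^ p.2).eval (t + 1) =
        Polynomial.leval (t+1) (Finsupp.sum c fun p r => r • (Polynomial.X : Polynomial k) ^ p.2)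
        from rfl]
      rw [show (Finsupp.sum c fun p r => r • ((Polynomial.X : Polynomial k) + 1) ^ p.2).eval t =
        Polynomial.leval t (Finsupp.sum c fun p r => r • ((Polynomial.X : Polynomial k) + 1) ^ p.2)
        from rfl]
      rw [map_finsuppSum, map_finsuppSum]
      apply Finsupp.sum_congr
      intro p _
      rw [map_smul, map_smul, Polynomial.leval_apply, Polynomial.leval_apply]
      simp
    rw [e1, hPQ]
  have hnat : ∀ n : ℕ, P.eval ((n : k)) = P.eval 0 := by
    intro n
    induction n with
    | zero => norm_num
    | succ n ih => rw [Nat.cast_succ, heval, ih]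
  have hPconst : P - Polynomial.C (P.eval 0) = 0 := by
    apply Polynomial.eq_zero_of_infinite_isRoot
    apply Set.infinite_of_injective_forall_mem (f := fun n : ℕ => (n : k)) Nat.cast_injective
    intro n
    simp only [Set.mem_setOf_eq, Polynomial.IsRoot, Polynomial.eval_sub, Polynomial.eval_C,
      hnat n, sub_self]
  intro j hj
  have hcoeff : P.coeff j = c (0, j) := by
    rw [hP, show (Finsupp.sum c fun p r => r • (Polynomial.X : Polynomial k) ^ p.2).coeff j =
      Polynomial.lcoeff k j (Finsupp.sum c fun p r => r • (Polynomial.X : Polynomial k) ^ p.2)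
      from rfl, map_finsuppSum, Finsupp.sum, Finset.sum_eq_single (0, j)]
    · rw [map_smul, Polynomial.lcoeff_apply, Polynomial.coeff_X_pow, if_pos rfl, smul_eq_mul,
        mul_one]
    · intro p hp hpq
      have hp1 : p.1 = 0 := by
        by_contra hh
        exact Finsupp.mem_support_iff.1 hp (hA p hh)
      rw [map_smul, Polynomial.lcoeff_apply, Polynomial.coeff_X_pow, if_neg, smul_zero]
      intro hcon
      exact hpq (by rw [← hp1, hcon])
    · intro h
      rw [Finsupp.notMem_support_iff.1 h, zero_smul, map_zero]
  have : P.coeff j = 0 := by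
    have := sub_eq_zero.1 hPconst
    rw [this, Polynomial.coeff_C, if_neg hj]
  rw [← hcoeff, this]

end ANwork

end StepB1

/-- The center of `A_N` consists exactly of the scalars. -/
theorem center_AN_eq_bot (k : Type*) [Field k] [CharZero k] (N : ℕ) (hN : 1 ≤ N) :
    Subalgebra.center k (AN k N) = ⊥ := by
  refine le_antisymm ?_ bot_le
  intro z hz
  rw [Subalgebra.mem_center_iff] at hz
  have hzx := hz (Ax k N)
  have hzy := hz (Ay k N)
  have hspan : z ∈ ANwork.S k N := by rw [ANwork.S_top hN]; trivial
  rw [ANwork.S, Finsupp.mem_span_range_iff_exists_finsupp] at hspan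
  obtain ⟨c, hc⟩ := hspan
  have hA := ANwork.stepA hN c z hc hzy
  have hB : ∀ j : ℕ, j ≠ 0 → c (0, j) = 0 := by
    rcases eq_or_lt_of_le hN with h1 | h2
    · subst h1
      exact ANwork.stepB1 c z hc hA hzx
    · exact ANwork.stepB2 h2 c z hc hA hzx
  rw [Algebra.mem_bot]
  refine ⟨c (0, 0), ?_⟩
  have hz0 : z = c (0, 0) • (1 : AN k N) := by
    rw [← hc, Finsupp.sum, Finset.sum_eq_single ((0, 0) : ℕ × ℕ)]
    · simp
    · intro p hp hpq
      have hcp : c p = 0 := by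
        by_cases hp1 : p.1 = 0
        · have hp2 : p.2 ≠ 0 := by
            intro h2
            exact hpq (Prod.ext hp1 h2)
          rw [show p = ((0 : ℕ), p.2) from Prod.ext hp1 rfl]
          exact hB p.2 hp2
        · exact hA p hp1
      rw [hcp, zero_smul]
    · intro h
      rw [Finsupp.notMem_support_iff.1 h, zero_smul]
  rw [hz0, Algebra.algebraMap_eq_smul_one]
end
end

section
/- In A_N = k⟨x,y⟩/(yx - xy - x^N) with N ≥ 1, the set of non-zero normal elements is exactly {λ x^i : λ ∈ k^×, i ≥ 0}, where an element u is normal if uA_N = A_N u. -/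
noncomputable section

namespace ANProof

open Polynomial

variable (k : Type*) [Field k] (N : ℕ)

/-- Coefficientwise `X^N * derivative`, as a plain function. -/
def DmapFun (f : Polynomial (Polynomial k)) : Polynomial (Polynomial k) :=
  ⟨AddMonoidAlgebra.ofCoeff (f.toFinsupp.coeff.mapRange (fun a => X ^ N * derivative a) (by simp))⟩

lemma DmapFun_coeff (f : Polynomial (Polynomial k)) (n : ℕ) :
    (DmapFun k N f).coeff n = X ^ N * derivative (f.coeff n) := rfl

/-- Coefficientwise `X^N * derivative`, as a `k`-linear map. -/
def Dmap : Polynomial (Polynomial k) →ₗ[k] Polynomial (Polynomial k) where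
  toFun := DmapFun k N
  map_add' f g := by
    ext n
    simp [DmapFun_coeff, coeff_add, mul_add]
  map_smul' c f := by
    ext n
    simp [DmapFun_coeff, coeff_smul, mul_smul_comm]

lemma Dmap_coeff (f : Polynomial (Polynomial k)) (n : ℕ) :
    (Dmap k N f).coeff n = X ^ N * derivative (f.coeff n) := rfl

/-- The operator of multiplication by `x`. -/
def Mx : Module.End k (Polynomial (Polynomial k)) :=
  LinearMap.mulLeft k (C (X : Polynomial k))

/-- The operator representing `y`. -/
def My : Module.End k (Polynomial (Polynomial k)) :=
  LinearMap.mulLeft k (X : Polynomial (Polynomial k)) + Dmap k N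

lemma Mx_apply (f : Polynomial (Polynomial k)) : Mx k f = C (X : Polynomial k) * f := rfl

lemma My_apply (f : Polynomial (Polynomial k)) :
    My k N f = X * f + Dmap k N f := rfl

lemma My_coeff (f : Polynomial (Polynomial k)) (n : ℕ) :
    (My k N f).coeff n = (X * f).coeff n + X ^ N * derivative (f.coeff n) := by
  rw [My_apply, coeff_add, Dmap_coeff]

lemma Mx_pow_apply (i : ℕ) (f : Polynomial (Polynomial k)) :
    (Mx k ^ i) f = C ((X : Polynomial k) ^ i) * f := by
  rw [Mx, LinearMap.pow_mulLeft, LinearMap.mulLeft_apply, map_pow]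

lemma rel_holds : My k N * Mx k = Mx k * My k N + Mx k ^ N := by
  apply LinearMap.ext
  intro f
  have hD : Dmap k N (C (X : Polynomial k) * f)
      = C (X : Polynomial k) * Dmap k N f + C ((X : Polynomial k) ^ N) * f := by
    apply Polynomial.ext; intro n
    simp only [Dmap_coeff, coeff_add, coeff_C_mul, derivative_mul, derivative_X]
    ring
  simp only [Module.End.mul_apply, LinearMap.add_apply, Mx_apply, My_apply, Mx_pow_apply, hD]
  ring

/-- The representation of the free algebra. -/
def F : FreeAlgebra k (Fin 2) →ₐ[k] Module.End k (Polynomial (Polynomial k)) :=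
  FreeAlgebra.lift k ![Mx k, My k N]

lemma F_rel : ∀ ⦃a b : FreeAlgebra k (Fin 2)⦄, AnRel k N a b → F k N a = F k N b := by
  rintro a b ⟨⟩
  simp only [map_mul, map_add, map_pow, F, FreeAlgebra.lift_ι_apply,
    Matrix.cons_val_zero, Matrix.cons_val_one, Matrix.head_cons]
  exact rel_holds k N

/-- The representation of `A_N` on `k[x][Y]`. -/
def phi : AN k N →ₐ[k] Module.End k (Polynomial (Polynomial k)) :=
  RingQuot.liftAlgHom k ⟨F k N, F_rel k N⟩

lemma phi_Ax : phi k N (Ax k N) = Mx k := by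
  rw [Ax, phi, RingQuot.liftAlgHom_mkAlgHom_apply]
  simp [F, FreeAlgebra.lift_ι_apply]

lemma phi_Ay : phi k N (Ay k N) = My k N := by
  rw [Ay, phi, RingQuot.liftAlgHom_mkAlgHom_apply]
  simp [F, FreeAlgebra.lift_ι_apply]

/-- The symbol map `A_N →ₗ k[x][Y]`, `u ↦ φ(u)(1)`. -/
def psi : AN k N →ₗ[k] Polynomial (Polynomial k) where
  toFun u := phi k N u 1
  map_add' a b := by simp [map_add]
  map_smul' c a := by simp [map_smul]

lemma psi_apply (u : AN k N) : psi k N u = phi k N u 1 := rfl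

lemma psi_mul (a b : AN k N) : psi k N (a * b) = phi k N a (psi k N b) := by
  simp [psi_apply, map_mul, Module.End.mul_apply]

lemma My_pow_one (j : ℕ) : (My k N ^ j) 1 = (X : Polynomial (Polynomial k)) ^ j := by
  induction j with
  | zero => simp
  | succ j ih =>
      rw [pow_succ', Module.End.mul_apply, ih, My_apply]
      have : Dmap k N ((X : Polynomial (Polynomial k)) ^ j) = 0 := by
        ext n
        simp only [Dmap_coeff, coeff_X_pow, coeff_zero]
        split <;> simp
      rw [this, add_zero, ← pow_succ']

lemma psi_mono (i j : ℕ) :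
    psi k N (Ax k N ^ i * Ay k N ^ j)
      = C ((X : Polynomial k) ^ i) * (X : Polynomial (Polynomial k)) ^ j := by
  simp only [psi_apply, map_mul, map_pow, Module.End.mul_apply, phi_Ax, phi_Ay, Mx_pow_apply, My_pow_one, map_pow]

lemma psi_Ax : psi k N (Ax k N) = C (X : Polynomial k) := by
  have := psi_mono k N 1 0
  simpa using this


lemma yx_rel : Ay k N * Ax k N = Ax k N * Ay k N + Ax k N ^ N := by
  have h := RingQuot.mkAlgHom_rel k (AnRel.comm (k := k) (N := N))
  rw [Ax, Ay]
  simpa only [map_mul, map_add, map_pow] using h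

lemma y_pow (hN : 1 ≤ N) (i : ℕ) :
    Ay k N * Ax k N ^ i = Ax k N ^ i * Ay k N + i • Ax k N ^ (N + i - 1) := by
  induction i with
  | zero => simp
  | succ i ih =>
      have h1 : N + (i + 1) - 1 = N + i := by omega
      have h2 : N + i - 1 + 1 = N + i := by omega
      calc Ay k N * Ax k N ^ (i + 1)
          = (Ay k N * Ax k N ^ i) * Ax k N := by rw [pow_succ, mul_assoc]
        _ = (Ax k N ^ i * Ay k N) * Ax k N + i • (Ax k N ^ (N + i - 1) * Ax k N) := by
            rw [ih, add_mul, smul_mul_assoc]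
        _ = Ax k N ^ i * (Ax k N * Ay k N + Ax k N ^ N) + i • Ax k N ^ (N + i) := by
            rw [mul_assoc, yx_rel, ← pow_succ, h2]
        _ = Ax k N ^ (i + 1) * Ay k N + (Ax k N ^ (N + i) + i • Ax k N ^ (N + i)) := by
            rw [mul_add, ← mul_assoc, ← pow_succ, ← pow_add, add_comm i N, add_assoc]
        _ = Ax k N ^ (i + 1) * Ay k N + (i + 1) • Ax k N ^ (N + (i + 1) - 1) := by
            rw [h1, succ_nsmul, add_comm (i • Ax k N ^ (N + i))]

/-- The span of the monomials `x^i y^j`. -/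
def S : Submodule k (AN k N) :=
  Submodule.span k (Set.range fun p : ℕ × ℕ => Ax k N ^ p.1 * Ay k N ^ p.2)

lemma mono_mem (i j : ℕ) : Ax k N ^ i * Ay k N ^ j ∈ S k N :=
  Submodule.subset_span ⟨(i, j), rfl⟩

lemma Ax_mul_mem {s : AN k N} (hs : s ∈ S k N) : Ax k N * s ∈ S k N := by
  induction hs using Submodule.span_induction with
  | mem x hx =>
      obtain ⟨⟨i, j⟩, rfl⟩ := hx
      have : Ax k N * (Ax k N ^ i * Ay k N ^ j) = Ax k N ^ (i + 1) * Ay k N ^ j := by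
        rw [← mul_assoc, ← pow_succ']
      rw [this]; exact mono_mem k N _ _
  | zero => simpa using (S k N).zero_mem
  | add x y hx hy ihx ihy => rw [mul_add]; exact (S k N).add_mem ihx ihy
  | smul c x hx ih => rw [mul_smul_comm]; exact (S k N).smul_mem c ih

lemma Ay_mul_mem (hN : 1 ≤ N) {s : AN k N} (hs : s ∈ S k N) : Ay k N * s ∈ S k N := by
  induction hs using Submodule.span_induction with
  | mem x hx =>
      obtain ⟨⟨i, j⟩, rfl⟩ := hx
      have : Ay k N * (Ax k N ^ i * Ay k N ^ j)
          = Ax k N ^ i * Ay k N ^ (j + 1) + i • (Ax k N ^ (N + i - 1) * Ay k N ^ j) := by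
        rw [← mul_assoc, y_pow k N hN, add_mul, smul_mul_assoc, mul_assoc, ← pow_succ']
      rw [this]
      exact (S k N).add_mem (mono_mem k N _ _) (nsmul_mem (mono_mem k N _ _) i)
  | zero => simpa using (S k N).zero_mem
  | add x y hx hy ihx ihy => rw [mul_add]; exact (S k N).add_mem ihx ihy
  | smul c x hx ih => rw [mul_smul_comm]; exact (S k N).smul_mem c ih

lemma S_top (hN : 1 ≤ N) (u : AN k N) : u ∈ S k N := by
  obtain ⟨w, rfl⟩ := RingQuot.mkAlgHom_surjective k (AnRel k N) u
  have key : ∀ s, s ∈ S k N → RingQuot.mkAlgHom k (AnRel k N) w * s ∈ S k N := by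
    induction w using FreeAlgebra.induction with
    | grade0 r =>
        intro s hs
        rw [AlgHom.commutes, ← Algebra.smul_def]
        exact (S k N).smul_mem r hs
    | grade1 i =>
        intro s hs
        fin_cases i
        · exact Ax_mul_mem k N hs
        · exact Ay_mul_mem k N hN hs
    | mul a b ha hb =>
        intro s hs
        rw [map_mul, mul_assoc]
        exact ha _ (hb _ hs)
    | add a b ha hb =>
        intro s hs
        rw [map_add, add_mul]
        exact (S k N).add_mem (ha _ hs) (hb _ hs)
  have h1 : (1 : AN k N) ∈ S k N := by simpa using mono_mem k N 0 0
  simpa using key 1 h1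

/-- The inverse symbol map. -/
def chi : Polynomial (Polynomial k) →ₗ[k] AN k N where
  toFun f := f.sum fun j a => aeval (Ax k N) a * Ay k N ^ j
  map_add' f g := Polynomial.sum_add_index f g _ (by simp) (by intros; rw [map_add, add_mul])
  map_smul' c f := by
    rw [RingHom.id_apply, Polynomial.sum_smul_index' _ _ _ (by simp)]
    simp only [map_smul, smul_mul_assoc]
    exact (Polynomial.smul_sum _ _ _).symm

lemma chi_apply (f : Polynomial (Polynomial k)) :
    chi k N f = f.sum fun j a => aeval (Ax k N) a * Ay k N ^ j := rfl

lemma chi_mono (i j : ℕ) :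
    chi k N (C ((X : Polynomial k) ^ i) * (X : Polynomial (Polynomial k)) ^ j)
      = Ax k N ^ i * Ay k N ^ j := by
  rw [C_mul_X_pow_eq_monomial, chi_apply, Polynomial.sum_monomial_index _ _ (by simp)]
  simp

lemma chi_psi (hN : 1 ≤ N) (u : AN k N) : chi k N (psi k N u) = u := by
  induction S_top k N hN u using Submodule.span_induction with
  | mem x hx =>
      obtain ⟨⟨i, j⟩, rfl⟩ := hx
      rw [psi_mono, chi_mono]
  | zero => simp
  | add x y hx hy ihx ihy => rw [map_add, map_add, ihx, ihy]
  | smul c x hx ih => rw [map_smul, map_smul, ih]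

lemma psi_ne_zero (hN : 1 ≤ N) {u : AN k N} (hu : u ≠ 0) : psi k N u ≠ 0 := by
  intro h
  apply hu
  rw [← chi_psi k N hN u, h, map_zero]

lemma phi_apply_eq (hN : 1 ≤ N) (u : AN k N) (g : Polynomial (Polynomial k)) :
    phi k N u g = (psi k N u).sum fun j a => C a * (My k N ^ j) g := by
  induction S_top k N hN u using Submodule.span_induction with
  | mem x hx =>
      obtain ⟨⟨i, j⟩, rfl⟩ := hx
      rw [psi_mono, C_mul_X_pow_eq_monomial, Polynomial.sum_monomial_index _ _ (by simp)]
      simp only [map_mul, map_pow, phi_Ax, phi_Ay, Module.End.mul_apply]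
      rw [Mx_pow_apply, C_pow]
  | zero => simp [Polynomial.sum_zero_index]
  | add x y hx hy ihx ihy =>
      rw [map_add, map_add, LinearMap.add_apply, ihx, ihy,
        Polynomial.sum_add_index _ _ _ (by simp) (by intros; rw [C_add, add_mul])]
  | smul c x hx ih =>
      rw [map_smul, map_smul, LinearMap.smul_apply, ih,
        Polynomial.sum_smul_index' (psi k N x) c
          (fun j a => (C a : Polynomial (Polynomial k)) * (My k N ^ j) g) (fun i => by simp)]
      simp only [← Polynomial.smul_C, smul_mul_assoc]
      exact Polynomial.smul_sum _ _ _

lemma phi_apply_range (hN : 1 ≤ N) (u : AN k N) (g : Polynomial (Polynomial k)) :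
    phi k N u g = ∑ j ∈ Finset.range ((psi k N u).natDegree + 1),
      C ((psi k N u).coeff j) * (My k N ^ j) g := by
  rw [phi_apply_eq k N hN]
  exact Polynomial.sum_over_range _ (by simp)


lemma My_pow_coeff_zero {g : Polynomial (Polynomial k)} {n : ℕ}
    (hg : ∀ e, n < e → g.coeff e = 0) :
    ∀ j d, j + n < d → ((My k N ^ j) g).coeff d = 0 := by
  intro j
  induction j with
  | zero => intro d hd; simpa using hg d (by omega)
  | succ j ih =>
      intro d hd
      obtain ⟨e, rfl⟩ : ∃ e, d = e + 1 := ⟨d - 1, by omega⟩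
      rw [pow_succ', Module.End.mul_apply, My_coeff, coeff_X_mul, ih e (by omega),
        ih (e + 1) (by omega), derivative_zero, mul_zero, add_zero]

lemma My_pow_coeff_top {g : Polynomial (Polynomial k)} {n : ℕ}
    (hg : ∀ e, n < e → g.coeff e = 0) :
    ∀ j, ((My k N ^ j) g).coeff (j + n) = g.coeff n := by
  intro j
  induction j with
  | zero => simp
  | succ j ih =>
      have h1 : j + 1 + n = (j + n) + 1 := by omega
      rw [pow_succ', Module.End.mul_apply, My_coeff, h1, coeff_X_mul, ih,
        My_pow_coeff_zero k N hg j (j + n + 1) (by omega), derivative_zero,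
        mul_zero, add_zero]

lemma coeff_CX (e : ℕ) (he : 0 < e) :
    (C (X : Polynomial k) : Polynomial (Polynomial k)).coeff e = 0 := by
  rw [coeff_C, if_neg (by omega)]

lemma My_pow_CX_coeff : ∀ j : ℕ,
    ((My k N ^ (j + 1)) (C (X : Polynomial k))).coeff j
      = ((j : Polynomial k) + 1) * X ^ N := by
  intro j
  induction j with
  | zero =>
      rw [pow_one, My_coeff, mul_coeff_zero, coeff_X_zero, zero_mul, coeff_C, if_pos rfl,
        derivative_X, mul_one, zero_add, Nat.cast_zero, zero_add, one_mul]
  | succ j ih =>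
      rw [pow_succ', Module.End.mul_apply, My_coeff, coeff_X_mul, ih]
      have h2 : ((My k N ^ (j + 1)) (C (X : Polynomial k))).coeff (j + 1) = X := by
        have := My_pow_coeff_top k N (coeff_CX k) (j + 1)
        simpa using this
      rw [h2, derivative_X, mul_one]
      push_cast
      ring

lemma coeff_phi_zero (hN : 1 ≤ N) {w : AN k N} {g : Polynomial (Polynomial k)} {n d : ℕ}
    (hg : ∀ e, n < e → g.coeff e = 0)
    (hd : (psi k N w).natDegree + n < d) : (phi k N w g).coeff d = 0 := by
  rw [phi_apply_range k N hN, finset_sum_coeff]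
  apply Finset.sum_eq_zero
  intro j hj
  have hj' := Finset.mem_range.mp hj
  rw [coeff_C_mul, My_pow_coeff_zero k N hg j d (by omega), mul_zero]

lemma coeff_phi_top (hN : 1 ≤ N) {w : AN k N} {g : Polynomial (Polynomial k)} {n : ℕ}
    (hg : ∀ e, n < e → g.coeff e = 0) :
    (phi k N w g).coeff ((psi k N w).natDegree + n)
      = (psi k N w).leadingCoeff * g.coeff n := by
  rw [phi_apply_range k N hN, finset_sum_coeff,
    Finset.sum_eq_single ((psi k N w).natDegree)]
  · rw [coeff_C_mul, My_pow_coeff_top k N hg, leadingCoeff]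
  · intro j hj hne
    have hj' := Finset.mem_range.mp hj
    rw [coeff_C_mul, My_pow_coeff_zero k N hg j _ (by omega), mul_zero]
  · intro h
    exact absurd (Finset.self_mem_range_succ _) h


lemma poly_monomial [CharZero k] (hN : 1 ≤ N) :
    ∀ (n : ℕ) (p γ : Polynomial k), p.natDegree ≤ n → p ≠ 0 →
      p * γ = X ^ N * derivative p → ∃ (c : k) (i : ℕ), c ≠ 0 ∧ p = c • X ^ i := by
  obtain ⟨N', rfl⟩ : ∃ N', N = N' + 1 := ⟨N - 1, by omega⟩
  have const_case : ∀ p : Polynomial k, p ≠ 0 → p.natDegree = 0 →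
      ∃ (c : k) (i : ℕ), c ≠ 0 ∧ p = c • X ^ i := by
    intro p hp h0
    refine ⟨p.coeff 0, 0, fun h => hp ?_, ?_⟩
    · rw [eq_C_of_natDegree_eq_zero h0, h, map_zero]
    · rw [pow_zero, smul_eq_C_mul, mul_one]
      exact eq_C_of_natDegree_eq_zero h0
  intro n
  induction n with
  | zero =>
      intro p γ hdeg hp heq
      exact const_case p hp (Nat.le_zero.mp hdeg)
  | succ n ih =>
      intro p γ hdeg hp heq
      by_cases hX : X ∣ p
      · obtain ⟨q, rfl⟩ := hX
        have hq : q ≠ 0 := fun h => hp (by rw [h, mul_zero])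
        have hdq : q.natDegree ≤ n := by
          have h1 := natDegree_mul (X_ne_zero (R := k)) hq
          rw [natDegree_X] at h1
          omega
        have heq' : q * (γ - X ^ N') = X ^ (N' + 1) * derivative q := by
          have h0 : X * (q * γ) = X * (X ^ N' * q + X ^ (N' + 1) * derivative q) := by
            calc X * (q * γ) = (X * q) * γ := by ring
              _ = X ^ (N' + 1) * derivative (X * q) := heq
              _ = X ^ (N' + 1) * (q + X * derivative q) := by
                  rw [derivative_mul, derivative_X, one_mul]
              _ = X * (X ^ N' * q + X ^ (N' + 1) * derivative q) := by ring
          have h2 := mul_left_cancel₀ (X_ne_zero (R := k)) h0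
          linear_combination h2
        obtain ⟨c, i, hc, hq'⟩ := ih q (γ - X ^ N') hdq hq heq'
        refine ⟨c, i + 1, hc, ?_⟩
        rw [hq', mul_smul_comm, ← pow_succ']
      · have hcop : IsCoprime p ((X : Polynomial k) ^ (N' + 1)) :=
          ((Polynomial.irreducible_X.coprime_iff_not_dvd.mpr hX).symm).pow_right
        have hdvd : p ∣ X ^ (N' + 1) * derivative p := ⟨γ, heq.symm⟩
        have hdvd' : p ∣ derivative p := hcop.dvd_of_dvd_mul_left hdvd
        have hder : derivative p = 0 := by
          by_contra hne
          have hd0 : p.natDegree ≠ 0 := by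
            intro h0
            exact hne (by rw [eq_C_of_natDegree_eq_zero h0, derivative_C])
          have h1 : p.natDegree ≤ (derivative p).natDegree := natDegree_le_of_dvd hdvd' hne
          have h2 := natDegree_derivative_lt hd0
          omega
        exact const_case p hp (natDegree_eq_zero_of_derivative_eq_zero hder)

lemma swap_right (hN : 1 ≤ N) (a : AN k N) : ∃ b, a * Ax k N = Ax k N * b := by
  obtain ⟨N', rfl⟩ : ∃ N', N = N' + 1 := ⟨N - 1, by omega⟩
  obtain ⟨w, rfl⟩ := RingQuot.mkAlgHom_surjective k _ a
  induction w using FreeAlgebra.induction with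
  | grade0 r =>
      refine ⟨algebraMap k _ r, ?_⟩
      rw [AlgHom.commutes]
      exact Algebra.commutes r _
  | grade1 i =>
      fin_cases i
      · exact ⟨Ax k (N' + 1), rfl⟩
      · refine ⟨Ay k (N' + 1) + Ax k (N' + 1) ^ N', ?_⟩
        show Ay k (N' + 1) * Ax k (N' + 1) = _
        rw [yx_rel, mul_add, ← pow_succ']
  | mul x y hx hy =>
      obtain ⟨bx, hbx⟩ := hx
      obtain ⟨c, hc⟩ := hy
      refine ⟨bx * c, ?_⟩
      rw [map_mul, mul_assoc, hc, ← mul_assoc, hbx, mul_assoc]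
  | add x y hx hy =>
      obtain ⟨bx, hbx⟩ := hx
      obtain ⟨c, hc⟩ := hy
      refine ⟨bx + c, ?_⟩
      rw [map_add, add_mul, hbx, hc, mul_add]

lemma swap_left (hN : 1 ≤ N) (a : AN k N) : ∃ b, Ax k N * a = b * Ax k N := by
  obtain ⟨N', rfl⟩ : ∃ N', N = N' + 1 := ⟨N - 1, by omega⟩
  obtain ⟨w, rfl⟩ := RingQuot.mkAlgHom_surjective k _ a
  induction w using FreeAlgebra.induction with
  | grade0 r =>
      refine ⟨algebraMap k _ r, ?_⟩
      rw [AlgHom.commutes]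
      exact (Algebra.commutes r _).symm
  | grade1 i =>
      fin_cases i
      · exact ⟨Ax k (N' + 1), rfl⟩
      · refine ⟨Ay k (N' + 1) - Ax k (N' + 1) ^ N', ?_⟩
        show Ax k (N' + 1) * Ay k (N' + 1) = _
        rw [sub_mul, ← pow_succ, yx_rel, add_sub_cancel_right]
  | mul x y hx hy =>
      obtain ⟨bx, hbx⟩ := hx
      obtain ⟨c, hc⟩ := hy
      refine ⟨bx * c, ?_⟩
      rw [map_mul, ← mul_assoc, hbx, mul_assoc, hc, ← mul_assoc]
  | add x y hx hy =>
      obtain ⟨bx, hbx⟩ := hx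
      obtain ⟨c, hc⟩ := hy
      refine ⟨bx + c, ?_⟩
      rw [map_add, mul_add, hbx, hc, add_mul]

lemma swap_right_pow (hN : 1 ≤ N) (i : ℕ) (a : AN k N) :
    ∃ b, a * Ax k N ^ i = Ax k N ^ i * b := by
  induction i generalizing a with
  | zero => exact ⟨a, by simp⟩
  | succ i ih =>
      obtain ⟨b, hb⟩ := swap_right k N hN a
      obtain ⟨c, hc⟩ := ih b
      refine ⟨c, ?_⟩
      rw [pow_succ', ← mul_assoc, hb, mul_assoc, hc, ← mul_assoc, ← pow_succ']
  -- a * (Ax * Ax^i) : careful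

lemma swap_left_pow (hN : 1 ≤ N) (i : ℕ) (a : AN k N) :
    ∃ b, Ax k N ^ i * a = b * Ax k N ^ i := by
  induction i generalizing a with
  | zero => exact ⟨a, by simp⟩
  | succ i ih =>
      obtain ⟨b, hb⟩ := swap_left k N hN a
      obtain ⟨c, hc⟩ := ih b
      refine ⟨c, ?_⟩
      rw [pow_succ, mul_assoc, hb, ← mul_assoc, hc, mul_assoc, ← pow_succ]

end ANProof

open Polynomial ANProof

/-- The non-zero normal elements of `A_N` are exactly `λ x^i` with `λ ∈ kˣ`, `i ≥ 0`. -/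
theorem normal_elements (k : Type*) [Field k] [CharZero k] (N : ℕ) (hN : 1 ≤ N)
    (u : AN k N) (hu : u ≠ 0) :
    (Set.range (fun a : AN k N => u * a) = Set.range (fun a : AN k N => a * u))
      ↔ ∃ (l : kˣ) (i : ℕ), u = (l : k) • Ax k N ^ i := by
  constructor
  · intro h
    obtain ⟨v, hv⟩ : ∃ v, v * u = u * Ax k N := by
      have h2 : u * Ax k N ∈ Set.range (fun a : AN k N => a * u) := by
        rw [← h]; exact ⟨Ax k N, rfl⟩
      exact h2
    obtain ⟨w, hw⟩ : ∃ w, u * w = Ay k N * u := by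
      have h2 : Ay k N * u ∈ Set.range (fun a : AN k N => u * a) := by
        rw [h]; exact ⟨Ay k N, rfl⟩
      exact h2
    have hfne : psi k N u ≠ 0 := psi_ne_zero k N hN hu
    have hlcu : (psi k N u).leadingCoeff ≠ 0 := leadingCoeff_ne_zero.mpr hfne
    have hCX : ∀ e, 0 < e → (C (X : Polynomial k) : Polynomial (Polynomial k)).coeff e = 0 :=
      coeff_CX k
    have hfcoeff : ∀ e, (psi k N u).natDegree < e → (psi k N u).coeff e = 0 :=
      fun e he => coeff_eq_zero_of_natDegree_lt he
    have E1 : phi k N u (C (X : Polynomial k)) = phi k N v (psi k N u) := by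
      have h2 := congrArg (psi k N) hv
      rw [psi_mul, psi_mul, psi_Ax] at h2
      exact h2.symm
    have hLm : (phi k N u (C (X : Polynomial k))).coeff ((psi k N u).natDegree)
        = (psi k N u).leadingCoeff * X := by
      have h2 := coeff_phi_top k N hN (w := u) (g := (C (X : Polynomial k))) hCX
      simpa using h2
    have hvne : psi k N v ≠ 0 := by
      intro h0
      have h3 : phi k N v (psi k N u) = 0 := by
        rw [phi_apply_eq k N hN, h0, Polynomial.sum_zero_index]
      have hc := congrArg (fun q => q.coeff ((psi k N u).natDegree)) E1
      rw [hLm, h3, coeff_zero] at hc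
      exact (mul_ne_zero hlcu X_ne_zero) hc
    have hnv : (psi k N v).natDegree = 0 := by
      by_contra hnv
      have hc := congrArg
        (fun q => q.coeff ((psi k N v).natDegree + (psi k N u).natDegree)) E1
      rw [coeff_phi_top k N hN hfcoeff,
        coeff_phi_zero k N hN hCX (by omega)] at hc
      exact (mul_ne_zero (leadingCoeff_ne_zero.mpr hvne) hlcu) hc.symm
    have key := congrArg
      (fun q => q.coeff ((psi k N v).natDegree + (psi k N u).natDegree)) E1
    rw [coeff_phi_top k N hN hfcoeff, hnv, zero_add, hLm] at key
    have hvX : psi k N v = C (X : Polynomial k) := by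
      rw [eq_C_of_natDegree_eq_zero hnv]
      congr 1
      have h4 : (psi k N v).coeff 0 = (psi k N v).leadingCoeff := by
        rw [leadingCoeff, hnv]
      rw [h4]
      have h5 : ((psi k N u)).coeff ((psi k N u)).natDegree = (psi k N u).leadingCoeff := rfl
      rw [h5] at key
      exact (mul_left_cancel₀ hlcu (key.trans (mul_comm _ _))).symm
    have E2 : phi k N u (C (X : Polynomial k))
        = C (X : Polynomial k) * psi k N u := by
      rw [E1, phi_apply_eq k N hN, hvX, Polynomial.sum_C_index (by simp)]
      simp
    have hm0 : (psi k N u).natDegree = 0 := by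
      by_contra hm
      obtain ⟨M, hM⟩ : ∃ M, (psi k N u).natDegree = M + 1 :=
        ⟨(psi k N u).natDegree - 1, by omega⟩
      have hc := congrArg (fun q => q.coeff M) E2
      rw [phi_apply_range k N hN, finset_sum_coeff, hM, Finset.sum_range_succ,
        Finset.sum_range_succ] at hc
      have hz : ∀ j ∈ Finset.range M,
          (C ((psi k N u).coeff j) * (My k N ^ j) (C (X : Polynomial k))).coeff M = 0 := by
        intro j hj
        have hj' := Finset.mem_range.mp hj
        rw [coeff_C_mul, My_pow_coeff_zero k N hCX j M (by omega), mul_zero]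
      have t1 : ((My k N ^ M) (C (X : Polynomial k))).coeff M = X := by
        have h5 := My_pow_coeff_top k N hCX M
        simpa using h5
      rw [Finset.sum_eq_zero hz, zero_add, coeff_C_mul, coeff_C_mul, t1,
        My_pow_CX_coeff k N M, coeff_C_mul] at hc
      have hlc : (psi k N u).coeff (M + 1) = (psi k N u).leadingCoeff := by
        rw [leadingCoeff, hM]
      rw [hlc] at hc
      have hzero : (psi k N u).leadingCoeff * (((M : Polynomial k) + 1) * X ^ N) = 0 := by
        linear_combination hc
      have hMne : ((M : Polynomial k) + 1) ≠ 0 := by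
        exact_mod_cast (Nat.cast_add_one_ne_zero M : ((M : Polynomial k) + 1) ≠ 0)
      exact (mul_ne_zero hlcu (mul_ne_zero hMne (pow_ne_zero _ X_ne_zero))) hzero
    have hup : psi k N u = C ((psi k N u).coeff 0) := eq_C_of_natDegree_eq_zero hm0
    have hpne : (psi k N u).coeff 0 ≠ 0 := by
      intro h5
      apply hfne
      rw [hup, h5, map_zero]
    have E3 : C ((psi k N u).coeff 0) * psi k N w
        = My k N (C ((psi k N u).coeff 0)) := by
      have h5 := congrArg (psi k N) hw
      rw [psi_mul, psi_mul, phi_Ay] at h5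
      rw [phi_apply_eq k N hN] at h5
      rw [hup] at h5
      rw [Polynomial.sum_C_index (by simp)] at h5
      simpa using h5
    have hγ : (psi k N u).coeff 0 * (psi k N w).coeff 0
        = X ^ N * derivative ((psi k N u).coeff 0) := by
      have hc := congrArg (fun q => q.coeff 0) E3
      rw [coeff_C_mul, My_coeff, mul_coeff_zero, coeff_X_zero, zero_mul, zero_add,
        coeff_C_zero] at hc
      exact hc
    obtain ⟨c, i, hc, hp⟩ := poly_monomial k N hN ((psi k N u).coeff 0).natDegree
      ((psi k N u).coeff 0) ((psi k N w).coeff 0) le_rfl hpne hγ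
    refine ⟨Units.mk0 c hc, i, ?_⟩
    have hu2 : u = chi k N (psi k N u) := (chi_psi k N hN u).symm
    rw [hu2, hup, hp, ← Polynomial.smul_C, map_smul]
    have h6 := chi_mono k N i 0
    simp only [pow_zero, mul_one] at h6
    rw [h6]
    rfl
  · rintro ⟨l, i, rfl⟩
    ext t
    simp only [Set.mem_range]
    constructor
    · rintro ⟨a, rfl⟩
      obtain ⟨b, hb⟩ := swap_left_pow k N hN i a
      exact ⟨b, by rw [mul_smul_comm, ← hb, smul_mul_assoc]⟩
    · rintro ⟨a, rfl⟩
      obtain ⟨b, hb⟩ := swap_right_pow k N hN i a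
      exact ⟨b, by rw [smul_mul_assoc, ← hb, mul_smul_comm]⟩
end
end

section
/- For each f ∈ k[x] and λ ∈ k^× there is a unique algebra automorphism φ_{f,λ} of A_N = k⟨x,y⟩/(yx - xy - x^N) with φ_{f,λ}(x) = λx and φ_{f,λ}(y) = λ^{N-1}y + f; moreover φ_{f,λ} ∘ φ_{g,μ} = φ_{μ^{N-1} f + g(λ·), λμ}, i.e. the map (f,λ) ↦ φ_{f,λ} is a group homomorphism from the group k[x] ⋈ k^× (with product (f,λ)·(g,μ) = (μ^{N-1}f + g∘(λ·), λμ)) into Aut(A_N). -/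
set_option maxRecDepth 4000


noncomputable section

/-- `φ` is the automorphism `φ_{f,λ}` of `A_N`: `x ↦ λx`, `y ↦ λ^{N-1} y + f(x)`. -/
def IsPhi (k : Type*) [Field k] (N : ℕ) (f : Polynomial k) (l : kˣ)
    (φ : AN k N ≃ₐ[k] AN k N) : Prop :=
  φ (Ax k N) = (l : k) • Ax k N ∧
  φ (Ay k N) = ((l : k)) ^ (N - 1) • Ay k N + Polynomial.aeval (Ax k N) f

namespace PhiAux

open Polynomial

variable {k : Type*} [Field k] {N : ℕ}

lemma rel (k : Type*) [Field k] (N : ℕ) :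
    Ay k N * Ax k N = Ax k N * Ay k N + Ax k N ^ N := by
  simpa [Ax, Ay, map_mul, map_add, map_pow] using
    RingQuot.mkAlgHom_rel k (AnRel.comm (k := k) (N := N))

lemma x_comm_aeval (f : Polynomial k) :
    Ax k N * Polynomial.aeval (Ax k N) f = Polynomial.aeval (Ax k N) f * Ax k N := by
  have h : Polynomial.aeval (Ax k N) (Polynomial.X * f) =
      Polynomial.aeval (Ax k N) (f * Polynomial.X) := by rw [mul_comm]
  simpa [map_mul] using h

/-- The images of the generators under `φ_{f,l}`. -/
def genMap (N : ℕ) (f : Polynomial k) (l : k) : Fin 2 → AN k N :=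
  ![l • Ax k N, l ^ (N - 1) • Ay k N + Polynomial.aeval (Ax k N) f]

lemma relmap (hN : 1 ≤ N) (f : Polynomial k) (l : k) :
    ∀ ⦃a b⦄, AnRel k N a b →
      (FreeAlgebra.lift k (genMap N f l)) a = (FreeAlgebra.lift k (genMap N f l)) b := by
  rintro _ _ ⟨⟩
  have hNe : N - 1 + 1 = N := by omega
  simp only [map_mul, map_add, map_pow, FreeAlgebra.lift_ι_apply, genMap,
    Matrix.cons_val_zero, Matrix.cons_val_one, Matrix.head_cons]
  simp only [add_mul, mul_add, smul_mul_assoc, mul_smul_comm, smul_smul, _root_.smul_pow]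
  rw [rel k N, x_comm_aeval]
  have hl : l * l ^ (N - 1) = l ^ N := by rw [mul_comm, ← pow_succ, hNe]
  have hl' : l ^ (N - 1) * l = l ^ N := by rw [← pow_succ, hNe]
  simp only [smul_add, smul_smul, hl, hl']
  abel

/-- The algebra endomorphism `φ_{f,l}` of `A_N`. -/
def toHom (hN : 1 ≤ N) (f : Polynomial k) (l : k) : AN k N →ₐ[k] AN k N :=
  RingQuot.liftAlgHom k ⟨FreeAlgebra.lift k (genMap N f l), relmap hN f l⟩

@[simp] lemma toHom_x (hN : 1 ≤ N) (f : Polynomial k) (l : k) :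
    toHom hN f l (Ax k N) = l • Ax k N := by
  simp [toHom, Ax, RingQuot.liftAlgHom_mkAlgHom_apply, genMap]

@[simp] lemma toHom_y (hN : 1 ≤ N) (f : Polynomial k) (l : k) :
    toHom hN f l (Ay k N) = l ^ (N - 1) • Ay k N + Polynomial.aeval (Ax k N) f := by
  simp [toHom, Ay, RingQuot.liftAlgHom_mkAlgHom_apply, genMap]

lemma hom_ext {φ ψ : AN k N →ₐ[k] AN k N} (hx : φ (Ax k N) = ψ (Ax k N))
    (hy : φ (Ay k N) = ψ (Ay k N)) : φ = ψ := by
  have h1 : φ.comp (RingQuot.mkAlgHom k (AnRel k N)) =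
      ψ.comp (RingQuot.mkAlgHom k (AnRel k N)) := by
    apply FreeAlgebra.hom_ext
    funext i
    fin_cases i
    · exact hx
    · exact hy
  rw [RingQuot.eq_liftAlgHom_comp_mkAlgHom k φ, RingQuot.eq_liftAlgHom_comp_mkAlgHom k ψ]
  exact congrArg _ (Subtype.ext h1)

lemma aeval_smul_x (g : Polynomial k) (l : k) :
    Polynomial.aeval (l • Ax k N) g =
      Polynomial.aeval (Ax k N) (g.comp (Polynomial.C l * Polynomial.X)) := by
  rw [Polynomial.aeval_comp]
  simp [Algebra.smul_def]

lemma toHom_comp (hN : 1 ≤ N) (f g : Polynomial k) (l m : k) :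
    (toHom hN f l).comp (toHom hN g m) =
      toHom hN (m ^ (N - 1) • f + g.comp (Polynomial.C l * Polynomial.X)) (l * m) := by
  apply hom_ext
  · simp only [AlgHom.coe_comp, Function.comp_apply, toHom_x, map_smul, smul_smul]
    rw [mul_comm]
  · simp only [AlgHom.coe_comp, Function.comp_apply, toHom_y, toHom_x, map_add, map_smul]
    rw [← Polynomial.aeval_algHom_apply, toHom_x, aeval_smul_x]
    simp only [map_add, map_smul, smul_add, smul_smul, mul_pow]
    rw [mul_comm (m ^ (N - 1)) (l ^ (N - 1)), add_assoc]

lemma toHom_id (hN : 1 ≤ N) : toHom (k := k) hN 0 1 = AlgHom.id k (AN k N) := by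
  apply hom_ext <;> simp

/-- The algebra automorphism `φ_{f,l}` of `A_N`. -/
def toEquiv (hN : 1 ≤ N) (f : Polynomial k) (l : kˣ) : AN k N ≃ₐ[k] AN k N :=
  AlgEquiv.ofAlgHom (toHom hN f (l : k))
    (toHom hN (-((l : k)⁻¹ ^ (N - 1) •
      f.comp (Polynomial.C (l : k)⁻¹ * Polynomial.X))) (l : k)⁻¹)
    (by
      rw [toHom_comp]
      have h1 : ((l : k) * (l : k)⁻¹) = 1 := by
        field_simp
      have h2 : ((l : k)⁻¹ ^ (N - 1) • f +
          (-((l : k)⁻¹ ^ (N - 1) •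
            f.comp (Polynomial.C (l : k)⁻¹ * Polynomial.X))).comp
            (Polynomial.C (l : k) * Polynomial.X)) = 0 := by
        rw [neg_comp, Polynomial.smul_comp, Polynomial.comp_assoc]
        simp only [Polynomial.mul_comp, Polynomial.C_comp, Polynomial.X_comp]
        rw [show Polynomial.C (l : k)⁻¹ * (Polynomial.C (l : k) * Polynomial.X) =
          Polynomial.X by rw [← mul_assoc, ← Polynomial.C_mul,
            inv_mul_cancel₀ (Units.ne_zero l), Polynomial.C_1, one_mul]]
        simp
      rw [h2, h1, toHom_id])
    (by
      rw [toHom_comp]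
      have h1 : ((l : k)⁻¹ * (l : k)) = 1 := by field_simp
      have h2 : ((l : k) ^ (N - 1) • (-((l : k)⁻¹ ^ (N - 1) •
            f.comp (Polynomial.C (l : k)⁻¹ * Polynomial.X))) +
          f.comp (Polynomial.C (l : k)⁻¹ * Polynomial.X)) = 0 := by
        rw [smul_neg, smul_smul, ← mul_pow, mul_inv_cancel₀ (Units.ne_zero l),
          one_pow, one_smul, neg_add_cancel]
      rw [h2, h1, toHom_id])

lemma isPhi_toEquiv (hN : 1 ≤ N) (f : Polynomial k) (l : kˣ) :
    IsPhi k N f l (toEquiv hN f l) :=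
  ⟨by simp [toEquiv], by simp [toEquiv]⟩

end PhiAux

/-- For each `f ∈ k[x]` and `λ ∈ kˣ` there is a unique automorphism `φ_{f,λ}` of `A_N`
with `φ(x) = λx`, `φ(y) = λ^{N-1}y + f(x)`; moreover `(f,λ) ↦ φ_{f,λ}` is multiplicative:
`φ_{f,λ} ∘ φ_{g,μ} = φ_{μ^{N-1}f + g(λ·), λμ}`. -/
theorem phi_automorphisms (k : Type*) [Field k] [CharZero k] (N : ℕ) (hN : 1 ≤ N) :
    (∀ (f : Polynomial k) (l : kˣ), ∃! φ : AN k N ≃ₐ[k] AN k N, IsPhi k N f l φ) ∧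
    (∀ (f g : Polynomial k) (l m : kˣ) (φ ψ : AN k N ≃ₐ[k] AN k N),
      IsPhi k N f l φ → IsPhi k N g m ψ →
      IsPhi k N (((m : k)) ^ (N - 1) • f + g.comp (Polynomial.C (l : k) * Polynomial.X))
        (l * m) (ψ.trans φ)) := by
  constructor
  · intro f l
    refine ⟨PhiAux.toEquiv hN f l, PhiAux.isPhi_toEquiv hN f l, ?_⟩
    rintro φ' ⟨hx, hy⟩
    have h : (φ' : AN k N →ₐ[k] AN k N) = (PhiAux.toEquiv hN f l : AN k N →ₐ[k] AN k N) := by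
      apply PhiAux.hom_ext
      · rw [show ((φ' : AN k N →ₐ[k] AN k N) (Ax k N)) = φ' (Ax k N) from rfl, hx,
          show ((PhiAux.toEquiv hN f l : AN k N →ₐ[k] AN k N) (Ax k N)) =
            PhiAux.toEquiv hN f l (Ax k N) from rfl, (PhiAux.isPhi_toEquiv hN f l).1]
      · rw [show ((φ' : AN k N →ₐ[k] AN k N) (Ay k N)) = φ' (Ay k N) from rfl, hy,
          show ((PhiAux.toEquiv hN f l : AN k N →ₐ[k] AN k N) (Ay k N)) =
            PhiAux.toEquiv hN f l (Ay k N) from rfl, (PhiAux.isPhi_toEquiv hN f l).2]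
    exact AlgEquiv.ext fun a => AlgHom.congr_fun h a
  · rintro f g l m φ ψ ⟨hφx, hφy⟩ ⟨hψx, hψy⟩
    constructor
    · simp only [AlgEquiv.trans_apply, hψx, map_smul, hφx, smul_smul, Units.val_mul]
      rw [mul_comm]
    · simp only [AlgEquiv.trans_apply, hψy, map_add, map_smul, hφy]
      rw [← Polynomial.aeval_algHom_apply, hφx, PhiAux.aeval_smul_x]
      simp only [Units.val_mul, mul_pow, map_add, map_smul, smul_add, smul_smul]
      rw [mul_comm ((m : k) ^ (N - 1)) ((l : k) ^ (N - 1)), add_assoc]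
end
end

section
/- For every g ∈ k[x] there is a unique derivation d_g of A_N = k⟨x,y⟩/(yx - xy - x^N) with d_g(x) = 0 and d_g(y) = g(x); it is locally nilpotent; it is inner if and only if g ∈ x^N k[x]; and for all t ∈ k, exp(t·d_g) = φ_{tg,1}. -/
noncomputable section

/-- A `k`-linear map is a derivation if it satisfies the Leibniz rule. -/
def IsDerivation {k : Type*} [Field k] {N : ℕ} (d : AN k N →ₗ[k] AN k N) : Prop :=
  ∀ a b : AN k N, d (a * b) = d a * b + a * d b

namespace DGAux

open Polynomial Finset

variable {k : Type*} [Field k] {N : ℕ}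

/-- Extensionality for algebra maps out of `A_N`. -/
theorem algHom_ext {B : Type*} [Semiring B] [Algebra k B] {f g : AN k N →ₐ[k] B}
    (hx : f (Ax k N) = g (Ax k N)) (hy : f (Ay k N) = g (Ay k N)) : f = g := by
  have h : f.comp (RingQuot.mkAlgHom k (AnRel k N)) =
      g.comp (RingQuot.mkAlgHom k (AnRel k N)) := by
    apply FreeAlgebra.hom_ext
    funext i
    fin_cases i
    · exact hx
    · exact hy
  apply DFunLike.ext
  intro a
  obtain ⟨a, rfl⟩ := RingQuot.mkAlgHom_surjective k (AnRel k N) a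
  exact DFunLike.congr_fun h a

/-- Induction principle for `A_N`. -/
theorem an_induction {p : AN k N → Prop}
    (halg : ∀ r : k, p (algebraMap k (AN k N) r)) (hx : p (Ax k N)) (hy : p (Ay k N))
    (hadd : ∀ a b, p a → p b → p (a + b)) (hmul : ∀ a b, p a → p b → p (a * b)) :
    ∀ a, p a := by
  intro a
  obtain ⟨a, rfl⟩ := RingQuot.mkAlgHom_surjective k (AnRel k N) a
  induction a using FreeAlgebra.induction with
  | grade0 r => rw [AlgHom.commutes]; exact halg r
  | grade1 i =>
      fin_cases i
      · exact hx
      · exact hy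
  | mul a b ha hb => rw [map_mul]; exact hmul _ _ ha hb
  | add a b ha hb => rw [map_add]; exact hadd _ _ ha hb

theorem rel_yx : Ay k N * Ax k N = Ax k N * Ay k N + Ax k N ^ N := by
  rw [Ax, Ay, ← map_mul, ← map_mul, ← map_pow, ← map_add]
  exact RingQuot.mkAlgHom_rel k AnRel.comm

theorem comm_y_pow (m : ℕ) :
    Ay k N * Ax k N ^ (m + 1) = Ax k N ^ (m + 1) * Ay k N + (m + 1) • Ax k N ^ (m + N) := by
  induction m with
  | zero => simpa using rel_yx
  | succ m ih =>
      have : Ay k N * Ax k N ^ (m + 2) = (Ay k N * Ax k N ^ (m + 1)) * Ax k N := by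
        rw [mul_assoc, ← pow_succ]
      rw [this, ih, add_mul, smul_mul_assoc, mul_assoc, rel_yx, mul_add,
        ← mul_assoc, ← pow_succ, ← pow_add, ← pow_succ]
      have h1 : m + N + 1 = m + 1 + N := by ring
      have h2 : m + 1 + N = m + 2 + N - 1 := by omega
      rw [h1, succ_nsmul (Ax k N ^ (m + 1 + N)) (m + 1)]
      abel

theorem comm_y_aeval (p : Polynomial k) :
    Ay k N * aeval (Ax k N) p =
      aeval (Ax k N) p * Ay k N + Ax k N ^ N * aeval (Ax k N) (derivative p) := by
  induction p using Polynomial.induction_on' with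
  | add p q hp hq =>
      rw [map_add, map_add, mul_add, add_mul, hp, hq, map_add, mul_add]
      abel
  | monomial n a =>
      rw [aeval_monomial, derivative_monomial]
      cases n with
      | zero => simp [Algebra.commutes]
      | succ n =>
          rw [aeval_monomial]
          have hc : (algebraMap k (AN k N)) a * Ax k N ^ (n + 1) =
              a • Ax k N ^ (n + 1) := (Algebra.smul_def a _).symm
          rw [hc, mul_smul_comm, comm_y_pow, smul_add, smul_mul_assoc]
          have key : ∀ (c : k) (i j : ℕ), Ax k N ^ i * ((algebraMap k (AN k N)) c * Ax k N ^ j)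
              = c • Ax k N ^ (i + j) := by
            intro c i j
            rw [← mul_assoc, ← Algebra.commutes c, mul_assoc, ← pow_add, Algebra.smul_def]
          congr 1
          rw [Nat.add_sub_cancel, key, ← Nat.cast_smul_eq_nsmul k (n + 1) (Ax k N ^ (n + N)),
            smul_smul, add_comm N n]

theorem d_one {d : AN k N →ₗ[k] AN k N} (hd : IsDerivation d) : d 1 = 0 := by
  have := hd 1 1
  rw [mul_one, one_mul, mul_one] at this
  -- d 1 = d 1 + d 1
  have h2 : d 1 + d 1 = d 1 + 0 := by rw [add_zero]; exact this.symm
  exact (add_left_cancel h2)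

theorem d_algebraMap {d : AN k N →ₗ[k] AN k N} (hd : IsDerivation d) (r : k) :
    d (algebraMap k (AN k N) r) = 0 := by
  rw [Algebra.algebraMap_eq_smul_one, map_smul, d_one hd, smul_zero]

theorem d_pow_x {d : AN k N →ₗ[k] AN k N} (hd : IsDerivation d) (hx : d (Ax k N) = 0) :
    ∀ n : ℕ, d (Ax k N ^ n) = 0 := by
  intro n
  induction n with
  | zero => rw [pow_zero]; exact d_one hd
  | succ n ih => rw [pow_succ, hd, ih, hx, zero_mul, mul_zero, add_zero]

theorem d_aeval_x {d : AN k N →ₗ[k] AN k N} (hd : IsDerivation d) (hx : d (Ax k N) = 0)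
    (p : Polynomial k) : d (aeval (Ax k N) p) = 0 := by
  induction p using Polynomial.induction_on' with
  | add p q hp hq => rw [map_add, map_add, hp, hq, add_zero]
  | monomial n a =>
      rw [aeval_monomial, ← Algebra.smul_def, map_smul, d_pow_x hd hx, smul_zero]

/-- Two derivations agreeing on the generators agree. -/
theorem derivation_ext {d₁ d₂ : AN k N →ₗ[k] AN k N} (h₁ : IsDerivation d₁)
    (h₂ : IsDerivation d₂) (hx : d₁ (Ax k N) = d₂ (Ax k N)) (hy : d₁ (Ay k N) = d₂ (Ay k N)) :
    d₁ = d₂ := by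
  apply LinearMap.ext
  apply an_induction
  · intro r; rw [d_algebraMap h₁, d_algebraMap h₂]
  · exact hx
  · exact hy
  · intro a b ha hb; rw [map_add, map_add, ha, hb]
  · intro a b ha hb; rw [h₁, h₂, ha, hb]

theorem aeval_comm_Ax (p : Polynomial k) :
    aeval (Ax k N) p * Ax k N = Ax k N * aeval (Ax k N) p := by
  have h1 : aeval (Ax k N) p * Ax k N = aeval (Ax k N) (p * X) := by
    rw [map_mul, aeval_X]
  have h2 : Ax k N * aeval (Ax k N) p = aeval (Ax k N) (X * p) := by
    rw [map_mul, aeval_X]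
  rw [h1, h2, mul_comm p X]

/-- Antiderivatives exist in characteristic zero. -/
theorem exists_antideriv [CharZero k] (h : Polynomial k) :
    ∃ H : Polynomial k, derivative H = h := by
  induction h using Polynomial.induction_on' with
  | add p q hp hq =>
      obtain ⟨P, hP⟩ := hp; obtain ⟨Q, hQ⟩ := hq
      exact ⟨P + Q, by rw [map_add, hP, hQ]⟩
  | monomial n a =>
      refine ⟨Polynomial.monomial (n + 1) (a / (n + 1)), ?_⟩
      rw [derivative_monomial, Nat.add_sub_cancel]
      have hne : ((n : k) + 1) ≠ 0 := Nat.cast_add_one_ne_zero n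
      congr 1
      push_cast
      exact div_mul_cancel₀ a hne

section Dg

variable (k : Type*) [Field k] (N : ℕ) (g : Polynomial k)

open TrivSqZeroExt

/-- The homomorphism `A_N → A_N ⊕ ε A_N` encoding `d_g`. -/
def DgHom : AN k N →ₐ[k] TrivSqZeroExt (AN k N) (AN k N) :=
  RingQuot.liftAlgHom k ⟨FreeAlgebra.lift k
      ![TrivSqZeroExt.inl (Ax k N),
        TrivSqZeroExt.inl (Ay k N) + TrivSqZeroExt.inr (aeval (Ax k N) g)], by
    rintro _ _ ⟨⟩
    simp only [map_mul, map_add, map_pow, FreeAlgebra.lift_ι_apply, Matrix.cons_val_zero,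
      Matrix.cons_val_one, Matrix.head_cons]
    rw [add_mul, mul_add, inl_mul_inl, inl_mul_inl, inl_mul_inr, inr_mul_inl, inl_pow, rel_yx,
      inl_add]
    have h1 : (MulOpposite.op (Ax k N) • aeval (Ax k N) g : AN k N) = Ax k N • aeval (Ax k N) g := by
      show aeval (Ax k N) g * Ax k N = Ax k N * aeval (Ax k N) g
      exact aeval_comm_Ax g
    rw [h1]
    abel⟩

theorem DgHom_x : DgHom k N g (Ax k N) = TrivSqZeroExt.inl (Ax k N) := by
  rw [Ax, DgHom, RingQuot.liftAlgHom_mkAlgHom_apply, FreeAlgebra.lift_ι_apply]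
  rfl

theorem DgHom_y : DgHom k N g (Ay k N)
    = TrivSqZeroExt.inl (Ay k N) + TrivSqZeroExt.inr (aeval (Ax k N) g) := by
  rw [Ay, DgHom, RingQuot.liftAlgHom_mkAlgHom_apply, FreeAlgebra.lift_ι_apply]
  rfl

theorem DgHom_fst (a : AN k N) : (DgHom k N g a).fst = a := by
  have h : (TrivSqZeroExt.fstHom k (AN k N) (AN k N)).comp (DgHom k N g)
      = AlgHom.id k (AN k N) := by
    apply algHom_ext
    · show ((DgHom k N g) (Ax k N)).fst = Ax k N
      rw [DgHom_x]; rfl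
    · show ((DgHom k N g) (Ay k N)).fst = Ay k N
      rw [DgHom_y]
      show (Ay k N) + 0 = Ay k N
      rw [add_zero]
  exact DFunLike.congr_fun h a

/-- The derivation `d_g`. -/
def Dg : AN k N →ₗ[k] AN k N where
  toFun a := (DgHom k N g a).snd
  map_add' a b := by
    show ((DgHom k N g) (a + b)).snd = ((DgHom k N g) a).snd + ((DgHom k N g) b).snd
    rw [map_add, TrivSqZeroExt.snd_add]
  map_smul' c a := by
    show ((DgHom k N g) (c • a)).snd = c • ((DgHom k N g) a).snd
    rw [map_smul, TrivSqZeroExt.snd_smul]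

theorem Dg_isDerivation : IsDerivation (Dg k N g) := by
  intro a b
  show ((DgHom k N g) (a * b)).snd = ((DgHom k N g) a).snd * b + a * ((DgHom k N g) b).snd
  rw [map_mul, TrivSqZeroExt.snd_mul, DgHom_fst, DgHom_fst, smul_eq_mul,
    op_smul_eq_mul]
  exact add_comm _ _

theorem Dg_x : Dg k N g (Ax k N) = 0 := by
  show ((DgHom k N g) (Ax k N)).snd = 0
  rw [DgHom_x]; rfl

theorem Dg_y : Dg k N g (Ay k N) = aeval (Ax k N) g := by
  show ((DgHom k N g) (Ay k N)).snd = _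
  rw [DgHom_y]
  show 0 + aeval (Ax k N) g = _
  rw [zero_add]

end Dg

section Rep

variable (k : Type*) [Field k] (N : ℕ)

/-- Multiplication by `X` on `k[X]`. -/
def mX : Module.End k (Polynomial k) := Algebra.lmul k (Polynomial k) X

/-- The operator `X^N d/dX` on `k[X]`. -/
def delta : Module.End k (Polynomial k) :=
  (Algebra.lmul k (Polynomial k) (X ^ N)) ∘ₗ (Polynomial.derivative : _ →ₗ[k] _)

theorem delta_apply (p : Polynomial k) : delta k N p = X ^ N * derivative p := rfl

theorem mX_apply' (p : Polynomial k) : mX k p = X * p := by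
  rw [mX, Algebra.coe_lmul_eq_mul, LinearMap.mul_apply']

/-- The representation of `A_N` on `k[X]`. -/
def rho : AN k N →ₐ[k] Module.End k (Polynomial k) :=
  RingQuot.liftAlgHom k ⟨FreeAlgebra.lift k ![mX k, delta k N], by
    rintro _ _ ⟨⟩
    simp only [map_mul, map_add, map_pow, FreeAlgebra.lift_ι_apply, Matrix.cons_val_zero,
      Matrix.cons_val_one, Matrix.head_cons]
    apply LinearMap.ext
    intro p
    rw [LinearMap.add_apply, Module.End.mul_apply, Module.End.mul_apply, mX_apply', mX_apply']
    have hpow : ((mX k) ^ N : Module.End k (Polynomial k)) = Algebra.lmul k (Polynomial k) (X ^ N) := by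
      rw [mX, ← map_pow]
    rw [hpow, delta_apply, delta_apply, derivative_mul, derivative_X, Algebra.coe_lmul_eq_mul,
      LinearMap.mul_apply']
    ring⟩

theorem rho_x : rho k N (Ax k N) = mX k := by
  rw [Ax, rho, RingQuot.liftAlgHom_mkAlgHom_apply, FreeAlgebra.lift_ι_apply]
  rfl

theorem rho_y : rho k N (Ay k N) = delta k N := by
  rw [Ay, rho, RingQuot.liftAlgHom_mkAlgHom_apply, FreeAlgebra.lift_ι_apply]
  rfl

theorem rho_aeval (p : Polynomial k) :
    rho k N (aeval (Ax k N) p) = Algebra.lmul k (Polynomial k) p := by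
  rw [← Polynomial.aeval_algHom_apply, rho_x, mX,
    Polynomial.aeval_algHom_apply (Algebra.lmul k (Polynomial k)) X p, aeval_X_left_apply]

/-- If a derivation sending `x ↦ 0`, `y ↦ g(x)` is inner, then `g ∈ x^N k[x]`. -/
theorem inner_forward {g : Polynomial k} (d : AN k N →ₗ[k] AN k N)
    (hy : d (Ay k N) = aeval (Ax k N) g)
    (u : AN k N) (hu : ∀ a, d a = u * a - a * u) : ∃ h : Polynomial k, g = X ^ N * h := by
  refine ⟨-(derivative (rho k N u 1)), ?_⟩
  have h1 : rho k N (aeval (Ax k N) g) = rho k N u * rho k N (Ay k N)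
      - rho k N (Ay k N) * rho k N u := by
    rw [← hy, hu (Ay k N), map_sub, map_mul, map_mul]
  rw [rho_aeval, rho_y] at h1
  have h2 := DFunLike.congr_fun h1 (1 : Polynomial k)
  have h3 : (Algebra.lmul k (Polynomial k) g) 1 = g := mul_one g
  rw [h3, LinearMap.sub_apply, Module.End.mul_apply, Module.End.mul_apply, delta_apply,
    derivative_one, mul_zero, map_zero, delta_apply, zero_sub] at h2
  rw [h2]
  ring

end Rep

section Inner

variable {k : Type*} [Field k] {N : ℕ}

/-- The inner derivation `ad u`. -/
def adU (u : AN k N) : AN k N →ₗ[k] AN k N where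
  toFun a := u * a - a * u
  map_add' a b := by
    show u * (a + b) - (a + b) * u = (u * a - a * u) + (u * b - b * u)
    rw [mul_add, add_mul]; abel
  map_smul' c a := by
    simp only [RingHom.id_apply, smul_sub, mul_smul_comm, smul_mul_assoc]

theorem adU_isDerivation (u : AN k N) : IsDerivation (adU u) := by
  intro a b
  show u * (a * b) - (a * b) * u = (u * a - a * u) * b + a * (u * b - b * u)
  rw [sub_mul, mul_sub]
  simp only [← mul_assoc]
  abel

/-- If `g = X^N h`, the derivation is inner. -/
theorem inner_backward [CharZero k] {g : Polynomial k} (d : AN k N →ₗ[k] AN k N)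
    (hd : IsDerivation d) (hx : d (Ax k N) = 0) (hy : d (Ay k N) = aeval (Ax k N) g)
    (h : Polynomial k) (hg : g = X ^ N * h) : ∃ u : AN k N, ∀ a, d a = u * a - a * u := by
  obtain ⟨H, hH⟩ := exists_antideriv h
  refine ⟨aeval (Ax k N) (-H), fun a => ?_⟩
  have key : d = adU (aeval (Ax k N) (-H)) := by
    apply derivation_ext hd (adU_isDerivation _)
    · rw [hx]
      show (0 : AN k N)
        = aeval (Ax k N) (-H) * Ax k N - Ax k N * aeval (Ax k N) (-H)
      rw [aeval_comm_Ax (-H), sub_self]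
    · rw [hy]
      show aeval (Ax k N) g
        = aeval (Ax k N) (-H) * Ay k N - Ay k N * aeval (Ax k N) (-H)
      have c1 := comm_y_aeval (N := N) (-H : Polynomial k)
      have c2 : derivative (-H) = -h := by rw [map_neg, hH]
      have c3 : (Ax k N) ^ N * aeval (Ax k N) (-h) = aeval (Ax k N) (X ^ N * -h) := by
        rw [map_mul, map_pow, aeval_X]
      have c7 : (g + X ^ N * -h : Polynomial k) = 0 := by rw [hg]; ring
      rw [eq_sub_iff_add_eq, c1, c2, c3, add_left_comm, ← map_add, c7, map_zero, add_zero]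
  rw [key]; rfl

end Inner

section Phi

variable (k : Type*) [Field k] (N : ℕ)

/-- The algebra endomorphism `x ↦ x`, `y ↦ y + f(x)`. -/
def phiHom (f : Polynomial k) : AN k N →ₐ[k] AN k N :=
  RingQuot.liftAlgHom k ⟨FreeAlgebra.lift k ![Ax k N, Ay k N + aeval (Ax k N) f], by
    rintro _ _ ⟨⟩
    simp only [map_mul, map_add, map_pow, FreeAlgebra.lift_ι_apply, Matrix.cons_val_zero,
      Matrix.cons_val_one, Matrix.head_cons]
    rw [add_mul, rel_yx, mul_add, aeval_comm_Ax]
    abel⟩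

theorem phiHom_x (f : Polynomial k) : phiHom k N f (Ax k N) = Ax k N := by
  rw [Ax, phiHom, RingQuot.liftAlgHom_mkAlgHom_apply, FreeAlgebra.lift_ι_apply]
  rfl

theorem phiHom_y (f : Polynomial k) :
    phiHom k N f (Ay k N) = Ay k N + aeval (Ax k N) f := by
  rw [Ay, phiHom, RingQuot.liftAlgHom_mkAlgHom_apply, FreeAlgebra.lift_ι_apply]
  rfl

theorem phiHom_aeval (f p : Polynomial k) :
    phiHom k N f (aeval (Ax k N) p) = aeval (Ax k N) p := by
  rw [← Polynomial.aeval_algHom_apply, phiHom_x]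

theorem phiHom_zero : phiHom k N 0 = AlgHom.id k (AN k N) := by
  apply algHom_ext
  · rw [phiHom_x]; rfl
  · rw [phiHom_y, map_zero, add_zero]; rfl

theorem phiHom_comp (f₁ f₂ : Polynomial k) :
    (phiHom k N f₁).comp (phiHom k N f₂) = phiHom k N (f₁ + f₂) := by
  apply algHom_ext
  · show phiHom k N f₁ (phiHom k N f₂ (Ax k N)) = _
    rw [phiHom_x, phiHom_x, phiHom_x]
  · show phiHom k N f₁ (phiHom k N f₂ (Ay k N)) = _
    rw [phiHom_y, map_add, phiHom_y, phiHom_aeval, phiHom_y, map_add, add_assoc]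

/-- The automorphism `x ↦ x`, `y ↦ y + f(x)`. -/
def phiEquiv (f : Polynomial k) : AN k N ≃ₐ[k] AN k N :=
  AlgEquiv.ofAlgHom (phiHom k N f) (phiHom k N (-f))
    (by rw [phiHom_comp, add_neg_cancel, phiHom_zero])
    (by rw [phiHom_comp, neg_add_cancel, phiHom_zero])

end Phi

section Exp

variable {k : Type*} [Field k] {N : ℕ}

/-- Iterated Leibniz rule. -/
theorem iter_leibniz (E : AN k N →ₗ[k] AN k N) (hE : IsDerivation E) (n : ℕ) (a b : AN k N) :
    (E ^ n) (a * b)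
      = ∑ i ∈ Finset.range (n + 1), n.choose i • ((E ^ i) a * (E ^ (n - i)) b) := by
  induction n with
  | zero => simp
  | succ n ih =>
      have h1 : (E ^ (n + 1)) (a * b) = E ((E ^ n) (a * b)) := by
        rw [pow_succ']; rfl
      rw [h1, ih, map_sum]
      have h2 : ∀ i ∈ Finset.range (n + 1),
          E (n.choose i • ((E ^ i) a * (E ^ (n - i)) b))
            = n.choose i • ((E ^ (i + 1)) a * (E ^ (n + 1 - (i + 1))) b)
              + n.choose i • ((E ^ i) a * (E ^ (n + 1 - i)) b) := by
        intro i hi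
        rw [Finset.mem_range, Nat.lt_succ_iff] at hi
        rw [map_nsmul, hE, smul_add]
        congr 2
        · rw [Nat.add_sub_add_right]
          congr 1
          rw [pow_succ']
          rfl
        · have : n + 1 - i = (n - i) + 1 := by omega
          rw [this, pow_succ']
          rfl
      rw [Finset.sum_congr rfl h2, Finset.sum_add_distrib]
      -- now : ∑ C(n,i) • t(i+1) + ∑ C(n,i) • t(i)  = ∑_{range (n+2)} C(n+1,i) • t i
      set t : ℕ → AN k N := fun i => (E ^ i) a * (E ^ (n + 1 - i)) b with ht
      have h3 : ∑ i ∈ Finset.range (n + 2), n.choose i • t i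
          = ∑ i ∈ Finset.range (n + 1), n.choose i • t i := by
        rw [Finset.sum_range_succ, Nat.choose_succ_self, zero_smul, add_zero]
      have h4 : ∑ i ∈ Finset.range (n + 2), n.choose i • t i
          = (∑ i ∈ Finset.range (n + 1), n.choose (i + 1) • t (i + 1)) + n.choose 0 • t 0 := by
        rw [Finset.sum_range_succ']
      have h5 : ∑ i ∈ Finset.range (n + 2), (n + 1).choose i • t i
          = (∑ i ∈ Finset.range (n + 1), (n + 1).choose (i + 1) • t (i + 1))
            + (n + 1).choose 0 • t 0 := by
        rw [Finset.sum_range_succ']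
      rw [h5]
      have h6 : ∀ i ∈ Finset.range (n + 1), (n + 1).choose (i + 1) • t (i + 1)
          = n.choose i • t (i + 1) + n.choose (i + 1) • t (i + 1) := by
        intro i _
        rw [Nat.choose_succ_succ, add_smul]
      rw [Finset.sum_congr rfl h6, Finset.sum_add_distrib]
      rw [Nat.choose_zero_right]
      have h7 : ∑ i ∈ Finset.range (n + 1), n.choose (i + 1) • t (i + 1) + 1 • t 0
          = ∑ i ∈ Finset.range (n + 1), n.choose i • t i := by
        rw [← h3, h4, Nat.choose_zero_right]
      rw [add_assoc, h7]

variable [CharZero k]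

/-- Partial exponential sums. -/
def expSum (E : AN k N →ₗ[k] AN k N) (n : ℕ) (a : AN k N) : AN k N :=
  ∑ i ∈ Finset.range n, ((i.factorial : k))⁻¹ • (E ^ i) a

theorem iter_vanish (E : AN k N →ₗ[k] AN k N) {n m : ℕ} (h : n ≤ m) {a : AN k N}
    (ha : (E ^ n) a = 0) : (E ^ m) a = 0 := by
  obtain ⟨c, rfl⟩ := Nat.exists_eq_add_of_le h
  rw [add_comm n c, pow_add, Module.End.mul_apply, ha, map_zero]

theorem expSum_extend (E : AN k N →ₗ[k] AN k N) {n m : ℕ} (h : n ≤ m) {a : AN k N}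
    (ha : (E ^ n) a = 0) : expSum E m a = expSum E n a := by
  refine (Finset.sum_subset (Finset.range_subset_range.mpr h) ?_).symm
  intro i _ hin
  rw [Finset.mem_range, not_lt] at hin
  rw [iter_vanish E hin ha, smul_zero]

theorem expSum_mul {E : AN k N →ₗ[k] AN k N} (hE : IsDerivation E) {p q : ℕ} {a b : AN k N}
    (ha : (E ^ p) a = 0) (hb : (E ^ q) b = 0) :
    expSum E (p + q) (a * b) = expSum E p a * expSum E q b := by
  have hfac : ∀ j : ℕ, ((j.factorial : k)) ≠ 0 := fun j =>
    Nat.cast_ne_zero.mpr (Nat.factorial_ne_zero j)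
  set m := p + q with hm
  rw [← expSum_extend E (Nat.le_add_right p q) ha,
    ← expSum_extend E (Nat.le_add_left q p) hb]
  set D : ℕ → AN k N → AN k N := fun i c => ((i.factorial : k))⁻¹ • (E ^ i) c with hD
  have key : ∀ n : ℕ, ((n.factorial : k))⁻¹ • (E ^ n) (a * b)
      = ∑ i ∈ Finset.range (n + 1), D i a * D (n - i) b := by
    intro n
    rw [iter_leibniz E hE, Finset.smul_sum]
    apply Finset.sum_congr rfl
    intro i hi
    rw [Finset.mem_range, Nat.lt_succ_iff] at hi
    show ((n.factorial : k))⁻¹ • (n.choose i • ((E ^ i) a * (E ^ (n - i)) b)) = _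
    rw [hD]
    rw [smul_mul_smul_comm, ← Nat.cast_smul_eq_nsmul k (n.choose i), smul_smul]
    congr 1
    have hcc := Nat.choose_mul_factorial_mul_factorial hi
    have hcast : ((n.choose i : ℕ) : k) * (i.factorial : k) * ((n - i).factorial : k)
        = (n.factorial : k) := by
      rw [← Nat.cast_mul, ← Nat.cast_mul, hcc]
    field_simp [hfac]
    linear_combination hcast
  show ∑ n ∈ Finset.range m, ((n.factorial : k))⁻¹ • (E ^ n) (a * b)
      = (∑ i ∈ Finset.range m, D i a) * (∑ j ∈ Finset.range m, D j b)
  rw [Finset.sum_congr rfl (fun n _ => key n), Finset.sum_range_diag_flip m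
    (fun i j => D i a * D j b), Finset.sum_mul_sum]
  apply Finset.sum_congr rfl
  intro i hi
  rw [Finset.mem_range] at hi
  apply Finset.sum_subset (Finset.range_subset_range.mpr (Nat.sub_le m i))
  intro j _ hj
  rw [Finset.mem_range, not_lt] at hj
  by_cases hip : p ≤ i
  · have : (E ^ i) a = 0 := iter_vanish E hip ha
    rw [hD]
    show (((i.factorial : k))⁻¹ • (E ^ i) a) * _ = 0
    rw [this, smul_zero, zero_mul]
  · push_neg at hip
    have hjq : q ≤ j := by omega
    have : (E ^ j) b = 0 := iter_vanish E hjq hb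
    rw [hD]
    show _ * (((j.factorial : k))⁻¹ • (E ^ j) b) = 0
    rw [this, smul_zero, mul_zero]

theorem expSum_add (E : AN k N →ₗ[k] AN k N) (n : ℕ) (a b : AN k N) :
    expSum E n (a + b) = expSum E n a + expSum E n b := by
  unfold expSum
  rw [← Finset.sum_add_distrib]
  apply Finset.sum_congr rfl
  intro i _
  rw [map_add, smul_add]

theorem iter_mul_vanish {E : AN k N →ₗ[k] AN k N} (hE : IsDerivation E) {p q : ℕ}
    {a b : AN k N} (ha : (E ^ p) a = 0) (hb : (E ^ q) b = 0) :
    (E ^ (p + q)) (a * b) = 0 := by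
  rw [iter_leibniz E hE]
  apply Finset.sum_eq_zero
  intro i hi
  by_cases hip : p ≤ i
  · rw [iter_vanish E hip ha, zero_mul, smul_zero]
  · push_neg at hip
    have hq : q ≤ p + q - i := by omega
    rw [iter_vanish E hq hb, mul_zero, smul_zero]

end Exp

end DGAux

open DGAux Polynomial

/-- For every `g ∈ k[x]` there is a unique derivation `d_g` of `A_N` with `d_g(x) = 0`
and `d_g(y) = g(x)`; it is locally nilpotent; it is inner iff `g ∈ x^N k[x]`; and
`exp(t d_g) = φ_{tg,1}` for all `t ∈ k`. -/
theorem dg_derivation (k : Type*) [Field k] [CharZero k] (N : ℕ) (hN : 1 ≤ N)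
    (g : Polynomial k) :
    (∃! d : AN k N →ₗ[k] AN k N,
      IsDerivation d ∧ d (Ax k N) = 0 ∧ d (Ay k N) = Polynomial.aeval (Ax k N) g) ∧
    ∀ d : AN k N →ₗ[k] AN k N,
      IsDerivation d → d (Ax k N) = 0 → d (Ay k N) = Polynomial.aeval (Ax k N) g →
      (∀ a : AN k N, ∃ n : ℕ, (⇑d)^[n] a = 0) ∧
      ((∃ u : AN k N, ∀ a, d a = u * a - a * u) ↔
        (∃ h : Polynomial k, g = Polynomial.X ^ N * h)) ∧
      (∀ t : k, ∃ φ : AN k N ≃ₐ[k] AN k N,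
        φ (Ax k N) = Ax k N ∧
        φ (Ay k N) = Ay k N + t • Polynomial.aeval (Ax k N) g ∧
        ∀ a : AN k N, ∃ n : ℕ, (fun b => t • d b)^[n] a = 0 ∧
          φ a = ∑ i ∈ Finset.range n, ((i.factorial : k))⁻¹ • (fun b => t • d b)^[i] a) := by
  constructor
  · refine ⟨Dg k N g, ⟨Dg_isDerivation k N g, Dg_x k N g, Dg_y k N g⟩, ?_⟩
    rintro d ⟨hd, hdx, hdy⟩
    exact derivation_ext hd (Dg_isDerivation k N g)
      (by rw [hdx, Dg_x]) (by rw [hdy, Dg_y])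
  · intro d hd hx hy
    -- the key exponential claim
    have claim : ∀ t : k, ∀ a : AN k N, ∃ n : ℕ,
        ((t • d) ^ n) a = 0 ∧ phiEquiv k N (t • g) a = expSum (t • d) n a := by
      intro t
      set E : AN k N →ₗ[k] AN k N := t • d with hEdef
      have hE : IsDerivation E := by
        intro a b
        show t • d (a * b) = (t • d a) * b + a * (t • d b)
        rw [hd, smul_add, smul_mul_assoc, mul_smul_comm]
      have hEx : E (Ax k N) = 0 := by
        show t • d (Ax k N) = 0
        rw [hx, smul_zero]
      have hEp : ∀ p : Polynomial k, E (aeval (Ax k N) p) = 0 := by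
        intro p
        show t • d (aeval (Ax k N) p) = 0
        rw [d_aeval_x hd hx, smul_zero]
      have hEy : E (Ay k N) = t • aeval (Ax k N) g := by
        show t • d (Ay k N) = _
        rw [hy]
      have exp1 : ∀ a : AN k N, expSum E 1 a = a := by
        intro a
        show ∑ i ∈ Finset.range 1, ((i.factorial : k))⁻¹ • (E ^ i) a = a
        rw [Finset.sum_range_one]
        simp
      apply an_induction
      · intro r
        refine ⟨1, ?_, ?_⟩
        · show E (algebraMap k (AN k N) r) = 0
          show t • d (algebraMap k (AN k N) r) = 0
          rw [d_algebraMap hd, smul_zero]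
        · rw [exp1, AlgEquiv.commutes]
      · refine ⟨1, ?_, ?_⟩
        · show E (Ax k N) = 0
          exact hEx
        · rw [exp1]
          exact phiHom_x k N (t • g)
      · refine ⟨2, ?_, ?_⟩
        · show (E ^ 2) (Ay k N) = 0
          rw [pow_two, Module.End.mul_apply, hEy, map_smul, hEp, smul_zero]
        · show phiEquiv k N (t • g) (Ay k N)
            = ∑ i ∈ Finset.range 2, ((i.factorial : k))⁻¹ • (E ^ i) (Ay k N)
          rw [Finset.sum_range_succ, Finset.sum_range_one]
          have hφy : phiEquiv k N (t • g) (Ay k N) = Ay k N + aeval (Ax k N) (t • g) :=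
            phiHom_y k N (t • g)
          rw [hφy, map_smul]
          simp [hEy]
      · rintro a b ⟨n, hn0, hns⟩ ⟨m, hm0, hms⟩
        refine ⟨max n m, ?_, ?_⟩
        · rw [map_add, iter_vanish E (le_max_left n m) hn0,
            iter_vanish E (le_max_right n m) hm0, add_zero]
        · rw [map_add, hns, hms, expSum_add,
            expSum_extend E (le_max_left n m) hn0, expSum_extend E (le_max_right n m) hm0]
      · rintro a b ⟨n, hn0, hns⟩ ⟨m, hm0, hms⟩
        refine ⟨n + m, iter_mul_vanish hE hn0 hm0, ?_⟩
        rw [map_mul, hns, hms, expSum_mul hE hn0 hm0]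
    refine ⟨?_, ?_, ?_⟩
    · -- local nilpotence
      intro a
      obtain ⟨n, hn0, -⟩ := claim 1 a
      refine ⟨n, ?_⟩
      rw [← Module.End.coe_pow]
      rw [one_smul k d] at hn0
      exact hn0
    · constructor
      · rintro ⟨u, hu⟩
        exact inner_forward k N d hy u hu
      · rintro ⟨h, hh⟩
        exact inner_backward d hd hx hy h hh
    · intro t
      refine ⟨phiEquiv k N (t • g), ?_, ?_, ?_⟩
      · exact phiHom_x k N (t • g)
      · rw [show phiEquiv k N (t • g) (Ay k N) = Ay k N + aeval (Ax k N) (t • g) from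
          phiHom_y k N (t • g), map_smul]
      · intro a
        obtain ⟨n, hn0, hns⟩ := claim t a
        have hfun : (fun b => t • d b) = ⇑(t • d : AN k N →ₗ[k] AN k N) := rfl
        refine ⟨n, ?_, ?_⟩
        · rw [hfun, ← Module.End.coe_pow]
          exact hn0
        · rw [hns]
          show expSum (t • d) n a = _
          unfold expSum
          apply Finset.sum_congr rfl
          intro i _
          rw [hfun, ← Module.End.coe_pow]
end
end

section
/- In A_N = k⟨x,y⟩/(yx - xy - x^N) with N ≥ 1, one has [A_N, x] = [A_N, A_N]-span = x^N A_N; that is, the set of commutators with x spans exactly the right ideal x^N A_N, and the span of all commutators [a,b] equals x^N A_N as well. -/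
noncomputable section

namespace ANaux

variable (k : Type*) [Field k] (N : ℕ)

theorem ind {C : AN k N → Prop}
    (h0 : ∀ r : k, C (algebraMap k (AN k N) r))
    (hx : C (Ax k N)) (hy : C (Ay k N))
    (hmul : ∀ a b, C a → C b → C (a * b))
    (hadd : ∀ a b, C a → C b → C (a + b)) :
    ∀ a, C a := by
  intro a
  obtain ⟨w, rfl⟩ := RingQuot.mkAlgHom_surjective k (AnRel k N) a
  induction w with
  | grade0 r => rw [AlgHom.commutes]; exact h0 r
  | grade1 i =>
    fin_cases i
    · exact hx
    · exact hy
  | mul a b ha hb => rw [map_mul]; exact hmul _ _ ha hb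
  | add a b ha hb => rw [map_add]; exact hadd _ _ ha hb

theorem yx : Ay k N * Ax k N = Ax k N * Ay k N + Ax k N ^ N := by
  have h := RingQuot.mkAlgHom_rel k (AnRel.comm (k := k) (N := N))
  simpa only [map_mul, map_add, map_pow, Ax, Ay] using h

/-- Basis-style elements `x^i y^j`. -/
def bb (i j : ℕ) : AN k N := Ax k N ^ i * Ay k N ^ j

/-- Commutator `[y^j, x]`. -/
def cc (j : ℕ) : AN k N := Ay k N ^ j * Ax k N - Ax k N * Ay k N ^ j

variable {k N}

theorem xpow_mul_bb (i a t : ℕ) : Ax k N ^ i * bb k N a t = bb k N (i + a) t := by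
  rw [bb, bb, ← mul_assoc, ← pow_add]

theorem bb_mul_y (i j : ℕ) : bb k N i j * Ay k N = bb k N i (j + 1) := by
  rw [bb, bb, mul_assoc, ← pow_succ]

theorem y_mul_xpow (hN : 1 ≤ N) (i : ℕ) :
    Ay k N * Ax k N ^ i = Ax k N ^ i * Ay k N + (i : k) • Ax k N ^ (N - 1 + i) := by
  induction i with
  | zero => simp
  | succ i ih =>
    have e1 : N - 1 + i + 1 = N - 1 + (i + 1) := by omega
    have e2 : i + N = N - 1 + (i + 1) := by omega
    calc Ay k N * Ax k N ^ (i + 1)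
        = (Ay k N * Ax k N ^ i) * Ax k N := by rw [mul_assoc, ← pow_succ]
      _ = Ax k N ^ i * (Ay k N * Ax k N) + (i : k) • Ax k N ^ (N - 1 + i + 1) := by
          rw [ih, add_mul, smul_mul_assoc, mul_assoc, ← pow_succ]
      _ = Ax k N ^ (i + 1) * Ay k N + Ax k N ^ (i + N) + (i : k) • Ax k N ^ (N - 1 + i + 1) := by
          rw [yx, mul_add, ← mul_assoc, ← pow_succ, ← pow_add]
      _ = Ax k N ^ (i + 1) * Ay k N + ((i : k) + 1) • Ax k N ^ (N - 1 + (i + 1)) := by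
          rw [e1, e2, add_smul, one_smul]; abel
      _ = Ax k N ^ (i + 1) * Ay k N + ((i + 1 : ℕ) : k) • Ax k N ^ (N - 1 + (i + 1)) := by
          push_cast; ring_nf

theorem y_mul_bb (hN : 1 ≤ N) (i j : ℕ) :
    Ay k N * bb k N i j = bb k N i (j + 1) + (i : k) • bb k N (N - 1 + i) j := by
  rw [bb, ← mul_assoc, y_mul_xpow hN, add_mul, smul_mul_assoc, mul_assoc, ← pow_succ',
    bb, bb]

theorem cc_zero : cc k N 0 = 0 := by simp [cc]

theorem cc_succ (j : ℕ) : cc k N (j + 1) = bb k N N j + Ay k N * cc k N j := by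
  have h1 : Ay k N ^ j * Ax k N = Ax k N * Ay k N ^ j + cc k N j := by rw [cc]; abel
  rw [cc, pow_succ', mul_assoc, h1, mul_add, ← mul_assoc, yx, add_mul, bb, mul_assoc,
    ← pow_succ']
  abel


/-- Generic: a linear map sending a spanning set into `P` sends the span into `P`. -/
theorem apply_mem_of_mem_span {M : Type*} [AddCommGroup M] [Module k M]
    (f : M →ₗ[k] M) {s : Set M} {P : Submodule k M} (h : ∀ v ∈ s, f v ∈ P)
    {v : M} (hv : v ∈ Submodule.span k s) : f v ∈ P := by
  have h2 : Submodule.map f (Submodule.span k s) ≤ P := by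
    rw [Submodule.map_span]
    exact Submodule.span_le.mpr (by rintro _ ⟨u, hu, rfl⟩; exact h u hu)
  exact h2 ⟨v, hv, rfl⟩

theorem mul_mem_of_mem_span {s : Set (AN k N)} {P : Submodule k (AN k N)} (a : AN k N)
    (h : ∀ v ∈ s, a * v ∈ P) {v : AN k N} (hv : v ∈ Submodule.span k s) : a * v ∈ P :=
  apply_mem_of_mem_span (LinearMap.mulLeft k a) h hv

theorem mem_span_mul {s : Set (AN k N)} {P : Submodule k (AN k N)} (a : AN k N)
    (h : ∀ v ∈ s, v * a ∈ P) {v : AN k N} (hv : v ∈ Submodule.span k s) : v * a ∈ P :=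
  apply_mem_of_mem_span (LinearMap.mulRight k a) h hv

variable (k N)

/-- The span of the `x^i y^j`. -/
def Bspan : Submodule k (AN k N) := Submodule.span k {v | ∃ i j, v = bb k N i j}

/-- The span of `x^(N+i) y^j` : the candidate for `x^N A_N`. -/
def SS : Submodule k (AN k N) := Submodule.span k {v | ∃ i j, v = bb k N (N + i) j}

/-- Truncated pieces of `SS`. -/
def LL (m : ℕ) : Submodule k (AN k N) :=
  Submodule.span k {v | ∃ i j, j < m ∧ v = bb k N (N + i) j}

variable {k N}

theorem bb_mem_SS (i j : ℕ) : bb k N (N + i) j ∈ SS k N :=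
  Submodule.subset_span ⟨i, j, rfl⟩

theorem LL_le_SS (m : ℕ) : LL k N m ≤ SS k N :=
  Submodule.span_le.mpr (by rintro _ ⟨i, j, _, rfl⟩; exact bb_mem_SS i j)

theorem xpow_mul_mem_SS (i : ℕ) {v : AN k N} (hv : v ∈ SS k N) :
    Ax k N ^ i * v ∈ SS k N := by
  refine mul_mem_of_mem_span _ ?_ hv
  rintro _ ⟨a, t, rfl⟩
  rw [xpow_mul_bb]
  have e : i + (N + a) = N + (a + i) := by omega
  rw [e]; exact bb_mem_SS _ _

theorem xpow_mul_mem_LL (i m : ℕ) {v : AN k N} (hv : v ∈ LL k N m) :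
    Ax k N ^ i * v ∈ LL k N m := by
  refine mul_mem_of_mem_span _ ?_ hv
  rintro _ ⟨a, t, ht, rfl⟩
  rw [xpow_mul_bb]
  have e : i + (N + a) = N + (a + i) := by omega
  rw [e]; exact Submodule.subset_span ⟨a + i, t, ht, rfl⟩

theorem y_mul_mem_LL (hN : 1 ≤ N) (m : ℕ) {v : AN k N} (hv : v ∈ LL k N m) :
    Ay k N * v ∈ LL k N (m + 1) := by
  refine mul_mem_of_mem_span _ ?_ hv
  rintro _ ⟨a, t, ht, rfl⟩
  rw [y_mul_bb hN]
  have e : N - 1 + (N + a) = N + (N - 1 + a) := by omega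
  rw [e]
  exact add_mem (Submodule.subset_span ⟨a, t + 1, by omega, rfl⟩)
    (Submodule.smul_mem _ _ (Submodule.subset_span ⟨N - 1 + a, t, by omega, rfl⟩))

theorem y_mul_mem_SS (hN : 1 ≤ N) {v : AN k N} (hv : v ∈ SS k N) :
    Ay k N * v ∈ SS k N := by
  refine mul_mem_of_mem_span _ ?_ hv
  rintro _ ⟨a, t, rfl⟩
  rw [y_mul_bb hN]
  have e : N - 1 + (N + a) = N + (N - 1 + a) := by omega
  rw [e]
  exact add_mem (bb_mem_SS _ _) (Submodule.smul_mem _ _ (bb_mem_SS _ _))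

/-- The key triangularity: `[y^{j+1},x] ≡ (j+1) x^N y^j` modulo lower terms. -/
theorem creduce (hN : 1 ≤ N) (j : ℕ) :
    cc k N (j + 1) - ((j : k) + 1) • bb k N N j ∈ LL k N j := by
  induction j with
  | zero =>
    have : cc k N (0 + 1) - (((0 : ℕ) : k) + 1) • bb k N N 0 = 0 := by
      rw [cc_succ, cc_zero, mul_zero, add_zero, Nat.cast_zero, zero_add, one_smul, sub_self]
    rw [this]; exact zero_mem _
  | succ j ih =>
    have key : cc k N (j + 2) - ((j + 1 : ℕ) + 1 : k) • bb k N N (j + 1)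
        = Ay k N * (cc k N (j + 1) - ((j : k) + 1) • bb k N N j)
          + (((j : k) + 1) * (N : k)) • bb k N (N - 1 + N) j := by
      rw [cc_succ, mul_sub, mul_smul_comm, y_mul_bb hN]
      push_cast
      module
    rw [key]
    have e : N - 1 + N = N + (N - 1) := by omega
    refine add_mem (y_mul_mem_LL hN j ih) (Submodule.smul_mem _ _ ?_)
    rw [e]
    exact Submodule.subset_span ⟨N - 1, j, by omega, rfl⟩

theorem cc_mem_SS (hN : 1 ≤ N) (j : ℕ) : cc k N j ∈ SS k N := by
  induction j with
  | zero => rw [cc_zero]; exact zero_mem _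
  | succ j ih =>
    rw [cc_succ]
    exact add_mem (by simpa using bb_mem_SS 0 j) (y_mul_mem_SS hN ih)

theorem xpow_cc_mem_SS (hN : 1 ≤ N) (i j : ℕ) : Ax k N ^ i * cc k N j ∈ SS k N :=
  xpow_mul_mem_SS i (cc_mem_SS hN j)


theorem mem_Bspan (hN : 1 ≤ N) (a : AN k N) : a ∈ Bspan k N := by
  have key : ∀ a : AN k N, ∀ v ∈ Bspan k N, a * v ∈ Bspan k N := by
    intro a
    induction a using ind with
    | h0 r =>
      intro v hv
      rw [← Algebra.smul_def]
      exact Submodule.smul_mem _ _ hv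
    | hx =>
      intro v hv
      refine mul_mem_of_mem_span _ ?_ hv
      rintro _ ⟨i, j, rfl⟩
      have : Ax k N * bb k N i j = bb k N (i + 1) j := by
        rw [bb, bb, ← mul_assoc, ← pow_succ']
      rw [this]; exact Submodule.subset_span ⟨i + 1, j, rfl⟩
    | hy =>
      intro v hv
      refine mul_mem_of_mem_span _ ?_ hv
      rintro _ ⟨i, j, rfl⟩
      rw [y_mul_bb hN]
      exact add_mem (Submodule.subset_span ⟨i, j + 1, rfl⟩)
        (Submodule.smul_mem _ _ (Submodule.subset_span ⟨N - 1 + i, j, rfl⟩))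
    | hmul a b ha hb =>
      intro v hv
      rw [mul_assoc]
      exact ha _ (hb _ hv)
    | hadd a b ha hb =>
      intro v hv
      rw [add_mul]
      exact add_mem (ha _ hv) (hb _ hv)
  have h1 : (1 : AN k N) ∈ Bspan k N := Submodule.subset_span ⟨0, 0, by simp [bb]⟩
  simpa using key a 1 h1

theorem phi_bb (i j : ℕ) :
    bb k N i j * Ax k N - Ax k N * bb k N i j = Ax k N ^ i * cc k N j := by
  rw [cc, mul_sub, bb, mul_assoc, ← mul_assoc (Ax k N), ← pow_succ', ← mul_assoc, pow_succ, mul_assoc, mul_assoc]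


variable (k N)

def Mphi : Submodule k (AN k N) :=
  Submodule.span k {c : AN k N | ∃ a : AN k N, c = a * Ax k N - Ax k N * a}

def MxN : Submodule k (AN k N) :=
  Submodule.span k {c : AN k N | ∃ a : AN k N, c = Ax k N ^ N * a}

def Mcomm : Submodule k (AN k N) :=
  Submodule.span k {c : AN k N | ∃ a b : AN k N, c = a * b - b * a}

variable {k N}

theorem Mphi_le_SS (hN : 1 ≤ N) : Mphi k N ≤ SS k N := by
  rw [Mphi, Submodule.span_le]
  rintro _ ⟨a, rfl⟩
  have hv : a ∈ Submodule.span k {v | ∃ i j, v = bb k N i j} := mem_Bspan hN a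
  have hg : ∀ v ∈ {v : AN k N | ∃ i j, v = bb k N i j},
      (LinearMap.mulRight k (Ax k N) - LinearMap.mulLeft k (Ax k N)) v ∈ SS k N := by
    rintro _ ⟨i, j, rfl⟩
    simp only [LinearMap.sub_apply, LinearMap.mulRight_apply, LinearMap.mulLeft_apply]
    rw [phi_bb]
    exact xpow_cc_mem_SS hN i j
  have := apply_mem_of_mem_span _ hg hv
  simpa using this

theorem bb_mem_Mphi [CharZero k] (hN : 1 ≤ N) : ∀ j i, bb k N (N + i) j ∈ Mphi k N := by
  intro j
  induction j using Nat.strong_induction_on with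
  | _ j IH =>
    intro i
    have hr := creduce (k := k) hN j
    have hxr : Ax k N ^ i * (cc k N (j + 1) - ((j : k) + 1) • bb k N N j) ∈ Mphi k N := by
      refine mul_mem_of_mem_span _ ?_ hr
      rintro _ ⟨a, t, ht, rfl⟩
      rw [xpow_mul_bb]
      have e : i + (N + a) = N + (a + i) := by omega
      rw [e]
      exact IH t ht (a + i)
    have hphi : bb k N i (j + 1) * Ax k N - Ax k N * bb k N i (j + 1) ∈ Mphi k N :=
      Submodule.subset_span ⟨bb k N i (j + 1), rfl⟩
    have hne : ((j : k) + 1) ≠ 0 := Nat.cast_add_one_ne_zero j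
    have key : bb k N (N + i) j
        = ((j : k) + 1)⁻¹ • ((bb k N i (j + 1) * Ax k N - Ax k N * bb k N i (j + 1))
            - Ax k N ^ i * (cc k N (j + 1) - ((j : k) + 1) • bb k N N j)) := by
      rw [phi_bb, mul_sub, mul_smul_comm, xpow_mul_bb]
      have e : i + N = N + i := by omega
      rw [e, sub_sub_cancel, inv_smul_smul₀ hne]
    rw [key]
    exact Submodule.smul_mem _ _ (sub_mem hphi hxr)

theorem SS_le_Mphi [CharZero k] (hN : 1 ≤ N) : SS k N ≤ Mphi k N :=
  Submodule.span_le.mpr (by rintro _ ⟨i, j, rfl⟩; exact bb_mem_Mphi hN j i)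

theorem MxN_eq_SS (hN : 1 ≤ N) : MxN k N = SS k N := by
  apply le_antisymm
  · rw [MxN, Submodule.span_le]
    rintro _ ⟨a, rfl⟩
    refine mul_mem_of_mem_span (Ax k N ^ N) ?_ (mem_Bspan hN a)
    rintro _ ⟨i, j, rfl⟩
    rw [xpow_mul_bb]
    exact bb_mem_SS i j
  · rw [SS, Submodule.span_le]
    rintro _ ⟨i, j, rfl⟩
    exact Submodule.subset_span ⟨bb k N i j, (xpow_mul_bb N i j).symm⟩

theorem mul_SS (hN : 1 ≤ N) : ∀ a : AN k N, ∀ v ∈ SS k N, a * v ∈ SS k N := by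
  intro a
  induction a using ind with
  | h0 r => intro v hv; rw [← Algebra.smul_def]; exact Submodule.smul_mem _ _ hv
  | hx => intro v hv; simpa using xpow_mul_mem_SS 1 hv
  | hy => intro v hv; exact y_mul_mem_SS hN hv
  | hmul a b ha hb => intro v hv; rw [mul_assoc]; exact ha _ (hb _ hv)
  | hadd a b ha hb => intro v hv; rw [add_mul]; exact add_mem (ha _ hv) (hb _ hv)

theorem SS_mul (hN : 1 ≤ N) : ∀ a : AN k N, ∀ v ∈ SS k N, v * a ∈ SS k N := by
  intro a
  induction a using ind with
  | h0 r =>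
    intro v hv
    rw [← Algebra.commutes, ← Algebra.smul_def]
    exact Submodule.smul_mem _ _ hv
  | hx =>
    intro v hv
    refine mem_span_mul _ ?_ hv
    rintro _ ⟨a, t, rfl⟩
    have h1 : Ay k N ^ t * Ax k N = Ax k N * Ay k N ^ t + cc k N t := by rw [cc]; abel
    have key : bb k N (N + a) t * Ax k N
        = bb k N (N + (a + 1)) t + Ax k N ^ (N + a) * cc k N t := by
      rw [bb, mul_assoc, h1, mul_add, ← mul_assoc, ← pow_succ, bb]
      have e : N + a + 1 = N + (a + 1) := by omega
      rw [e]
    rw [key]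
    exact add_mem (bb_mem_SS _ _) (xpow_cc_mem_SS hN _ _)
  | hy =>
    intro v hv
    refine mem_span_mul _ ?_ hv
    rintro _ ⟨a, t, rfl⟩
    rw [bb_mul_y]
    exact bb_mem_SS _ _
  | hmul a b ha hb => intro v hv; rw [← mul_assoc]; exact hb _ (ha _ hv)
  | hadd a b ha hb => intro v hv; rw [mul_add]; exact add_mem (ha _ hv) (hb _ hv)

theorem comm_y_mem_SS (hN : 1 ≤ N) :
    ∀ b : AN k N, b * Ay k N - Ay k N * b ∈ SS k N := by
  intro b
  induction b using ind with
  | h0 r => rw [Algebra.commutes, sub_self]; exact zero_mem _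
  | hx =>
    have key : Ax k N * Ay k N - Ay k N * Ax k N = -(bb k N (N + 0) 0) := by
      rw [yx, bb]
      simp
    rw [key]
    exact neg_mem (bb_mem_SS 0 0)
  | hy => rw [sub_self]; exact zero_mem _
  | hmul a b ha hb =>
    have key : a * b * Ay k N - Ay k N * (a * b)
        = a * (b * Ay k N - Ay k N * b) + (a * Ay k N - Ay k N * a) * b := by
      simp only [mul_sub, sub_mul, mul_assoc]; abel
    rw [key]
    exact add_mem (mul_SS hN a _ hb) (SS_mul hN b _ ha)
  | hadd a b ha hb =>
    have key : (a + b) * Ay k N - Ay k N * (a + b)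
        = (a * Ay k N - Ay k N * a) + (b * Ay k N - Ay k N * b) := by
      simp only [mul_sub, sub_mul, mul_assoc, add_mul, mul_add]; abel
    rw [key]
    exact add_mem ha hb

theorem comm_mem_SS [CharZero k] (hN : 1 ≤ N) :
    ∀ a b : AN k N, a * b - b * a ∈ SS k N := by
  intro a
  induction a using ind with
  | h0 r => intro b; rw [Algebra.commutes, sub_self]; exact zero_mem _
  | hx =>
    intro b
    rw [← neg_sub]
    exact neg_mem (Mphi_le_SS hN (Submodule.subset_span ⟨b, rfl⟩))
  | hy =>
    intro b
    rw [← neg_sub]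
    exact neg_mem (comm_y_mem_SS hN b)
  | hmul a a' ha ha' =>
    intro b
    have key : a * a' * b - b * (a * a')
        = a * (a' * b - b * a') + (a * b - b * a) * a' := by
      simp only [mul_sub, sub_mul, mul_assoc]; abel
    rw [key]
    exact add_mem (mul_SS hN a _ (ha' b)) (SS_mul hN a' _ (ha b))
  | hadd a a' ha ha' =>
    intro b
    have key : (a + a') * b - b * (a + a')
        = (a * b - b * a) + (a' * b - b * a') := by
      simp only [mul_sub, sub_mul, mul_assoc, add_mul, mul_add]; abel
    rw [key]
    exact add_mem (ha b) (ha' b)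

end ANaux

/-- `[A_N, x] = [A_N, A_N]`-span `= x^N A_N`: the span of commutators with `x`, and
the span of all commutators, both equal the right ideal `x^N A_N`. -/
theorem commutators_eq_xN_ideal (k : Type*) [Field k] [CharZero k] (N : ℕ) (hN : 1 ≤ N) :
    Submodule.span k {c : AN k N | ∃ a : AN k N, c = a * Ax k N - Ax k N * a}
        = Submodule.span k {c : AN k N | ∃ a : AN k N, c = Ax k N ^ N * a} ∧
    Submodule.span k {c : AN k N | ∃ a b : AN k N, c = a * b - b * a}
        = Submodule.span k {c : AN k N | ∃ a : AN k N, c = Ax k N ^ N * a} := by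
  have h1 : ANaux.Mphi k N = ANaux.SS k N :=
    le_antisymm (ANaux.Mphi_le_SS hN) (ANaux.SS_le_Mphi hN)
  have h2 : ANaux.MxN k N = ANaux.SS k N := ANaux.MxN_eq_SS hN
  have h3 : ANaux.Mcomm k N = ANaux.SS k N := by
    apply le_antisymm
    · rw [ANaux.Mcomm, Submodule.span_le]
      rintro _ ⟨a, b, rfl⟩
      exact ANaux.comm_mem_SS hN a b
    · rw [← h1]
      exact Submodule.span_mono (by rintro c ⟨a, rfl⟩; exact ⟨a, Ax k N, rfl⟩)
  exact ⟨h1.trans h2.symm, h3.trans h2.symm⟩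
end
end

section
/- Define the sequence of polynomials c_j(q) ∈ ℚ[q] by c_0 = 1 and the recursion ∑_{i=0}^{j} ((1)_{q,j+1-i}/(j+1-i)!)·(c_i(q)/i!) = δ_{j,0} for all j ≥ 0, where (1)_{q,s} = ∏_{r=0}^{s-1}(1 + rq). Then for every j ≥ 0, the polynomial c_j(q) has degree j, constant term equal to the j-th Bernoulli number B_j, and leading coefficient (−1)^j j! G_j where (G_j) are the Gregory coefficients defined by G_0 = 1, G_1 = 1/2, and ∑_{i=1}^{j} (−1)^{i+1} G_i/(j+1−i) = 1/(j+1) for j ≥ 2. -/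
open Polynomial

open Finset


/-- Binomial coefficient polynomial over ℝ. -/
noncomputable def bpAux (n : ℕ) : ℝ[X] :=
  Polynomial.C ((n.factorial : ℝ)⁻¹) * ∏ k ∈ Finset.range n, (Polynomial.X - Polynomial.C (k : ℝ))

lemma bpAux_zero : bpAux 0 = 1 := by simp [bpAux]

lemma bpAux_one : bpAux 1 = Polynomial.X := by simp [bpAux]

/-- Pascal identity: `binom(x,n+1) - binom(x-1,n+1) = binom(x-1,n)`. -/
lemma bpAux_pascal (n : ℕ) :
    bpAux (n + 1) - (bpAux (n + 1)).comp (Polynomial.X - Polynomial.C 1)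
      = (bpAux n).comp (Polynomial.X - Polynomial.C 1) := by
  have hQ : ∀ m : ℕ, (∏ k ∈ Finset.range m, (Polynomial.X - Polynomial.C (k : ℝ))).comp
      (Polynomial.X - Polynomial.C 1)
      = ∏ k ∈ Finset.range m, (Polynomial.X - Polynomial.C 1 - Polynomial.C (k : ℝ)) := by
    intro m
    rw [Polynomial.prod_comp]
    refine Finset.prod_congr rfl fun k _ => by simp [Polynomial.sub_comp]
  set Q : ℝ[X] := ∏ k ∈ Finset.range n, (Polynomial.X - Polynomial.C 1 - Polynomial.C (k : ℝ))
    with hQdef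
  have h1 : ∏ k ∈ Finset.range (n + 1), (Polynomial.X - Polynomial.C (k : ℝ))
      = Q * Polynomial.X := by
    rw [Finset.prod_range_succ' (fun k => Polynomial.X - Polynomial.C (k : ℝ)) n]
    congr 1
    · refine Finset.prod_congr rfl fun k _ => ?_
      push_cast
      rw [Polynomial.C_add]
      ring
    · simp
  have h2 : (∏ k ∈ Finset.range (n + 1), (Polynomial.X - Polynomial.C (k : ℝ))).comp
      (Polynomial.X - Polynomial.C 1)
      = Q * (Polynomial.X - Polynomial.C 1 - Polynomial.C (n : ℝ)) := by
    rw [hQ, Finset.prod_range_succ]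
  have hfac : ((n + 1).factorial : ℝ)⁻¹ * ((n : ℝ) + 1) = (n.factorial : ℝ)⁻¹ := by
    rw [Nat.factorial_succ]
    push_cast
    rw [mul_inv]
    field_simp
  unfold bpAux
  rw [Polynomial.mul_comp, hQ, Polynomial.C_comp, h1, Finset.prod_range_succ]
  rw [show Polynomial.C (((n+1).factorial : ℝ)⁻¹) * (Q * Polynomial.X) -
      Polynomial.C (((n+1).factorial : ℝ)⁻¹) *
        (Q * (Polynomial.X - Polynomial.C 1 - Polynomial.C (n : ℝ)))
      = Polynomial.C (((n+1).factorial : ℝ)⁻¹ * ((n:ℝ)+1)) * Q by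
    push_cast
    simp only [Polynomial.C_mul, Polynomial.C_add, Polynomial.C_1]
    ring, hfac, Polynomial.mul_comp, Polynomial.C_comp, hQ]

lemma const_of_comp (q : ℝ[X]) (h : q.comp (Polynomial.X - Polynomial.C 1) = q) :
    q = Polynomial.C (q.eval 0) := by
  have hev : ∀ x : ℝ, q.eval (x - 1) = q.eval x := by
    intro x
    conv_rhs => rw [← h]
    simp [Polynomial.eval_comp]
  have hnat : ∀ n : ℕ, q.eval (n : ℝ) = q.eval 0 := by
    intro n
    induction n with
    | zero => simp
    | succ m ih =>
      have := hev ((m : ℝ) + 1)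
      simp only [add_sub_cancel_right] at this
      rw [← ih]
      push_cast
      exact this.symm
  have hz : q - Polynomial.C (q.eval 0) = 0 := by
    apply Polynomial.eq_zero_of_infinite_isRoot
    apply Set.infinite_of_injective_forall_mem (f := fun n : ℕ => (n : ℝ))
      Nat.cast_injective
    intro n
    simp [Polynomial.IsRoot, hnat n]
  have := sub_eq_zero.mp hz
  exact this

lemma bpAux_eval_zero (n : ℕ) : (bpAux (n + 1)).eval 0 = 0 := by
  unfold bpAux
  rw [Polynomial.eval_mul, Polynomial.eval_prod]
  rw [Finset.prod_eq_zero (Finset.mem_range.mpr (Nat.succ_pos n))]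
  · ring
  · simp

lemma bpAux_eval_one (n : ℕ) (hn : 2 ≤ n) : (bpAux n).eval 1 = 0 := by
  unfold bpAux
  rw [Polynomial.eval_mul, Polynomial.eval_prod]
  rw [Finset.prod_eq_zero (Finset.mem_range.mpr (by omega : 1 < n))]
  · ring
  · simp

lemma prod_neg_cast (m : ℕ) :
    ∏ k ∈ Finset.range m, (-((k : ℝ) + 1)) = (-1) ^ m * (m.factorial : ℝ) := by
  have : ∀ k ∈ Finset.range m, (-((k : ℝ) + 1)) = (-1) * ((k : ℝ) + 1) := by intros; ring
  rw [Finset.prod_congr rfl this, Finset.prod_mul_distrib, Finset.prod_const,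
    Finset.card_range]
  have h2 : ∏ k ∈ Finset.range m, ((k:ℝ)+1) = (m.factorial : ℝ) := by
    exact_mod_cast Finset.prod_range_add_one_eq_factorial m
  rw [h2]

lemma bpAux_deriv_eval_zero (n : ℕ) :
    ((bpAux (n + 1)).derivative).eval 0 = (-1) ^ n / ((n : ℝ) + 1) := by
  have h1 : ∏ k ∈ Finset.range (n + 1), (Polynomial.X - Polynomial.C (k : ℝ))
      = (∏ k ∈ Finset.range n, (Polynomial.X - Polynomial.C ((k : ℝ) + 1))) * Polynomial.X := by
    rw [Finset.prod_range_succ' (fun k => Polynomial.X - Polynomial.C (k : ℝ)) n]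
    congr 1
    · refine Finset.prod_congr rfl fun k _ => ?_
      push_cast
      rw [Polynomial.C_add]
    · simp
  unfold bpAux
  rw [h1, Polynomial.derivative_mul, Polynomial.derivative_C, Polynomial.derivative_mul,
    Polynomial.derivative_X]
  simp only [Polynomial.eval_add, Polynomial.eval_mul, Polynomial.eval_X, Polynomial.eval_C,
    Polynomial.eval_prod, Polynomial.eval_sub, zero_mul, mul_zero, add_zero, mul_one, zero_add,
    zero_sub, Polynomial.eval_zero]
  rw [prod_neg_cast n, Nat.factorial_succ]
  push_cast
  rw [mul_inv]
  have hnf : (n.factorial : ℝ) ≠ 0 := Nat.cast_ne_zero.mpr n.factorial_ne_zero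
  field_simp

lemma bpAux_derivative : ∀ n : ℕ, 1 ≤ n →
    Polynomial.derivative (bpAux n)
      = ∑ k ∈ Finset.Icc 1 n, ((-1:ℝ)^(k+1) / (k:ℝ)) • bpAux (n - k) := by
  intro n
  induction n with
  | zero => intro h; omega
  | succ m ih =>
    intro _
    rcases Nat.eq_zero_or_pos m with hm | hm
    · subst hm
      rw [bpAux_one]
      norm_num [Finset.Icc_self, bpAux_zero]
    · have hIH := ih hm
      set S : ℝ[X] := ∑ k ∈ Finset.Icc 1 (m+1), ((-1:ℝ)^(k+1)/(k:ℝ)) • bpAux (m+1-k) with hS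
      have hcompderiv : ∀ p : ℝ[X],
          Polynomial.derivative (p.comp (Polynomial.X - Polynomial.C 1))
            = (Polynomial.derivative p).comp (Polynomial.X - Polynomial.C 1) := by
        intro p
        rw [Polynomial.derivative_comp]
        simp
      have hA : Polynomial.derivative (bpAux (m+1))
            - (Polynomial.derivative (bpAux (m+1))).comp (Polynomial.X - Polynomial.C 1)
          = ∑ k ∈ Finset.Icc 1 m,
              ((-1:ℝ)^(k+1)/(k:ℝ)) • (bpAux (m-k)).comp (Polynomial.X - Polynomial.C 1) := by
        rw [← hcompderiv, ← Polynomial.derivative_sub, bpAux_pascal, hcompderiv, hIH,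
          Polynomial.sum_comp]
        exact Finset.sum_congr rfl fun k hk => by rw [Polynomial.smul_comp]
      have hB : S - S.comp (Polynomial.X - Polynomial.C 1)
          = ∑ k ∈ Finset.Icc 1 m,
              ((-1:ℝ)^(k+1)/(k:ℝ)) • (bpAux (m-k)).comp (Polynomial.X - Polynomial.C 1) := by
        rw [hS, Polynomial.sum_comp, ← Finset.sum_sub_distrib,
          Finset.sum_Icc_succ_top (by omega : 1 ≤ m + 1)]
        have htop : ((-1:ℝ)^(m+1+1)/((m+1:ℕ):ℝ)) • bpAux (m+1-(m+1))
            - (((-1:ℝ)^(m+1+1)/((m+1:ℕ):ℝ)) • bpAux (m+1-(m+1))).comp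
                (Polynomial.X - Polynomial.C 1) = 0 := by
          simp [bpAux_zero, Polynomial.smul_comp]
        rw [htop, add_zero]
        refine Finset.sum_congr rfl fun k hk => ?_
        have hk' : k ≤ m := (Finset.mem_Icc.mp hk).2
        have hsub : m + 1 - k = (m - k) + 1 := by omega
        rw [Polynomial.smul_comp, ← smul_sub, hsub, bpAux_pascal]
      have hDcomp : (Polynomial.derivative (bpAux (m+1)) - S).comp
            (Polynomial.X - Polynomial.C 1)
          = Polynomial.derivative (bpAux (m+1)) - S := by
        have : Polynomial.derivative (bpAux (m+1)) - S
            - (Polynomial.derivative (bpAux (m+1)) - S).comp (Polynomial.X - Polynomial.C 1)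
            = 0 := by
          rw [Polynomial.sub_comp]
          have expand : Polynomial.derivative (bpAux (m+1)) - S
              - ((Polynomial.derivative (bpAux (m+1))).comp (Polynomial.X - Polynomial.C 1)
                - S.comp (Polynomial.X - Polynomial.C 1))
              = (Polynomial.derivative (bpAux (m+1))
                  - (Polynomial.derivative (bpAux (m+1))).comp (Polynomial.X - Polynomial.C 1))
                - (S - S.comp (Polynomial.X - Polynomial.C 1)) := by ring
          rw [expand, hA, hB, sub_self]
        linear_combination -this
      have hD0 : (Polynomial.derivative (bpAux (m+1)) - S).eval 0 = 0 := by
        rw [Polynomial.eval_sub, bpAux_deriv_eval_zero]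
        have hSeval : S.eval 0 = (-1:ℝ)^m / ((m:ℝ)+1) := by
          rw [hS, Polynomial.eval_finset_sum,
            Finset.sum_Icc_succ_top (by omega : 1 ≤ m + 1)]
          have hzero : ∀ k ∈ Finset.Icc 1 m,
              (((-1:ℝ)^(k+1)/(k:ℝ)) • bpAux (m+1-k)).eval 0 = 0 := by
            intro k hk
            have hk' : k ≤ m := (Finset.mem_Icc.mp hk).2
            have hsub : m + 1 - k = (m - k) + 1 := by omega
            rw [Polynomial.eval_smul, hsub, bpAux_eval_zero]
            simp
          rw [Finset.sum_eq_zero hzero, zero_add]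
          simp [bpAux_zero]
          rw [pow_succ, pow_succ]
          push_cast
          ring
        rw [hSeval]
        push_cast
        ring
      have hconst := const_of_comp _ hDcomp
      rw [hD0] at hconst
      simp only [map_zero] at hconst
      have := sub_eq_zero.mp hconst
      exact this

noncomputable def bInt (n : ℕ) : ℝ := ∫ x in (0:ℝ)..1, (bpAux n).eval x

lemma bpAux_intble (p : ℝ[X]) :
    IntervalIntegrable (fun x => p.eval x) MeasureTheory.volume (0:ℝ) 1 :=
  (Polynomial.continuous p).intervalIntegrable 0 1

lemma bInt_zero : bInt 0 = 1 := by
  simp [bInt, bpAux_zero]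

lemma bInt_one : bInt 1 = 1/2 := by
  simp only [bInt, bpAux_one, Polynomial.eval_X]
  rw [integral_id]
  norm_num

lemma bInt_rec (n : ℕ) (hn : 2 ≤ n) :
    ∑ k ∈ Finset.Icc 1 n, ((-1:ℝ)^(k+1) / (k:ℝ)) * bInt (n - k) = 0 := by
  have hderiv : ∫ x in (0:ℝ)..1, (Polynomial.derivative (bpAux n)).eval x
      = (bpAux n).eval 1 - (bpAux n).eval 0 := by
    exact intervalIntegral.integral_eq_sub_of_hasDerivAt
      (f := fun y => (bpAux n).eval y) (f' := fun y => (Polynomial.derivative (bpAux n)).eval y)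
      (fun x _ => Polynomial.hasDerivAt (bpAux n) x) (bpAux_intble _)
  obtain ⟨m, rfl⟩ : ∃ m, n = m + 1 := ⟨n - 1, by omega⟩
  rw [bpAux_eval_one _ hn, bpAux_eval_zero, sub_zero] at hderiv
  rw [bpAux_derivative _ (by omega)] at hderiv
  have : ∫ x in (0:ℝ)..1,
        (∑ k ∈ Finset.Icc 1 (m+1), ((-1:ℝ)^(k+1)/(k:ℝ)) • bpAux (m+1-k)).eval x
      = ∑ k ∈ Finset.Icc 1 (m+1), ((-1:ℝ)^(k+1)/(k:ℝ)) * bInt (m+1-k) := by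
    have hpt : ∀ x : ℝ,
        (∑ k ∈ Finset.Icc 1 (m+1), ((-1:ℝ)^(k+1)/(k:ℝ)) • bpAux (m+1-k)).eval x
        = ∑ k ∈ Finset.Icc 1 (m+1), ((-1:ℝ)^(k+1)/(k:ℝ)) * (bpAux (m+1-k)).eval x := by
      intro x
      rw [Polynomial.eval_finset_sum]
      exact Finset.sum_congr rfl fun k _ => by rw [Polynomial.eval_smul]; simp
    rw [intervalIntegral.integral_congr (fun x _ => hpt x),
      intervalIntegral.integral_finset_sum]
    · exact Finset.sum_congr rfl fun k _ => by
        rw [intervalIntegral.integral_const_mul]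
        rfl
    · intro k _
      exact ((continuous_const.mul (Polynomial.continuous _)).intervalIntegrable 0 1)
  rw [this] at hderiv
  exact hderiv

lemma bInt_pos (n : ℕ) : 0 < (-1:ℝ)^(n+1+1) * bInt (n+1) := by
  have : (-1:ℝ)^(n+1+1) * bInt (n+1)
      = ∫ x in (0:ℝ)..1, (-1:ℝ)^(n+1+1) * (bpAux (n+1)).eval x := by
    rw [bInt, intervalIntegral.integral_const_mul]
  rw [this]
  apply intervalIntegral.intervalIntegral_pos_of_pos_on
  · exact (continuous_const.mul (Polynomial.continuous _)).intervalIntegrable 0 1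
  · intro x hx
    obtain ⟨hx0, hx1⟩ := hx
    have heval : (bpAux (n+1)).eval x
        = ((n+1).factorial : ℝ)⁻¹ * (x * ∏ k ∈ Finset.range n, (x - ((k:ℝ)+1))) := by
      unfold bpAux
      rw [Polynomial.eval_mul, Polynomial.eval_C, Polynomial.eval_prod]
      congr 1
      rw [Finset.prod_range_succ' (fun k => Polynomial.eval x (Polynomial.X - Polynomial.C (k:ℝ))) n]
      simp only [Polynomial.eval_sub, Polynomial.eval_X, Polynomial.eval_C]
      push_cast
      rw [mul_comm]
      norm_num
    have hprod : ∏ k ∈ Finset.range n, (x - ((k:ℝ)+1))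
        = (-1:ℝ)^n * ∏ k ∈ Finset.range n, (((k:ℝ)+1) - x) := by
      have : ∀ k ∈ Finset.range n, (x - ((k:ℝ)+1)) = (-1) * (((k:ℝ)+1) - x) := by
        intros; ring
      rw [Finset.prod_congr rfl this, Finset.prod_mul_distrib, Finset.prod_const,
        Finset.card_range]
    have hpos : 0 < ∏ k ∈ Finset.range n, (((k:ℝ)+1) - x) := by
      apply Finset.prod_pos
      intro k _
      have hk0 : (0:ℝ) ≤ (k:ℝ) := k.cast_nonneg
      linarith
    rw [heval, hprod]
    have hfac : 0 < (((n+1).factorial : ℝ))⁻¹ := by positivity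
    have h2 : (-1:ℝ)^(n+1+1) * (-1:ℝ)^n = 1 := by
      rw [← pow_add]
      have h3 : n+1+1+n = 2*(n+1) := by ring
      rw [h3, pow_mul]
      norm_num
    have hrw : (-1:ℝ)^(n+1+1) * (((n+1).factorial : ℝ)⁻¹ *
          (x * ((-1:ℝ)^n * ∏ k ∈ Finset.range n, (((k:ℝ)+1) - x))))
        = ((n+1).factorial : ℝ)⁻¹ * (x * ∏ k ∈ Finset.range n, (((k:ℝ)+1) - x)) := by
      calc (-1:ℝ)^(n+1+1) * (((n+1).factorial : ℝ)⁻¹ *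
            (x * ((-1:ℝ)^n * ∏ k ∈ Finset.range n, (((k:ℝ)+1) - x))))
          = ((-1:ℝ)^(n+1+1) * (-1:ℝ)^n) * (((n+1).factorial : ℝ)⁻¹ *
            (x * ∏ k ∈ Finset.range n, (((k:ℝ)+1) - x))) := by ring
        _ = ((n+1).factorial : ℝ)⁻¹ * (x * ∏ k ∈ Finset.range n, (((k:ℝ)+1) - x)) := by
            rw [h2, one_mul]
    rw [hrw]
    exact mul_pos hfac (mul_pos hx0 hpos)
  · norm_num

lemma bInt_rec' (j : ℕ) (hj : 2 ≤ j) :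
    ∑ i ∈ Finset.Icc 1 j, (-1:ℝ)^(i+1) * bInt i / ((j:ℝ)+1-(i:ℝ)) = 1/((j:ℝ)+1) := by
  have h0 := bInt_rec (j+1) (by omega)
  rw [Finset.sum_Icc_succ_top (by omega : 1 ≤ j+1)] at h0
  simp only [Nat.sub_self, bInt_zero, mul_one] at h0
  have hre : ∑ k ∈ Finset.Icc 1 j, (-1:ℝ)^(k+1)/(k:ℝ) * bInt (j+1-k)
      = ∑ i ∈ Finset.Icc 1 j, (-1:ℝ)^((j+1-i)+1)/((j+1-i:ℕ):ℝ) * bInt i := by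
    refine Finset.sum_nbij' (fun a => j+1-a) (fun a => j+1-a) ?_ ?_ ?_ ?_ ?_ <;>
      intro a ha <;> simp only [Finset.mem_Icc] at *
    · omega
    · omega
    · omega
    · omega
    · have h1 : j + 1 - (j + 1 - a) = a := by omega
      rw [h1]
  rw [hre] at h0
  have hterm : ∀ i ∈ Finset.Icc 1 j, (-1:ℝ)^(i+1) * bInt i / ((j:ℝ)+1-(i:ℝ))
      = (-1:ℝ)^(j+1) * ((-1:ℝ)^((j+1-i)+1)/((j+1-i:ℕ):ℝ) * bInt i) := by
    intro i hi
    obtain ⟨hi1, hi2⟩ := Finset.mem_Icc.mp hi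
    have hcast : ((j+1-i:ℕ):ℝ) = (j:ℝ)+1-(i:ℝ) := by
      push_cast [Nat.cast_sub (by omega : i ≤ j + 1)]
      ring
    have hsign : (-1:ℝ)^(j+1) * (-1:ℝ)^((j+1-i)+1) = (-1:ℝ)^(i+1) := by
      rw [← pow_add]
      have he : (j+1) + ((j+1-i)+1) = 2*(j+1-i) + (i+1) + 2*i - 2*i := by omega
      have he2 : (j+1) + ((j+1-i)+1) = 2*(j+1-i) + (i+1) := by omega
      rw [he2, pow_add, pow_mul]
      norm_num
    rw [hcast, ← hsign]
    ring
  rw [Finset.sum_congr rfl hterm, ← Finset.mul_sum]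
  have hsum : ∑ i ∈ Finset.Icc 1 j, (-1:ℝ)^((j+1-i)+1)/((j+1-i:ℕ):ℝ) * bInt i
      = -((-1:ℝ)^(j+1+1) / ((j+1:ℕ):ℝ)) := by linarith [h0]
  rw [hsum]
  have hsign2 : (-1:ℝ)^(j+1) * -((-1:ℝ)^(j+1+1) / ((j+1:ℕ):ℝ)) = 1/((j:ℝ)+1) := by
    have h4 : (-1:ℝ)^(j+1) * (-1:ℝ)^(j+1+1) = -1 := by
      rw [← pow_add]
      have h5 : (j+1) + (j+1+1) = 2*(j+1)+1 := by ring
      rw [h5, pow_succ, pow_mul]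
      norm_num
    have h6 : (-1:ℝ)^(j+1) * -((-1:ℝ)^(j+1+1) / ((j+1:ℕ):ℝ))
        = -((-1:ℝ)^(j+1) * (-1:ℝ)^(j+1+1)) / ((j+1:ℕ):ℝ) := by ring
    rw [h6, h4]
    push_cast
    norm_num
  rw [hsign2]

lemma G_cast_eq (G : ℕ → ℚ)
    (hG0 : G 0 = 1) (hG1 : G 1 = 1 / 2)
    (hG : ∀ j : ℕ, 2 ≤ j →
      ∑ i ∈ Finset.Icc 1 j, (-1 : ℚ) ^ (i + 1) * G i / ((j : ℚ) + 1 - i) = 1 / ((j : ℚ) + 1)) :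
    ∀ j : ℕ, (G j : ℝ) = bInt j := by
  intro j
  induction j using Nat.strong_induction_on with
  | _ j ih =>
    match j, ih with
    | 0, _ => rw [hG0, bInt_zero]; norm_num
    | 1, _ => rw [hG1, bInt_one]; norm_num
    | (m+2), ih =>
      have hj2 : 2 ≤ m + 2 := by omega
      have hGj : ∑ i ∈ Finset.Icc 1 (m+2),
            (-1:ℝ)^(i+1) * (G i : ℝ) / (((m+2:ℕ):ℝ) + 1 - (i:ℝ))
          = 1 / (((m+2:ℕ):ℝ) + 1) := by
        have h8 := congrArg (fun q : ℚ => (q : ℝ)) (hG (m+2) hj2)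
        push_cast at h8 ⊢
        exact h8
      have hb := bInt_rec' (m+2) hj2
      have hF : ∑ i ∈ Finset.Icc 1 (m+2),
            (-1:ℝ)^(i+1) * ((G i : ℝ) - bInt i) / (((m+2:ℕ):ℝ) + 1 - (i:ℝ)) = 0 := by
        have hterm : ∀ i ∈ Finset.Icc 1 (m+2),
            (-1:ℝ)^(i+1) * ((G i : ℝ) - bInt i) / (((m+2:ℕ):ℝ) + 1 - (i:ℝ))
              = (-1:ℝ)^(i+1) * (G i : ℝ) / (((m+2:ℕ):ℝ) + 1 - (i:ℝ))
                - (-1:ℝ)^(i+1) * bInt i / (((m+2:ℕ):ℝ) + 1 - (i:ℝ)) := by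
          intro i _
          ring
        rw [Finset.sum_congr rfl hterm, Finset.sum_sub_distrib, hGj, hb, sub_self]
      rw [show m+2 = m+1+1 from rfl] at hF ⊢
      rw [Finset.sum_Icc_succ_top (by omega : 1 ≤ m + 1 + 1)] at hF
      have hlow : ∑ i ∈ Finset.Icc 1 (m+1),
          (-1:ℝ)^(i+1) * ((G i : ℝ) - bInt i) / (((m+1+1:ℕ):ℝ) + 1 - (i:ℝ)) = 0 := by
        apply Finset.sum_eq_zero
        intro i hi
        obtain ⟨_, hi2⟩ := Finset.mem_Icc.mp hi
        rw [ih i (by omega), sub_self]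
        ring
      rw [hlow, zero_add] at hF
      have hden : (((m+1+1:ℕ):ℝ) + 1 - ((m+1+1:ℕ):ℝ)) = 1 := by ring
      rw [hden, div_one] at hF
      have hsgn : (-1:ℝ)^(m+1+1+1) ≠ 0 := pow_ne_zero _ (by norm_num)
      have h0 := (mul_eq_zero.mp hF).resolve_left hsgn
      exact sub_eq_zero.mp h0

lemma G_ne_zero (G : ℕ → ℚ)
    (hG0 : G 0 = 1) (hG1 : G 1 = 1 / 2)
    (hG : ∀ j : ℕ, 2 ≤ j →
      ∑ i ∈ Finset.Icc 1 j, (-1 : ℚ) ^ (i + 1) * G i / ((j : ℚ) + 1 - i) = 1 / ((j : ℚ) + 1)) :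
    ∀ j : ℕ, G j ≠ 0 := by
  intro j
  match j with
  | 0 => rw [hG0]; norm_num
  | (n+1) =>
    intro hcontra
    have h1 := G_cast_eq G hG0 hG1 hG (n+1)
    rw [hcontra] at h1
    have h2 := bInt_pos n
    rw [← h1] at h2
    simp at h2

/-- The polynomial `(1)_{q,s} = ∏_{r=0}^{s-1} (1 + r q) ∈ ℚ[q]`. -/
noncomputable def pochOnePoly (s : ℕ) : Polynomial ℚ :=
  ∏ r ∈ Finset.range s, (1 + (r : ℚ[X]) * Polynomial.X)

lemma poch_one : pochOnePoly 1 = 1 := by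
  simp [pochOnePoly]

lemma poch_coeff_zero (s : ℕ) : (pochOnePoly s).coeff 0 = 1 := by
  rw [Polynomial.coeff_zero_eq_eval_zero]
  unfold pochOnePoly
  rw [Polynomial.eval_prod]
  simp

lemma poch_succ (s : ℕ) : pochOnePoly (s+1)
    = ∏ r ∈ Finset.range s, (Polynomial.C ((r:ℚ)+1) * Polynomial.X + Polynomial.C 1) := by
  unfold pochOnePoly
  rw [Finset.prod_range_succ' (fun r => 1 + (r : ℚ[X]) * Polynomial.X) s]
  have h0 : (1 : ℚ[X]) + ((0:ℕ) : ℚ[X]) * Polynomial.X = 1 := by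
    push_cast
    ring
  rw [h0, mul_one]
  refine Finset.prod_congr rfl fun r _ => ?_
  rw [Polynomial.C_add, Polynomial.C_1, Polynomial.C_eq_natCast]
  push_cast
  ring

lemma poch_factor_ne_zero (r : ℕ) :
    (Polynomial.C ((r:ℚ)+1) * Polynomial.X + Polynomial.C 1 : ℚ[X]) ≠ 0 := by
  have ha : ((r:ℚ)+1) ≠ 0 := by positivity
  intro hzero
  have := Polynomial.natDegree_linear (b := (1:ℚ)) ha
  rw [hzero] at this
  simp at this

lemma poch_natDegree (s : ℕ) : (pochOnePoly (s+1)).natDegree = s := by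
  rw [poch_succ, Polynomial.natDegree_prod _ _ (fun r _ => poch_factor_ne_zero r)]
  have hdeg : ∀ i ∈ Finset.range s,
      (Polynomial.C ((i:ℚ)+1) * Polynomial.X + Polynomial.C 1).natDegree = 1 :=
    fun i _ => Polynomial.natDegree_linear (by positivity)
  rw [Finset.sum_congr rfl hdeg]
  simp

lemma poch_leadingCoeff (s : ℕ) : (pochOnePoly (s+1)).leadingCoeff = (s.factorial : ℚ) := by
  rw [poch_succ, Polynomial.leadingCoeff_prod]
  have hlc : ∀ i ∈ Finset.range s,
      (Polynomial.C ((i:ℚ)+1) * Polynomial.X + Polynomial.C 1).leadingCoeff = (i:ℚ)+1 :=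
    fun i _ => Polynomial.leadingCoeff_linear (by positivity)
  rw [Finset.prod_congr rfl hlc]
  exact_mod_cast Finset.prod_range_add_one_eq_factorial s

section Gsum
variable (G : ℕ → ℚ)

lemma Gsum_aux
    (hG0 : G 0 = 1) (hG1 : G 1 = 1 / 2)
    (hG : ∀ j : ℕ, 2 ≤ j →
      ∑ i ∈ Finset.Icc 1 j, (-1 : ℚ) ^ (i + 1) * G i / ((j : ℚ) + 1 - i) = 1 / ((j : ℚ) + 1)) :
    ∀ m : ℕ, ∑ i ∈ Finset.range (m+1), (-1:ℚ)^i * G i / ((m:ℚ) + 2 - (i:ℚ))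
      = (-1:ℚ)^m * G (m+1) := by
  have hG' : ∀ j : ℕ, 1 ≤ j →
      ∑ i ∈ Finset.Icc 1 j, (-1 : ℚ) ^ (i + 1) * G i / ((j : ℚ) + 1 - i) = 1 / ((j : ℚ) + 1) := by
    intro j hj
    rcases Nat.lt_or_ge j 2 with h2 | h2
    · have : j = 1 := by omega
      subst this
      rw [Finset.Icc_self, Finset.sum_singleton]
      norm_num [hG1]
    · exact hG j h2
  intro m
  have h1 := hG' (m+1) (by omega)
  rw [Finset.sum_Icc_succ_top (by omega : 1 ≤ m+1)] at h1
  push_cast at h1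
  -- canonical lower sum
  have hIcc : ∑ i ∈ Finset.Icc 1 m, (-1:ℚ)^(i+1) * G i / ((m:ℚ)+1+1-(i:ℚ))
      = ∑ i ∈ Finset.range m, (-1:ℚ)^(i+1+1) * G (i+1) / ((m:ℚ)+1+1-((i:ℚ)+1)) := by
    rw [← Finset.Ico_add_one_right_eq_Icc, Finset.sum_Ico_eq_sum_range]
    refine Finset.sum_congr rfl fun i _ => ?_
    push_cast
    ring_nf
  have htop : ((m:ℚ)+1+1-((m:ℚ)+1)) = 1 := by ring
  rw [hIcc, htop, div_one] at h1
  -- now the target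
  rw [Finset.sum_range_succ' (fun i => (-1:ℚ)^i * G i / ((m:ℚ) + 2 - (i:ℚ))) m]
  have hlow : ∑ i ∈ Finset.range m, (-1:ℚ)^(i+1) * G (i+1) / ((m:ℚ) + 2 - ((i+1:ℕ):ℚ))
      = - ∑ i ∈ Finset.range m, (-1:ℚ)^(i+1+1) * G (i+1) / ((m:ℚ)+1+1-((i:ℚ)+1)) := by
    rw [← Finset.sum_neg_distrib]
    refine Finset.sum_congr rfl fun i _ => ?_
    push_cast
    ring
  rw [hlow]
  have hsgn : (-1:ℚ)^(m+1+1) = (-1:ℚ)^m := by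
    rw [pow_succ, pow_succ]
    ring
  rw [hsgn] at h1
  rw [hG0]
  have h2 : ((m:ℚ)+1+1) = (m:ℚ)+2 := by ring
  conv at h1 => rhs; rw [h2]
  have h4 : ((-1:ℚ))^(0:ℕ) * 1 / ((m:ℚ)+2-((0:ℕ):ℚ)) = 1/((m:ℚ)+2) := by norm_num
  rw [h4]
  linarith [h1]
end Gsum

/-- If `c : ℕ → ℚ[q]` satisfies `c 0 = 1` and the recursion
`∑_{i=0}^{j} ((1)_{q,j+1-i}/(j+1-i)!)·(c_i/i!) = δ_{j,0}`, and `G` is the sequence of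
Gregory coefficients (`G_0 = 1`, `G_1 = 1/2`,
`∑_{i=1}^{j} (−1)^{i+1} G_i/(j+1−i) = 1/(j+1)` for `j ≥ 2`), then every `c_j` has
degree `j`, constant term the Bernoulli number `B_j`, and leading coefficient
`(−1)^j j! G_j`. -/
theorem cj_degree_constant_leading
    (c : ℕ → Polynomial ℚ)
    (hc0 : c 0 = 1)
    (hc : ∀ j : ℕ,
      ∑ i ∈ Finset.range (j + 1),
          (((j + 1 - i).factorial : ℚ))⁻¹ • pochOnePoly (j + 1 - i) *
            ((i.factorial : ℚ))⁻¹ • c i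
        = if j = 0 then 1 else 0)
    (G : ℕ → ℚ)
    (hG0 : G 0 = 1) (hG1 : G 1 = 1 / 2)
    (hG : ∀ j : ℕ, 2 ≤ j →
      ∑ i ∈ Finset.Icc 1 j, (-1 : ℚ) ^ (i + 1) * G i / ((j : ℚ) + 1 - i) = 1 / ((j : ℚ) + 1)) :
    ∀ j : ℕ,
      (c j).natDegree = j ∧
      (c j).coeff 0 = _root_.bernoulli j ∧
      (c j).leadingCoeff = (-1 : ℚ) ^ j * (j.factorial : ℚ) * G j := by
  have hGne : ∀ j, G j ≠ 0 := G_ne_zero G hG0 hG1 hG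
  have hGsum := Gsum_aux G hG0 hG1 hG
  intro j
  induction j using Nat.strong_induction_on with
  | _ j ih =>
    match j, ih with
    | 0, _ =>
      rw [hc0]
      refine ⟨by simp, by simp [_root_.bernoulli_zero], ?_⟩
      simp [hG0]
    | (m+1), ih =>
      have h := hc (m+1)
      rw [if_neg (by omega : ¬(m+1 = 0)), Finset.sum_range_succ] at h
      have hsub1 : m + 1 + 1 - (m + 1) = 1 := by omega
      rw [hsub1, poch_one] at h
      simp only [Nat.factorial_one, Nat.cast_one, inv_one, one_smul, one_mul] at h
      rw [show m + 1 + 1 = m + 2 from rfl] at h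
      set S : ℚ[X] := ∑ i ∈ Finset.range (m+1),
        (((m + 2 - i).factorial : ℚ))⁻¹ • pochOnePoly (m + 2 - i) *
          ((i.factorial : ℚ))⁻¹ • c i with hSdef
      have hfne : ((m+1).factorial : ℚ) ≠ 0 := Nat.cast_ne_zero.mpr (Nat.factorial_ne_zero _)
      have hcS : c (m+1) = (-(((m+1).factorial : ℚ))) • S := by
        have h2 : ((m+1).factorial:ℚ)⁻¹ • c (m+1) = -S := eq_neg_of_add_eq_zero_right h
        calc c (m+1) = ((m+1).factorial:ℚ) • (((m+1).factorial:ℚ)⁻¹ • c (m+1)) := by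
              rw [smul_smul, mul_inv_cancel₀ hfne, one_smul]
          _ = ((m+1).factorial:ℚ) • (-S) := by rw [h2]
          _ = (-(((m+1).factorial : ℚ))) • S := by rw [smul_neg, ← neg_smul]
      -- degree bound
      have hdegS : S.natDegree ≤ m+1 := by
        rw [hSdef]
        apply Polynomial.natDegree_sum_le_of_forall_le
        intro i hi
        have hi' : i ≤ m := by
          have := Finset.mem_range.mp hi
          omega
        have e1 : m + 2 - i = (m + 1 - i) + 1 := by omega
        have hp : ((((m+2-i).factorial:ℚ))⁻¹ • pochOnePoly (m+2-i)).natDegree ≤ m+1-i := by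
          refine le_trans (Polynomial.natDegree_smul_le _ _) ?_
          rw [e1, poch_natDegree]
        have hq : (((i.factorial:ℚ))⁻¹ • c i).natDegree ≤ i := by
          refine le_trans (Polynomial.natDegree_smul_le _ _) ?_
          rw [(ih i (by omega)).1]
        refine le_trans (Polynomial.natDegree_mul_le) (le_trans (add_le_add hp hq) (by omega))
      -- top coefficient of S
      have hcoeffS : S.coeff (m+1)
          = ∑ i ∈ Finset.range (m+1), (-1:ℚ)^i * G i / ((m:ℚ) + 2 - (i:ℚ)) := by
        rw [hSdef, Polynomial.finset_sum_coeff]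
        refine Finset.sum_congr rfl fun i hi => ?_
        have hi' : i ≤ m := by
          have := Finset.mem_range.mp hi
          omega
        have e1 : m + 2 - i = (m + 1 - i) + 1 := by omega
        rw [smul_mul_assoc, mul_smul_comm, smul_smul, Polynomial.coeff_smul]
        have hdp : (pochOnePoly (m+2-i)).natDegree = m+1-i := by rw [e1, poch_natDegree]
        have hdq : (c i).natDegree = i := (ih i (by omega)).1
        have hidx : m+1 = (pochOnePoly (m+2-i)).natDegree + (c i).natDegree := by
          rw [hdp, hdq]
          omega
        rw [hidx, Polynomial.coeff_mul_degree_add_degree]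
        have hlp : (pochOnePoly (m+2-i)).leadingCoeff = ((m+1-i).factorial : ℚ) := by
          rw [e1, poch_leadingCoeff]
        rw [hlp, (ih i (by omega)).2.2, smul_eq_mul]
        have hfs : ((m+2-i).factorial : ℚ) = ((m:ℚ)+2-(i:ℚ)) * ((m+1-i).factorial:ℚ) := by
          rw [e1, Nat.factorial_succ]
          have hcast : (((m+1-i)+1 : ℕ):ℚ) = (m:ℚ)+2-(i:ℚ) := by
            push_cast [Nat.cast_sub (by omega : i ≤ m+1)]
            ring
          push_cast [Nat.cast_sub (by omega : i ≤ m+1)]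
          ring
        rw [hfs]
        have hne1 : ((m+1-i).factorial:ℚ) ≠ 0 := Nat.cast_ne_zero.mpr (Nat.factorial_ne_zero _)
        have hne2 : (i.factorial:ℚ) ≠ 0 := Nat.cast_ne_zero.mpr (Nat.factorial_ne_zero _)
        have hne3 : (m:ℚ)+2-(i:ℚ) ≠ 0 := by
          have : (i:ℚ) ≤ (m:ℚ) := by exact_mod_cast hi'
          intro hcon
          nlinarith
        field_simp
      have hcoeffTop : (c (m+1)).coeff (m+1)
          = (-1:ℚ)^(m+1) * ((m+1).factorial:ℚ) * G (m+1) := by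
        rw [hcS, Polynomial.coeff_smul, hcoeffS, hGsum m, smul_eq_mul, pow_succ]
        ring
      -- constant coefficient
      have hcoeff0S : S.coeff 0 = ∑ i ∈ Finset.range (m+1),
          (((m+2).factorial:ℚ))⁻¹ * (((m+2).choose i : ℕ):ℚ) * _root_.bernoulli i := by
        rw [hSdef, Polynomial.finset_sum_coeff]
        refine Finset.sum_congr rfl fun i hi => ?_
        have hi' : i ≤ m := by
          have := Finset.mem_range.mp hi
          omega
        rw [smul_mul_assoc, mul_smul_comm, smul_smul, Polynomial.coeff_smul,
          Polynomial.mul_coeff_zero, poch_coeff_zero, one_mul, (ih i (by omega)).2.1,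
          smul_eq_mul]
        have hch := Nat.choose_mul_factorial_mul_factorial (show i ≤ m+2 by omega)
        have hcc : (((m+2).choose i:ℕ):ℚ) * (i.factorial:ℚ) * ((m+2-i).factorial:ℚ)
            = ((m+2).factorial:ℚ) := by exact_mod_cast congrArg (Nat.cast (R:=ℚ)) hch
        have hne1 : ((m+2-i).factorial:ℚ) ≠ 0 := Nat.cast_ne_zero.mpr (Nat.factorial_ne_zero _)
        have hne2 : (i.factorial:ℚ) ≠ 0 := Nat.cast_ne_zero.mpr (Nat.factorial_ne_zero _)
        have hne4 : ((m+2).factorial:ℚ) ≠ 0 := Nat.cast_ne_zero.mpr (Nat.factorial_ne_zero _)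
        field_simp
        linear_combination (-(_root_.bernoulli i)) * hcc
      have hB := _root_.sum_bernoulli (m+2)
      rw [if_neg (by omega : ¬(m+2 = 1)), Finset.sum_range_succ] at hB
      have hch2 : (((m+2).choose (m+1) : ℕ):ℚ) = (m:ℚ)+2 := by
        rw [Nat.choose_succ_self_right]
        push_cast
        ring
      rw [hch2] at hB
      have hcoeff0 : (c (m+1)).coeff 0 = _root_.bernoulli (m+1) := by
        rw [hcS, Polynomial.coeff_smul, hcoeff0S, smul_eq_mul]
        have hpull : ∑ i ∈ Finset.range (m+1),
            (((m+2).factorial:ℚ))⁻¹ * (((m+2).choose i : ℕ):ℚ) * _root_.bernoulli i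
            = (((m+2).factorial:ℚ))⁻¹ * ∑ i ∈ Finset.range (m+1),
              (((m+2).choose i : ℕ):ℚ) * _root_.bernoulli i := by
          rw [Finset.mul_sum]
          exact Finset.sum_congr rfl fun i _ => by ring
        rw [hpull]
        have hsum2 : ∑ i ∈ Finset.range (m+1), (((m+2).choose i : ℕ):ℚ) * _root_.bernoulli i
            = -(((m:ℚ)+2) * _root_.bernoulli (m+1)) := by linarith [hB]
        rw [hsum2]
        have hfs2 : ((m+2).factorial : ℚ) = ((m:ℚ)+2) * ((m+1).factorial:ℚ) := by
          rw [show m+2 = (m+1)+1 from rfl, Nat.factorial_succ]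
          push_cast
          ring
        rw [hfs2]
        have hm2 : ((m:ℚ)+2) ≠ 0 := by positivity
        field_simp
      have hne : (c (m+1)).coeff (m+1) ≠ 0 := by
        rw [hcoeffTop]
        exact mul_ne_zero (mul_ne_zero (pow_ne_zero _ (by norm_num)) hfne) (hGne (m+1))
      have hdeg : (c (m+1)).natDegree = m+1 := by
        apply Polynomial.natDegree_eq_of_le_of_coeff_ne_zero _ hne
        rw [hcS]
        exact le_trans (Polynomial.natDegree_smul_le _ _) hdegS
      exact ⟨hdeg, hcoeff0, by rw [Polynomial.leadingCoeff, hdeg, hcoeffTop]⟩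
end
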